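/- arXiv:math/0108063 — 7 statements merged into one kernel-verified Lean document; each statement's English description precedes it below -/
import Mathlib

section
/- Assume the data is generic. Then for every ε with 0 < ε < 1/9 there exists T > 0 such that every z ∈ ℂ with F(z) = 0 and |z| > T has the following property: there exist an edge pair (r,r') and an outward unit normal e of this edge such that ⟪z − γ_r, e⟫ ≥ 0 and |⟪z, γ_r − γ_{r'}⟫ − k_{r,r'}| ≤ ε. -/
open Complex ComplexConjugate

noncomputable section ZNESaux

/-- the real inner product on `ℂ` -/
def ip (z w : ℂ) : ℝ := (z * conj w).re

lemma ip_def' (z w : ℂ) : ip z w = z.re * w.re + z.im * w.im := by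
  simp [ip, Complex.mul_re]

lemma ip_comm (z w : ℂ) : ip z w = ip w z := by simp [ip_def']; ring

lemma ip_add_left (x y w : ℂ) : ip (x + y) w = ip x w + ip y w := by simp [ip_def']; ring

lemma ip_sub_left (x y w : ℂ) : ip (x - y) w = ip x w - ip y w := by simp [ip_def']; ring

lemma ip_sub_right (x y w : ℂ) : ip x (y - w) = ip x y - ip x w := by simp [ip_def']; ring

lemma ip_neg_left (x w : ℂ) : ip (-x) w = - ip x w := by simp [ip_def']; ring

lemma ip_neg_right (x w : ℂ) : ip x (-w) = - ip x w := by simp [ip_def']; ring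

lemma ip_smul_left (t : ℝ) (x w : ℂ) : ip (t • x) w = t * ip x w := by
  simp [ip_def', Complex.real_smul, Complex.mul_re, Complex.mul_im]; ring

lemma ip_smul_right (t : ℝ) (x w : ℂ) : ip x (t • w) = t * ip x w := by
  simp [ip_def', Complex.real_smul, Complex.mul_re, Complex.mul_im]; ring

lemma abs_ip_le (z w : ℂ) : |ip z w| ≤ ‖z‖ * ‖w‖ := by
  calc |ip z w| ≤ ‖z * conj w‖ := Complex.abs_re_le_norm _
  _ = ‖z‖ * ‖w‖ := by simp [map_mul]

lemma continuous_ip_left (w : ℂ) : Continuous fun z => ip z w := by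
  simp only [ip_def']
  exact (Complex.continuous_re.mul continuous_const).add
    (Complex.continuous_im.mul continuous_const)

lemma sq_abs_one (v : ℂ) (hv : ‖v‖ = 1) : v.re ^ 2 + v.im ^ 2 = 1 := by
  have : Complex.normSq v = 1 := by rw [← Complex.sq_norm, hv]; norm_num
  rw [Complex.normSq_apply] at this; nlinarith [this]

lemma ip_self' (v : ℂ) (hv : ‖v‖ = 1) : ip v v = 1 := by
  have := sq_abs_one v hv
  rw [ip_def']; nlinarith [this]

lemma ip_linear (w : ℂ) : IsLinearMap ℝ (fun z => ip z w) := by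
  constructor
  · intro x y; simp [ip_def']; ring
  · intro t x; simp [ip_def', Complex.real_smul, Complex.mul_re, Complex.mul_im]; ring

/-- decomposition in the orthonormal basis (u, I*u) -/
lemma decomp (u : ℂ) (hu : ‖u‖ = 1) (z : ℂ) :
    (ip z u) • u + (ip z (I * u)) • (I * u) = z := by
  have h := sq_abs_one u hu
  apply Complex.ext <;>
    simp [ip_def', Complex.real_smul, Complex.mul_re, Complex.mul_im]
  · linear_combination z.re * h
  · linear_combination z.im * h

/-- two unit vectors orthogonal to the same nonzero vector are equal or opposite -/
lemma parallel_of_perp (x y w : ℂ) (hx : ‖x‖ = 1) (hy : ‖y‖ = 1)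
    (hw : w ≠ 0) (h1 : ip x w = 0) (h2 : ip y w = 0) : x = y ∨ x = -y := by
  have hx' := sq_abs_one x hx
  have hy' := sq_abs_one y hy
  rw [ip_def'] at h1 h2
  have hpq : w.re ≠ 0 ∨ w.im ≠ 0 := by
    by_contra h
    push_neg at h
    exact hw (Complex.ext h.1 h.2)
  have hdet : x.re * y.im - x.im * y.re = 0 := by
    rcases hpq with hp | hq
    · have h3 : (x.re * y.im - x.im * y.re) * w.re = 0 := by
        linear_combination y.im * h1 - x.im * h2
      exact (mul_eq_zero.mp h3).resolve_right hp
    · have h3 : (x.re * y.im - x.im * y.re) * w.im = 0 := by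
        linear_combination x.re * h2 - y.re * h1
      exact (mul_eq_zero.mp h3).resolve_right hq
  have hac : x.re = (x.re * y.re + x.im * y.im) * y.re := by
    linear_combination (-x.re) * hy' + y.im * hdet
  have hbd : x.im = (x.re * y.re + x.im * y.im) * y.im := by
    linear_combination (-x.im) * hy' + (-y.re) * hdet
  have h5 : (1:ℝ) = (x.re * y.re + x.im * y.im) ^ 2 := by
    linear_combination (x.re + (x.re * y.re + x.im * y.im) * y.re) * hac +
      (x.im + (x.re * y.re + x.im * y.im) * y.im) * hbd +
      (x.re * y.re + x.im * y.im) ^ 2 * hy' - hx'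
  have h6 : (x.re * y.re + x.im * y.im - 1) * (x.re * y.re + x.im * y.im + 1) = 0 := by
    linear_combination -h5
  rcases mul_eq_zero.mp h6 with h | h
  · left
    have hs : x.re * y.re + x.im * y.im = 1 := by linarith
    apply Complex.ext
    · linear_combination hac + y.re * hs
    · linear_combination hbd + y.im * hs
  · right
    have hs : x.re * y.re + x.im * y.im = -1 := by linarith
    apply Complex.ext
    · simp only [Complex.neg_re]; linear_combination hac + y.re * hs
    · simp only [Complex.neg_im]; linear_combination hbd + y.im * hs

/-- Pythagoras for an orthonormal pair -/
lemma pyth (e f : ℂ) (he : ‖e‖ = 1) (hf : ‖f‖ = 1) (hef : ip e f = 0)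
    (z : ℂ) : (ip z e) ^ 2 + (ip z f) ^ 2 = ‖z‖ ^ 2 := by
  have he' := sq_abs_one e he
  have hf' := sq_abs_one f hf
  rw [ip_def'] at hef
  have hc : f.re = -((e.re * f.im - e.im * f.re) * e.im) := by
    linear_combination e.re * hef + (-f.re) * he'
  have hd : f.im = (e.re * f.im - e.im * f.re) * e.re := by
    linear_combination e.im * hef + (-f.im) * he'
  have hs2 : (e.re * f.im - e.im * f.re) ^ 2 = 1 := by
    linear_combination ((e.re * f.im - e.im * f.re) * e.im - f.re) * hc -
      (f.im + (e.re * f.im - e.im * f.re) * e.re) * hd -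
      (e.re * f.im - e.im * f.re) ^ 2 * he' + hf'
  have habs : ‖z‖ ^ 2 = z.re ^ 2 + z.im ^ 2 := by
    rw [Complex.sq_norm, Complex.normSq_apply]; ring
  rw [ip_def', ip_def', habs]
  linear_combination (z.im * e.re - z.re * e.im) ^ 2 * hs2 + (z.re ^ 2 + z.im ^ 2) * he' +
    (z.re * (z.re * f.re + z.im * f.im +
      (e.re * f.im - e.im * f.re) * (z.im * e.re - z.re * e.im))) * hc +
    (z.im * (z.re * f.re + z.im * f.im +
      (e.re * f.im - e.im * f.re) * (z.im * e.re - z.re * e.im))) * hd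

/-- convex hull lies in a halfspace -/
lemma hull_halfspace (s : Set ℂ) (v : ℂ) (B : ℝ) (h : ∀ x ∈ s, ip x v ≤ B) :
    ∀ w ∈ convexHull ℝ s, ip w v ≤ B := by
  intro w hw
  have : convexHull ℝ s ⊆ {w | ip w v ≤ B} :=
    convexHull_min h (convex_halfSpace_le (ip_linear v) B)
  exact this hw

lemma hull_hyperplane (s : Set ℂ) (v : ℂ) (B : ℝ) (h : ∀ x ∈ s, ip x v = B) :
    ∀ w ∈ convexHull ℝ s, ip w v = B := by
  intro w hw
  have : convexHull ℝ s ⊆ {w | ip w v = B} :=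
    convexHull_min h (convex_hyperplane (ip_linear v) B)
  exact this hw

/-- a point of a closed set maximizing a linear functional of unit direction is in the frontier -/
lemma mem_frontier_of_max (K : Set ℂ) (hcl : IsClosed K) (v : ℂ) (hv : ‖v‖ = 1)
    (w : ℂ) (hw : w ∈ K) (hmax : ∀ w' ∈ K, ip w' v ≤ ip w v) : w ∈ frontier K := by
  rw [hcl.frontier_eq]
  refine ⟨hw, ?_⟩
  intro hint
  rw [mem_interior_iff_mem_nhds, Metric.mem_nhds_iff] at hint
  obtain ⟨ε, hε, hball⟩ := hint
  have hmem : w + (ε / 2) • v ∈ K := by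
    apply hball
    simp only [Metric.mem_ball, dist_eq_norm]
    have : w + (ε / 2) • v - w = (ε / 2) • v := by ring_nf
    rw [this]
    rw [norm_smul]
    simp only [Real.norm_eq_abs, hv]
    rw [abs_of_pos (by linarith)]
    linarith
  have := hmax _ hmem
  have hlin := (ip_linear v).map_add (w) ((ε / 2) • v)
  have hsm := (ip_linear v).map_smul (ε / 2) v
  rw [hlin, hsm, ip_self' v hv, smul_eq_mul, mul_one] at this
  linarith

/-- among three distinct points with equal ip against a unit vector, one is in the open segment
of the other two -/
lemma exists_middle (u : ℂ) (hu : ‖u‖ = 1) (a b c : ℂ)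
    (hab : a ≠ b) (hac : a ≠ c) (hbc : b ≠ c)
    (h1 : ip a u = ip b u) (h2 : ip b u = ip c u) :
    a ∈ openSegment ℝ b c ∨ b ∈ openSegment ℝ a c ∨ c ∈ openSegment ℝ a b := by
  have key : ∀ x y z : ℂ, ip x u = ip y u → ip x u = ip z u →
      ip y (I * u) < ip x (I * u) → ip x (I * u) < ip z (I * u) →
      x ∈ openSegment ℝ y z := by
    intro x y z e1 e2 o1 o2
    set qx := ip x (I * u) with hqx
    set qy := ip y (I * u) with hqy
    set qz := ip z (I * u) with hqz
    have hzy : 0 < qz - qy := by linarith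
    refine ⟨(qz - qx) / (qz - qy), (qx - qy) / (qz - qy),
      div_pos (by linarith) hzy, div_pos (by linarith) hzy, by field_simp; ring, ?_⟩
    conv_lhs => rw [← decomp u hu y, ← decomp u hu z]
    conv_rhs => rw [← decomp u hu x]
    rw [← e1, ← e2, ← hqx, ← hqy, ← hqz]
    match_scalars
    · field_simp; ring
    · field_simp; ring
  have hdist : ∀ x y : ℂ, x ≠ y → ip x u = ip y u → ip x (I * u) ≠ ip y (I * u) := by
    intro x y hxy hp hq
    apply hxy
    rw [← decomp u hu x, ← decomp u hu y, hp, hq]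
  have haB := h1
  have haC : ip a u = ip c u := h1.trans h2
  have hbC := h2
  have qab := hdist a b hab haB
  have qac := hdist a c hac haC
  have qbc := hdist b c hbc hbC
  rcases lt_trichotomy (ip a (I * u)) (ip b (I * u)) with o1 | o1 | o1
  · rcases lt_trichotomy (ip b (I * u)) (ip c (I * u)) with o2 | o2 | o2
    · exact Or.inr (Or.inl (key b a c haB.symm hbC o1 o2))
    · exact absurd o2 qbc
    · rcases lt_trichotomy (ip a (I * u)) (ip c (I * u)) with o3 | o3 | o3
      · exact Or.inr (Or.inr (key c a b haC.symm (haC.symm.trans haB) o3 o2))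
      · exact absurd o3 qac
      · exact Or.inl ((openSegment_symm ℝ c b) ▸ key a c b haC haB o3 o1)
  · exact absurd o1 qab
  · rcases lt_trichotomy (ip a (I * u)) (ip c (I * u)) with o2 | o2 | o2
    · exact Or.inl (key a b c haB haC o1 o2)
    · exact absurd o2 qac
    · rcases lt_trichotomy (ip b (I * u)) (ip c (I * u)) with o3 | o3 | o3
      · exact Or.inr (Or.inr ((openSegment_symm ℝ b a) ▸ key c b a hbC.symm haC.symm o3 o2))
      · exact absurd o3 qbc
      · exact Or.inr (Or.inl ((openSegment_symm ℝ c a) ▸ key b c a hbC haB.symm o3 o1))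

/-- a continuous positive function on the unit sphere has a positive minimum -/
lemma pos_min_on_sphere (f : ℂ → ℝ) (hf : Continuous f)
    (hpos : ∀ u ∈ Metric.sphere (0:ℂ) 1, 0 < f u) :
    ∃ c > 0, ∀ u ∈ Metric.sphere (0:ℂ) 1, c ≤ f u := by
  obtain ⟨x, hx, hmin⟩ := (isCompact_sphere (0:ℂ) 1).exists_isMinOn
    ⟨1, by simp⟩ hf.continuousOn
  exact ⟨f x, hpos x hx, fun u hu => isMinOn_iff.mp hmin u hu⟩

/-- uniform positive lower bound for finitely many continuous positive functions on the sphere -/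
lemma combo {ι : Type} [Fintype ι] (φ : ι → ℂ → ℝ) (hc : ∀ i, Continuous (φ i))
    (hp : ∀ i, ∀ u ∈ Metric.sphere (0:ℂ) 1, 0 < φ i u) :
    ∃ c > 0, ∀ u ∈ Metric.sphere (0:ℂ) 1, ∀ i, c ≤ φ i u := by
  have h := fun i => pos_min_on_sphere (φ i) (hc i) (hp i)
  choose cs hpos hle using h
  by_cases hι : Nonempty ι
  · obtain ⟨i0, -, hmin⟩ := Finset.exists_min_image Finset.univ cs
      ⟨Classical.arbitrary ι, Finset.mem_univ _⟩
    exact ⟨cs i0, hpos i0, fun u hu i =>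
      le_trans (hmin i (Finset.mem_univ i)) (hle i u hu)⟩
  · exact ⟨1, one_pos, fun u hu i => absurd ⟨i⟩ hι⟩

end ZNESaux

set_option maxHeartbeats 1000000 in
/-- In the generic case, every zero of `F` of sufficiently large modulus lies in
the `ε`-strip around the line `⟪z, γ_r − γ_{r'}⟫ = k_{r,r'}` perpendicular to some edge
`(γ_{r'}, γ_r)` of the convex hull `K`, on the outward side of that edge. -/
theorem zeros_near_edge_strips
    {R : ℕ} (hR : 2 ≤ R) (γ δ : Fin R → ℂ)
    (hγ : Function.Injective γ) (hδ : ∀ r, δ r ≠ 0)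
    (F : ℂ → ℂ)
    (hF : ∀ z, F z = ∑ r, δ r * Complex.exp (z * conj (γ r)))
    (K : Set ℂ) (hK : K = convexHull ℝ (Set.range γ))
    (hgen : ∀ r, γ r ∈ frontier K → γ r ∈ Set.extremePoints ℝ K) :
    ∀ ε : ℝ, 0 < ε → ε < 1 / 9 →
      ∃ T : ℝ, 0 < T ∧ ∀ z : ℂ, F z = 0 → T < ‖z‖ →
        ∃ r r' : Fin R, r ≠ r' ∧
          γ r ∈ Set.extremePoints ℝ K ∧ γ r' ∈ Set.extremePoints ℝ K ∧
          segment ℝ (γ r') (γ r) ⊆ frontier K ∧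
          ∃ e : ℂ, ‖e‖ = 1 ∧
            (e * conj (γ r - γ r')).re = 0 ∧
            (∀ w ∈ K, ((w - γ r) * conj e).re ≤ 0) ∧
            0 ≤ ((z - γ r) * conj e).re ∧
            |(z * conj (γ r - γ r')).re -
              Real.log (‖δ r'‖ / ‖δ r‖)| ≤ ε := by
  intro ε hε _
  classical
  have hR0 : 0 < R := by omega
  have neU : (Finset.univ : Finset (Fin R)).Nonempty := ⟨⟨0, hR0⟩, Finset.mem_univ _⟩
  set n : ℂ → ℝ := fun v => Finset.univ.sup' neU (fun s => ip v (γ s)) with hn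
  have hcont_n : Continuous n :=
    Continuous.finset_sup'_apply neU fun i _ => continuous_ip_left (γ i)
  have hle_n : ∀ v s, ip v (γ s) ≤ n v := by
    intro v s
    simp only [hn]
    exact Finset.le_sup' (fun s' => ip v (γ s')) (Finset.mem_univ s)
  have hKsub : ∀ s, γ s ∈ K := fun s => hK ▸ subset_convexHull ℝ _ ⟨s, rfl⟩
  have hclosed : IsClosed K := by
    rw [hK]; exact (Set.finite_range γ).isClosed_convexHull (𝕜 := ℝ)
  have hKle : ∀ v : ℂ, ∀ w ∈ K, ip w v ≤ n v := by
    intro v w hw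
    rw [hK] at hw
    refine hull_halfspace _ v (n v) ?_ w hw
    rintro x ⟨s, rfl⟩
    rw [ip_comm]; exact hle_n v s
  have hfr : ∀ v : ℂ, ‖v‖ = 1 → ∀ w ∈ K, ip w v = n v → w ∈ frontier K := by
    intro v hv w hw heq
    exact mem_frontier_of_max K hclosed v hv w hw
      (fun w' hw' => le_trans (hKle v w' hw') heq.ge)
  have hext : ∀ v : ℂ, ‖v‖ = 1 → ∀ s, ip v (γ s) = n v →
      γ s ∈ Set.extremePoints ℝ K := by
    intro v hv s hs
    exact hgen s (hfr v hv _ (hKsub s) (by rw [ip_comm]; exact hs))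
  -- choose common outward normals for pairs which admit one
  have Hep : ∀ p : Fin R × Fin R, ∃ e : ℂ,
      (∃ v, ‖v‖ = 1 ∧ ip v (γ p.1) = n v ∧ ip v (γ p.2) = n v) →
      (‖e‖ = 1 ∧ ip e (γ p.1) = n e ∧ ip e (γ p.2) = n e) := by
    intro p
    by_cases h : ∃ v, ‖v‖ = 1 ∧ ip v (γ p.1) = n v ∧ ip v (γ p.2) = n v
    · obtain ⟨v, hv⟩ := h; exact ⟨v, fun _ => hv⟩
    · exact ⟨0, fun hh => absurd hh h⟩
  choose ep hep using Hep
  have hsphere_abs : ∀ u ∈ Metric.sphere (0:ℂ) 1, ‖u‖ = 1 := by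
    intro u hu
    rw [mem_sphere_iff_norm, sub_zero] at hu
    simpa using hu
  -- constant 1 : at most two near-maximal directions
  obtain ⟨c1, hc1pos, hc1⟩ := combo (ι := Fin R × Fin R × Fin R)
    (fun p v => if p.1 ≠ p.2.1 ∧ p.1 ≠ p.2.2 ∧ p.2.1 ≠ p.2.2 then
      max (n v - ip v (γ p.1)) (max (n v - ip v (γ p.2.1)) (n v - ip v (γ p.2.2))) else 1)
    (by
      intro p
      by_cases h : p.1 ≠ p.2.1 ∧ p.1 ≠ p.2.2 ∧ p.2.1 ≠ p.2.2
      · simp only [if_pos h]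
        exact (hcont_n.sub (continuous_ip_left _)).max
          (((hcont_n.sub (continuous_ip_left _))).max (hcont_n.sub (continuous_ip_left _)))
      · simp only [if_neg h]; exact continuous_const)
    (by
      intro p u hu
      by_cases h : p.1 ≠ p.2.1 ∧ p.1 ≠ p.2.2 ∧ p.2.1 ≠ p.2.2
      · simp only [if_pos h]
        by_contra hle
        push_neg at hle
        have g1 : n u - ip u (γ p.1) ≤ 0 := le_trans (le_max_left _ _) hle
        have g2 : n u - ip u (γ p.2.1) ≤ 0 :=
          le_trans (le_trans (le_max_left _ _) (le_max_right _ _)) hle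
        have g3 : n u - ip u (γ p.2.2) ≤ 0 :=
          le_trans (le_trans (le_max_right _ _) (le_max_right _ _)) hle
        have e1 : ip u (γ p.1) = n u := le_antisymm (hle_n u _) (by linarith)
        have e2 : ip u (γ p.2.1) = n u := le_antisymm (hle_n u _) (by linarith)
        have e3 : ip u (γ p.2.2) = n u := le_antisymm (hle_n u _) (by linarith)
        have hu1 := hsphere_abs u hu
        have hx1 : γ p.1 ∈ Set.extremePoints ℝ K := hext u hu1 _ e1
        have hx2 : γ p.2.1 ∈ Set.extremePoints ℝ K := hext u hu1 _ e2
        have hx3 : γ p.2.2 ∈ Set.extremePoints ℝ K := hext u hu1 _ e3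
        have hmid := exists_middle u hu1 (γ p.1) (γ p.2.1) (γ p.2.2)
          (fun hh => h.1 (hγ hh)) (fun hh => h.2.1 (hγ hh)) (fun hh => h.2.2 (hγ hh))
          (by rw [ip_comm, ip_comm (γ p.2.1) u, e1, e2])
          (by rw [ip_comm, ip_comm (γ p.2.2) u, e2, e3])
        rcases hmid with hm | hm | hm
        · exact h.1 (hγ ((mem_extremePoints.mp hx1).2 (γ p.2.1) (hKsub _)
            (γ p.2.2) (hKsub _) hm).1.symm)
        · exact h.1 (hγ ((mem_extremePoints.mp hx2).2 (γ p.1) (hKsub _)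
            (γ p.2.2) (hKsub _) hm).1)
        · exact h.2.1 (hγ ((mem_extremePoints.mp hx3).2 (γ p.1) (hKsub _)
            (γ p.2.1) (hKsub _) hm).1)
      · simp only [if_neg h]; exact one_pos)
  -- constant 2 : non-extreme points are uniformly interior
  obtain ⟨c2, hc2pos, hc2⟩ := combo (ι := Fin R)
    (fun s v => if γ s ∉ Set.extremePoints ℝ K then n v - ip v (γ s) else 1)
    (by
      intro s
      by_cases h : γ s ∉ Set.extremePoints ℝ K
      · simp only [if_pos h]; exact hcont_n.sub (continuous_ip_left _)
      · simp only [if_neg h]; exact continuous_const)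
    (by
      intro s u hu
      by_cases h : γ s ∉ Set.extremePoints ℝ K
      · simp only [if_pos h]
        rcases lt_or_eq_of_le (hle_n u s) with hlt | heq
        · linarith
        · exact absurd (hext u (hsphere_abs u hu) s heq) h
      · simp only [if_neg h]; exact one_pos)
  -- constant 3 : pairs with no common normal are never jointly near-maximal
  obtain ⟨c3, hc3pos, hc3⟩ := combo (ι := Fin R × Fin R)
    (fun p v => if p.1 ≠ p.2 ∧
        ¬(∃ v', ‖v'‖ = 1 ∧ ip v' (γ p.1) = n v' ∧ ip v' (γ p.2) = n v') then
      max (n v - ip v (γ p.1)) (n v - ip v (γ p.2)) else 1)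
    (by
      intro p
      by_cases h : p.1 ≠ p.2 ∧
          ¬(∃ v', ‖v'‖ = 1 ∧ ip v' (γ p.1) = n v' ∧ ip v' (γ p.2) = n v')
      · simp only [if_pos h]
        exact (hcont_n.sub (continuous_ip_left _)).max (hcont_n.sub (continuous_ip_left _))
      · simp only [if_neg h]; exact continuous_const)
    (by
      intro p u hu
      by_cases h : p.1 ≠ p.2 ∧
          ¬(∃ v', ‖v'‖ = 1 ∧ ip v' (γ p.1) = n v' ∧ ip v' (γ p.2) = n v')
      · simp only [if_pos h]
        by_contra hle
        push_neg at hle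
        have g1 : n u - ip u (γ p.1) ≤ 0 := le_trans (le_max_left _ _) hle
        have g2 : n u - ip u (γ p.2) ≤ 0 := le_trans (le_max_right _ _) hle
        exact h.2 ⟨u, hsphere_abs u hu,
          le_antisymm (hle_n u _) (by linarith), le_antisymm (hle_n u _) (by linarith)⟩
      · simp only [if_neg h]; exact one_pos)
  -- constant 4 : near a non-degenerate edge normal, the direction is on the outer side
  obtain ⟨c4, hc4pos, hc4⟩ := combo (ι := Fin R × Fin R)
    (fun p v => if p.1 ≠ p.2 ∧
        (∃ v', ‖v'‖ = 1 ∧ ip v' (γ p.1) = n v' ∧ ip v' (γ p.2) = n v') ∧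
        (∃ s, ip (γ s - γ p.1) (ep p) ≠ 0) then
      max (max (n v - ip v (γ p.1)) (n v - ip v (γ p.2))) (ip v (ep p)) else 1)
    (by
      intro p
      by_cases h : p.1 ≠ p.2 ∧
          (∃ v', ‖v'‖ = 1 ∧ ip v' (γ p.1) = n v' ∧ ip v' (γ p.2) = n v') ∧
          (∃ s, ip (γ s - γ p.1) (ep p) ≠ 0)
      · simp only [if_pos h]
        exact ((hcont_n.sub (continuous_ip_left _)).max
          (hcont_n.sub (continuous_ip_left _))).max (continuous_ip_left _)
      · simp only [if_neg h]; exact continuous_const)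
    (by
      intro p u hu
      by_cases h : p.1 ≠ p.2 ∧
          (∃ v', ‖v'‖ = 1 ∧ ip v' (γ p.1) = n v' ∧ ip v' (γ p.2) = n v') ∧
          (∃ s, ip (γ s - γ p.1) (ep p) ≠ 0)
      · simp only [if_pos h]
        obtain ⟨hne, hexv, s0, hs0⟩ := h
        obtain ⟨hepu, hepa, hepb⟩ := hep p hexv
        by_contra hle
        push_neg at hle
        have g1 : n u - ip u (γ p.1) ≤ 0 :=
          le_trans (le_trans (le_max_left _ _) (le_max_left _ _)) hle
        have g2 : n u - ip u (γ p.2) ≤ 0 :=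
          le_trans (le_trans (le_max_right _ _) (le_max_left _ _)) hle
        have hue : ip u (ep p) ≤ 0 := le_trans (le_max_right _ _) hle
        have e1 : ip u (γ p.1) = n u := le_antisymm (hle_n u _) (by linarith)
        have e2 : ip u (γ p.2) = n u := le_antisymm (hle_n u _) (by linarith)
        have hu1 := hsphere_abs u hu
        have hwv : γ p.1 - γ p.2 ≠ 0 := sub_ne_zero.mpr (fun hh => hne (hγ hh))
        have hper1 : ip u (γ p.1 - γ p.2) = 0 := by rw [ip_sub_right, e1, e2]; ring
        have hper2 : ip (ep p) (γ p.1 - γ p.2) = 0 := by rw [ip_sub_right, hepa, hepb]; ring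
        rcases parallel_of_perp u (ep p) (γ p.1 - γ p.2) hu1 hepu hwv hper1 hper2 with
          heq | heq
        · rw [heq, ip_self' _ hepu] at hue; linarith
        · -- u = - ep p : contradiction with existence of a point off the edge line
          have hips0 : ip u (γ s0) ≤ ip u (γ p.1) := by rw [e1]; exact hle_n u s0
          rw [heq, ip_neg_left, ip_neg_left] at hips0
          have h1' : ip (ep p) (γ s0) ≤ ip (ep p) (γ p.1) :=
            le_of_le_of_eq (hle_n (ep p) s0) hepa.symm
          apply hs0
          rw [ip_sub_left, ip_comm (γ s0), ip_comm (γ p.1)]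
          linarith
      · simp only [if_neg h]; exact one_pos)
  -- constant 5 : half the minimal edge length
  obtain ⟨c5, hc5pos, hc5⟩ := combo (ι := Fin R × Fin R)
    (fun p _ => if p.1 ≠ p.2 then ‖γ p.1 - γ p.2‖ / 2 else 1)
    (by
      intro p
      exact continuous_const)
    (by
      intro p u _
      by_cases h : p.1 ≠ p.2
      · simp only [if_pos h]
        have : γ p.1 - γ p.2 ≠ 0 := sub_ne_zero.mpr (fun hh => h (hγ hh))
        have := norm_pos_iff.mpr this
        linarith
      · simp only [if_neg h]; exact one_pos)
  set c : ℝ := min c1 (min c2 (min c3 (min c4 c5))) with hcdef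
  have hcpos : 0 < c := by
    simp only [hcdef, lt_min_iff]
    exact ⟨hc1pos, hc2pos, hc3pos, hc4pos, hc5pos⟩
  have hcle1 : c ≤ c1 := min_le_left _ _
  have hcle2 : c ≤ c2 := le_trans (min_le_right _ _) (min_le_left _ _)
  have hcle3 : c ≤ c3 := le_trans (min_le_right _ _) (le_trans (min_le_right _ _) (min_le_left _ _))
  have hcle4 : c ≤ c4 := le_trans (min_le_right _ _) (le_trans (min_le_right _ _)
    (le_trans (min_le_right _ _) (min_le_left _ _)))
  have hcle5 : c ≤ c5 := le_trans (min_le_right _ _) (le_trans (min_le_right _ _)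
    (le_trans (min_le_right _ _) (min_le_right _ _)))
  -- constants from the coefficients
  set d : ℝ := Finset.univ.inf' neU (fun s => ‖δ s‖) with hddef
  have hdpos : 0 < d := by
    rw [hddef, Finset.lt_inf'_iff]
    exact fun s _ => norm_pos_iff.mpr (hδ s)
  set D : ℝ := ∑ s, ‖δ s‖ with hDdef
  have hdD : ∀ s, ‖δ s‖ ≤ D := by
    intro s
    exact Finset.single_le_sum (f := fun s => ‖δ s‖)
      (fun i _ => norm_nonneg _) (Finset.mem_univ s)
  have hdle : ∀ s, d ≤ ‖δ s‖ := fun s => Finset.inf'_le _ (Finset.mem_univ s)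
  have hDpos : 0 < D := lt_of_lt_of_le hdpos (le_trans (hdle ⟨0, hR0⟩) (hdD ⟨0, hR0⟩))
  set Q : ℝ := D / d with hQdef
  have hQpos : 0 < Q := div_pos hDpos hdpos
  set μ : ℝ := 1 - Real.exp (-ε) with hμdef
  have hμpos : 0 < μ := by
    have : Real.exp (-ε) < 1 := Real.exp_lt_one_iff.mpr (by linarith)
    simp only [hμdef]; linarith
  have hμle : μ ≤ 1 := by
    have := Real.exp_pos (-ε)
    simp only [hμdef]; linarith
  set Γ : ℝ := Finset.univ.sup' neU (fun s => ‖γ s‖) with hΓdef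
  have hΓle : ∀ s, ‖γ s‖ ≤ Γ := by
    intro s
    simp only [hΓdef]
    exact Finset.le_sup' (fun s' => ‖γ s'‖) (Finset.mem_univ s)
  have hΓ0 : 0 ≤ Γ := le_trans (norm_nonneg _) (hΓle ⟨0, hR0⟩)
  set T : ℝ := max (2 * Γ + 1) (Real.log (Q / μ) / c + 1) with hTdef
  have hTpos : 0 < T := lt_of_lt_of_le (by linarith) (le_max_left _ _)
  have hkey : ∀ t : ℝ, T < t → Q * Real.exp (-(t * c)) < μ := by
    intro t ht
    have h1 : Real.log (Q / μ) / c + 1 ≤ T := le_max_right _ _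
    have h2 : Real.log (Q / μ) < t * c := by
      have hc' : Real.log (Q / μ) ≤ (T - 1) * c := by
        rw [← div_le_iff₀ hcpos] at *
        linarith
      nlinarith [hcpos]
    calc Q * Real.exp (-(t * c)) < Q * Real.exp (-(Real.log (Q / μ))) := by
          apply mul_lt_mul_of_pos_left _ hQpos
          exact Real.exp_lt_exp.mpr (by linarith)
    _ = μ := by
          rw [Real.exp_neg, Real.exp_log (div_pos hQpos hμpos)]
          field_simp
  refine ⟨T, hTpos, ?_⟩
  intro z hzero hTz
  set t : ℝ := ‖z‖ with htdef
  have htpos : 0 < t := lt_trans hTpos hTz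
  set u : ℂ := (t⁻¹ : ℝ) • z with hudef
  have hu1 : ‖u‖ = 1 := by
    rw [hudef]
    rw [show ‖(t⁻¹ : ℝ) • z‖ = ‖(t⁻¹ : ℝ) • z‖ from rfl, norm_smul]
    simp only [Real.norm_eq_abs, ← htdef]
    rw [abs_of_pos (by positivity)]
    field_simp
  have husphere : u ∈ Metric.sphere (0:ℂ) 1 := by
    rw [mem_sphere_iff_norm, sub_zero, hu1]
  have hzu : ∀ w, ip z w = t * ip u w := by
    intro w
    have hz : z = t • u := by
      rw [hudef, smul_smul, mul_inv_cancel₀ (ne_of_gt htpos), one_smul]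
    conv_lhs => rw [hz]
    exact ip_smul_left t u w
  set S : Finset (Fin R) := Finset.univ.filter (fun s => n u - ip u (γ s) < c) with hSdef
  obtain ⟨r0, -, hr0⟩ := Finset.exists_mem_eq_sup' neU (fun s => ip u (γ s))
  have hr0n : n u = ip u (γ r0) := hr0
  have hr0S : r0 ∈ S := by
    rw [hSdef, Finset.mem_filter]
    exact ⟨Finset.mem_univ _, by rw [hr0n]; simpa using hcpos⟩
  have hScard : S.card ≤ 2 := by
    by_contra hcard
    push_neg at hcard
    obtain ⟨a, b, c', haS, hbS, hcS, hab, hac, hbc⟩ := Finset.two_lt_card_iff.mp hcard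
    have h := hc1 u husphere (a, b, c')
    rw [if_pos ⟨hab, hac, hbc⟩] at h
    rw [hSdef, Finset.mem_filter] at haS hbS hcS
    have := haS.2; have := hbS.2; have := hcS.2
    rcases max_cases (n u - ip u (γ a)) (max (n u - ip u (γ b)) (n u - ip u (γ c'))) with
      ⟨hmx, -⟩ | ⟨hmx, -⟩ <;> rw [hmx] at h
    · linarith
    · rcases max_cases (n u - ip u (γ b)) (n u - ip u (γ c')) with ⟨hmx2, -⟩ | ⟨hmx2, -⟩ <;>
        rw [hmx2] at h <;> linarith
  have hnotinS : ∀ s, s ∉ S → c ≤ n u - ip u (γ s) := by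
    intro s hs
    rw [hSdef, Finset.mem_filter] at hs
    push_neg at hs
    exact hs (Finset.mem_univ s)
  have h0 : ∑ s, δ s * Complex.exp (z * conj (γ s)) = 0 := by rw [← hF z]; exact hzero
  have habs_term : ∀ s, ‖δ s * Complex.exp (z * conj (γ s))‖
      = ‖δ s‖ * Real.exp (ip z (γ s)) := by
    intro s
    rw [norm_mul, Complex.norm_exp]
    rfl
  have hbound : ∀ s, s ∉ S → ‖δ s * Complex.exp (z * conj (γ s))‖
      ≤ ‖δ s‖ * Real.exp (t * n u - t * c) := by
    intro s hs
    rw [habs_term s]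
    apply mul_le_mul_of_nonneg_left _ (norm_nonneg _)
    apply Real.exp_le_exp.mpr
    have h1 := hnotinS s hs
    rw [hzu (γ s)]
    nlinarith [htpos]
  by_cases htwo : ∃ r', r' ∈ S ∧ r' ≠ r0
  case neg =>
    -- single dominant term : impossible
    exfalso
    have hsingle : ∀ s, s ≠ r0 → s ∉ S := by
      intro s hs hmem
      exact htwo ⟨s, hmem, hs⟩
    have hsum : δ r0 * Complex.exp (z * conj (γ r0)) =
        -∑ s ∈ Finset.univ.erase r0, δ s * Complex.exp (z * conj (γ s)) := by
      have hsplit := Finset.add_sum_erase Finset.univ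
        (fun s => δ s * Complex.exp (z * conj (γ s))) (Finset.mem_univ r0)
      exact add_eq_zero_iff_eq_neg.mp (hsplit.trans h0)
    have hA : ‖δ r0‖ * Real.exp (t * n u) ≤ D * Real.exp (t * n u - t * c) := by
      calc ‖δ r0‖ * Real.exp (t * n u)
          = ‖δ r0 * Complex.exp (z * conj (γ r0))‖ := by
            rw [habs_term r0, hzu (γ r0), ← hr0n]
      _ = ‖∑ s ∈ Finset.univ.erase r0, δ s * Complex.exp (z * conj (γ s))‖ := by
            rw [hsum, norm_neg]
      _ ≤ ∑ s ∈ Finset.univ.erase r0, ‖δ s * Complex.exp (z * conj (γ s))‖ :=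
            norm_sum_le (Finset.univ.erase r0) (fun s => δ s * Complex.exp (z * conj (γ s)))
      _ ≤ ∑ s ∈ Finset.univ.erase r0, ‖δ s‖ * Real.exp (t * n u - t * c) := by
            apply Finset.sum_le_sum
            intro s hs
            exact hbound s (hsingle s (Finset.ne_of_mem_erase hs))
      _ ≤ ∑ s, ‖δ s‖ * Real.exp (t * n u - t * c) := by
            apply Finset.sum_le_sum_of_subset_of_nonneg (Finset.erase_subset _ _)
            intro i _ _
            positivity
      _ = D * Real.exp (t * n u - t * c) := by rw [hDdef, Finset.sum_mul]
    have hexpand : Real.exp (t * n u - t * c) = Real.exp (t * n u) * Real.exp (-(t * c)) := by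
      rw [← Real.exp_add]; ring_nf
    rw [hexpand] at hA
    have hd0 : d * Real.exp (t * n u) ≤ D * Real.exp (t * n u) * Real.exp (-(t * c)) := by
      have := le_trans (mul_le_mul_of_nonneg_right (hdle r0) (Real.exp_pos (t * n u)).le) hA
      linarith [this]
    have h1 : d ≤ D * Real.exp (-(t * c)) := by
      have hepos := Real.exp_pos (t * n u)
      nlinarith [hd0]
    have h2 : 1 ≤ Q * Real.exp (-(t * c)) := by
      rw [hQdef]
      rw [div_mul_eq_mul_div, le_div_iff₀ hdpos, one_mul]
      linarith
    have := hkey t hTz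
    linarith
  case pos =>
    obtain ⟨r', hr'S, hr'ne⟩ := htwo
    -- S = {r0, r'}
    have hSeq : ({r0, r'} : Finset (Fin R)) = S := by
      apply Finset.eq_of_subset_of_card_le
      · intro x hx
        rcases Finset.mem_insert.mp hx with h | h
        · rw [h]; exact hr0S
        · rw [Finset.mem_singleton.mp h]; exact hr'S
      · rw [Finset.card_insert_of_notMem (Finset.notMem_singleton.mpr (Ne.symm hr'ne)),
          Finset.card_singleton]
        exact hScard
    have houtS : ∀ s, s ≠ r0 → s ≠ r' → s ∉ S := by
      intro s h1 h2 hmem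
      rw [← hSeq] at hmem
      rcases Finset.mem_insert.mp hmem with h | h
      · exact h1 h
      · exact h2 (Finset.mem_singleton.mp h)
    have hgap0 : n u - ip u (γ r0) < c := by
      rw [hSdef, Finset.mem_filter] at hr0S; exact hr0S.2
    have hgap' : n u - ip u (γ r') < c := by
      rw [hSdef, Finset.mem_filter] at hr'S; exact hr'S.2
    -- split the sum
    set rest : Finset (Fin R) := (Finset.univ.erase r0).erase r' with hrest
    have hsplit : δ r0 * Complex.exp (z * conj (γ r0)) + δ r' * Complex.exp (z * conj (γ r'))
        = -∑ s ∈ rest, δ s * Complex.exp (z * conj (γ s)) := by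
      have e1 := Finset.add_sum_erase Finset.univ
        (fun s => δ s * Complex.exp (z * conj (γ s))) (Finset.mem_univ r0)
      have e2 := Finset.add_sum_erase (Finset.univ.erase r0)
        (fun s => δ s * Complex.exp (z * conj (γ s)))
        (Finset.mem_erase.mpr ⟨hr'ne, Finset.mem_univ r'⟩)
      apply add_eq_zero_iff_eq_neg.mp
      calc δ r0 * Complex.exp (z * conj (γ r0)) + δ r' * Complex.exp (z * conj (γ r'))
            + ∑ s ∈ rest, δ s * Complex.exp (z * conj (γ s))
          = δ r0 * Complex.exp (z * conj (γ r0)) + (δ r' * Complex.exp (z * conj (γ r'))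
            + ∑ s ∈ rest, δ s * Complex.exp (z * conj (γ s))) := by ring
      _ = δ r0 * Complex.exp (z * conj (γ r0))
            + ∑ s ∈ Finset.univ.erase r0, δ s * Complex.exp (z * conj (γ s)) := by rw [e2]
      _ = ∑ s, δ s * Complex.exp (z * conj (γ s)) := e1
      _ = 0 := h0
    have habs_rest : ‖∑ s ∈ rest, δ s * Complex.exp (z * conj (γ s))‖
        ≤ D * Real.exp (t * n u - t * c) := by
      calc ‖∑ s ∈ rest, δ s * Complex.exp (z * conj (γ s))‖
          ≤ ∑ s ∈ rest, ‖δ s * Complex.exp (z * conj (γ s))‖ :=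
            norm_sum_le rest (fun s => δ s * Complex.exp (z * conj (γ s)))
      _ ≤ ∑ s ∈ rest, ‖δ s‖ * Real.exp (t * n u - t * c) := by
            apply Finset.sum_le_sum
            intro s hs
            rw [hrest] at hs
            exact hbound s (houtS s (Finset.ne_of_mem_erase (Finset.mem_of_mem_erase hs))
              (Finset.ne_of_mem_erase hs))
      _ ≤ ∑ s, ‖δ s‖ * Real.exp (t * n u - t * c) := by
            apply Finset.sum_le_sum_of_subset_of_nonneg
            · rw [hrest]; exact subset_trans (Finset.erase_subset _ _) (Finset.erase_subset _ _)
            · intro i _ _; positivity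
      _ = D * Real.exp (t * n u - t * c) := by rw [hDdef, Finset.sum_mul]
    -- the two main terms nearly cancel
    set A : ℝ := ‖δ r0‖ * Real.exp (t * n u) with hAdef
    set B : ℝ := ‖δ r'‖ * Real.exp (ip z (γ r')) with hBdef
    have hApos : 0 < A := by
      rw [hAdef]; exact mul_pos (norm_pos_iff.mpr (hδ r0)) (Real.exp_pos _)
    have htri : |A - B| ≤ D * Real.exp (t * n u - t * c) := by
      have h1 := abs_norm_sub_norm_le
        (δ r0 * Complex.exp (z * conj (γ r0))) (-(δ r' * Complex.exp (z * conj (γ r'))))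
      rw [norm_neg, sub_neg_eq_add, hsplit, norm_neg] at h1
      have hA' : ‖δ r0 * Complex.exp (z * conj (γ r0))‖ = A := by
        rw [habs_term r0, hzu (γ r0), ← hr0n, hAdef]
      have hB' : ‖δ r' * Complex.exp (z * conj (γ r'))‖ = B := by
        rw [habs_term r', hBdef]
      rw [hA', hB'] at h1
      exact le_trans h1 habs_rest
    set ρ : ℝ := ‖δ r'‖ / ‖δ r0‖ with hρdef
    have hρpos : 0 < ρ := div_pos (norm_pos_iff.mpr (hδ r')) (norm_pos_iff.mpr (hδ r0))
    set y : ℝ := ρ * Real.exp (ip z (γ r') - t * n u) with hydef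
    have hypos : 0 < y := mul_pos hρpos (Real.exp_pos _)
    have hAy : A * y = B := by
      have hexp : Real.exp (t * n u) * Real.exp (ip z (γ r') - t * n u)
          = Real.exp (ip z (γ r')) := by
        rw [← Real.exp_add]; ring_nf
      have hδρ : ‖δ r0‖ * ρ = ‖δ r'‖ := by
        rw [hρdef, mul_comm]
        exact div_mul_cancel₀ _ (norm_ne_zero_iff.mpr (hδ r0))
      calc A * y = (‖δ r0‖ * ρ)
            * (Real.exp (t * n u) * Real.exp (ip z (γ r') - t * n u)) := by
            rw [hAdef, hydef]; ring
      _ = B := by rw [hexp, hδρ, hBdef]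
    have hexpand2 : Real.exp (t * n u - t * c)
        = Real.exp (t * n u) * Real.exp (-(t * c)) := by
      rw [← Real.exp_add]; ring_nf
    have h1y : A * |1 - y| ≤ D * Real.exp (t * n u) * Real.exp (-(t * c)) := by
      have heq : A * |1 - y| = |A - B| := by
        calc A * |1 - y| = |A| * |1 - y| := by rw [abs_of_pos hApos]
        _ = |A * (1 - y)| := (abs_mul _ _).symm
        _ = |A - B| := by rw [mul_sub, mul_one, hAy]
      rw [heq]
      calc |A - B| ≤ D * Real.exp (t * n u - t * c) := htri
      _ = D * Real.exp (t * n u) * Real.exp (-(t * c)) := by rw [hexpand2, mul_assoc]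
    have hQy : |1 - y| < μ := by
      have hE := Real.exp_pos (t * n u)
      have h8 : d * Real.exp (t * n u) * |1 - y|
          ≤ D * Real.exp (t * n u) * Real.exp (-(t * c)) :=
        le_trans (mul_le_mul_of_nonneg_right
          (mul_le_mul_of_nonneg_right (hdle r0) hE.le) (abs_nonneg _)) h1y
      have h9 : d * |1 - y| ≤ D * Real.exp (-(t * c)) := by
        apply le_of_mul_le_mul_right _ hE
        calc d * |1 - y| * Real.exp (t * n u)
            = d * Real.exp (t * n u) * |1 - y| := by ring
        _ ≤ D * Real.exp (t * n u) * Real.exp (-(t * c)) := h8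
        _ = D * Real.exp (-(t * c)) * Real.exp (t * n u) := by ring
      have h3 : |1 - y| ≤ Q * Real.exp (-(t * c)) := by
        rw [hQdef, div_mul_eq_mul_div, le_div_iff₀ hdpos]
        linarith only [h9]
      exact lt_of_le_of_lt h3 (hkey t hTz)
    have hyε1 : Real.exp (-ε) < y := by
      have h5 := (abs_lt.mp hQy).2
      rw [hμdef] at h5
      linarith only [h5]
    have hyε2 : y < Real.exp ε := by
      have h4 := (abs_lt.mp hQy).1
      rw [hμdef] at h4
      linarith only [h4, Real.add_one_le_exp ε, Real.add_one_le_exp (-ε)]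
    have hlogy : |Real.log y| ≤ ε := by
      rw [abs_le]
      constructor
      · exact (Real.le_log_iff_exp_le hypos).mpr hyε1.le
      · exact (Real.log_le_iff_le_exp hypos).mpr hyε2.le
    have hlog_eq : Real.log y = Real.log ρ + (ip z (γ r') - t * n u) := by
      rw [hydef, Real.log_mul (ne_of_gt hρpos) (ne_of_gt (Real.exp_pos _)), Real.log_exp]
    have hipzr0 : ip z (γ r0) = t * n u := by rw [hzu (γ r0), hr0n]
    have target1 : |ip z (γ r0 - γ r') - Real.log ρ| ≤ ε := by
      have hX : ip z (γ r0 - γ r') - Real.log ρ = -(Real.log y) := by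
        rw [hlog_eq, ip_sub_right, hipzr0]; ring
      rw [hX, abs_neg]
      exact hlogy
    -- edge pair data
    have hnormal : ∃ v, ‖v‖ = 1 ∧ ip v (γ r0) = n v ∧ ip v (γ r') = n v := by
      by_contra hno
      have h := hc3 u husphere (r0, r')
      rw [if_pos ⟨hr'ne.symm, hno⟩] at h
      have hle3 : c3 ≤ max (n u - ip u (γ r0)) (n u - ip u (γ r')) := h
      rcases max_cases (n u - ip u (γ r0)) (n u - ip u (γ r')) with ⟨hmx, -⟩ | ⟨hmx, -⟩ <;>
        rw [hmx] at hle3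
      · linarith only [hle3, hgap0, hcle3]
      · linarith only [hle3, hgap', hcle3]
    obtain ⟨he0u, he0a, he0b⟩ := hep (r0, r') hnormal
    set e0 : ℂ := ep (r0, r') with he0def
    have hip0 : ip e0 (γ r0 - γ r') = 0 := by rw [ip_sub_right, he0a, he0b]; ring
    have hout : ∀ w ∈ K, ip (w - γ r0) e0 ≤ 0 := by
      intro w hw
      rw [ip_sub_left]
      have h1 := hKle e0 w hw
      rw [ip_comm (γ r0) e0, he0a]
      linarith only [h1]
    have hex0 : γ r0 ∈ Set.extremePoints ℝ K := hext e0 he0u r0 he0a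
    have hex' : γ r' ∈ Set.extremePoints ℝ K := hext e0 he0u r' he0b
    have hseg : segment ℝ (γ r') (γ r0) ⊆ frontier K := by
      intro w hw
      have hwK : w ∈ K := by
        rw [hK]
        exact (convex_convexHull ℝ _).segment_subset
          (hK ▸ hKsub r') (hK ▸ hKsub r0) hw
      apply hfr e0 he0u w hwK
      obtain ⟨a, b, ha, hb, hab, rfl⟩ := hw
      rw [ip_add_left, ip_smul_left, ip_smul_left, ip_comm (γ r') e0, ip_comm (γ r0) e0,
        he0a, he0b]
      linear_combination (n e0) * hab
    -- construct the final outward normal with the side condition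
    have hE : ∃ e : ℂ, ‖e‖ = 1 ∧ ip e (γ r0 - γ r') = 0 ∧
        (∀ w ∈ K, ip (w - γ r0) e ≤ 0) ∧ 0 ≤ ip (z - γ r0) e := by
      by_cases hcol : ∀ s, ip (γ s - γ r0) e0 = 0
      · have hplane : ∀ w ∈ K, ip (w - γ r0) e0 = 0 := by
          intro w hw
          have hran : ∀ x ∈ Set.range γ, ip x e0 = ip (γ r0) e0 := by
            rintro x ⟨s, rfl⟩
            have h6 := hcol s
            rw [ip_sub_left] at h6
            linarith only [h6]
          have h7 := hull_hyperplane _ e0 _ hran w (hK ▸ hw)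
          rw [ip_sub_left]
          linarith only [h7]
        by_cases hside : 0 ≤ ip (z - γ r0) e0
        · exact ⟨e0, he0u, hip0, hout, hside⟩
        · refine ⟨-e0, by rw [norm_neg]; exact he0u, ?_, ?_, ?_⟩
          · rw [ip_neg_left, hip0]; ring
          · intro w hw
            rw [ip_neg_right, hplane w hw]; simp
          · rw [ip_neg_right]
            push_neg at hside
            linarith only [hside]
      · push_neg at hcol
        obtain ⟨s0, hs0⟩ := hcol
        have h4 := hc4 u husphere (r0, r')
        rw [if_pos ⟨hr'ne.symm, hnormal, s0, by rw [← he0def]; exact hs0⟩] at h4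
        have hue : c ≤ ip u e0 := by
          have hmax1 : max (max (n u - ip u (γ r0)) (n u - ip u (γ r'))) (ip u (ep (r0, r')))
              = ip u (ep (r0, r')) ∨
              max (max (n u - ip u (γ r0)) (n u - ip u (γ r'))) (ip u (ep (r0, r')))
              = max (n u - ip u (γ r0)) (n u - ip u (γ r')) := by
            rcases max_cases (max (n u - ip u (γ r0)) (n u - ip u (γ r')))
              (ip u (ep (r0, r'))) with ⟨hmx, -⟩ | ⟨hmx, -⟩
            · right; exact hmx
            · left; exact hmx
          rcases hmax1 with hmx | hmx <;> rw [hmx] at h4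
          · rw [he0def]; linarith only [h4, hcle4]
          · exfalso
            rcases max_cases (n u - ip u (γ r0)) (n u - ip u (γ r')) with ⟨hmx2, -⟩ | ⟨hmx2, -⟩ <;>
              rw [hmx2] at h4
            · linarith only [h4, hcle4, hgap0]
            · linarith only [h4, hcle4, hgap']
        have hwv : γ r0 - γ r' ≠ 0 := sub_ne_zero.mpr (fun hh => hr'ne (hγ hh).symm)
        set L : ℝ := ‖γ r0 - γ r'‖ with hLdef
        have hLpos : 0 < L := norm_pos_iff.mpr hwv
        set f : ℂ := (L⁻¹ : ℝ) • (γ r0 - γ r') with hfdef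
        have hf1 : ‖f‖ = 1 := by
          rw [hfdef, show ‖(L⁻¹ : ℝ) • (γ r0 - γ r')‖ = ‖(L⁻¹ : ℝ) • (γ r0 - γ r')‖
            from rfl, norm_smul]
          simp only [Real.norm_eq_abs, ← hLdef]
          rw [abs_of_pos (by positivity)]
          field_simp
        have hef : ip e0 f = 0 := by
          rw [hfdef, ip_smul_right, hip0]; ring
        have hpy := pyth e0 f he0u hf1 hef u
        rw [hu1] at hpy
        have hipuwv : |ip u (γ r0 - γ r')| < c := by
          have heq1 : ip u (γ r0 - γ r') =
              (n u - ip u (γ r')) - (n u - ip u (γ r0)) := by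
            rw [ip_sub_right]; ring
          rw [heq1, abs_lt]
          have hg0 : 0 ≤ n u - ip u (γ r0) := sub_nonneg.mpr (hle_n u r0)
          have hg' : 0 ≤ n u - ip u (γ r') := sub_nonneg.mpr (hle_n u r')
          constructor
          · linarith only [hgap0, hg']
          · linarith only [hgap', hg0]
        have hcL : c ≤ L / 2 := by
          have h5 := hc5 u husphere (r0, r')
          rw [if_pos hr'ne.symm] at h5
          rw [hLdef]
          linarith only [h5, hcle5]
        have hiuf : |ip u f| < 1 / 2 := by
          rw [hfdef, ip_smul_right, abs_mul, abs_of_pos (by positivity : (0:ℝ) < L⁻¹)]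
          calc L⁻¹ * |ip u (γ r0 - γ r')| < L⁻¹ * c := by
                apply mul_lt_mul_of_pos_left hipuwv (by positivity)
          _ ≤ L⁻¹ * (L / 2) := mul_le_mul_of_nonneg_left hcL (by positivity)
          _ = 1 / 2 := by field_simp
        have hiue : 1 / 2 < ip u e0 := by
          have hf2 : (ip u f) ^ 2 < 1 / 4 := by
            nlinarith only [hiuf, abs_nonneg (ip u f), _root_.sq_abs (ip u f)]
          have hE0 : 0 ≤ ip u e0 := le_trans hcpos.le hue
          by_contra hcon
          push_neg at hcon
          nlinarith only [hpy, hf2, hcon, hE0]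
        have hΓr0 : ip (γ r0) e0 ≤ Γ := by
          have h1 := abs_ip_le (γ r0) e0
          rw [he0u, mul_one] at h1
          exact le_trans (le_trans (le_abs_self _) h1) (hΓle r0)
        have hzlarge : Γ < ip z e0 := by
          have h1 : ip z e0 = t * ip u e0 := hzu e0
          have h2 : 2 * Γ + 1 ≤ T := le_max_left _ _
          have hstep : t * (1 / 2) < t * ip u e0 :=
            mul_lt_mul_of_pos_left hiue htpos
          rw [h1]
          linarith only [hstep, hTz, h2]
        refine ⟨e0, he0u, hip0, hout, ?_⟩
        rw [ip_sub_left]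
        linarith only [hzlarge, hΓr0]
    obtain ⟨e, he1, he2, he3, he4⟩ := hE
    refine ⟨r0, r', hr'ne.symm, hex0, hex', hseg, e, he1, he2, ?_, ?_, ?_⟩
    · intro w hw
      exact he3 w hw
    · exact he4
    · exact target1
end

section
/- The set of zeros of G is exactly { (c + (2n+1)πi) · e^{iθ} / ρ : n ∈ ℤ }. In particular all zeros of G lie on a single straight line, and the distance between any two consecutive zeros on this line equals 2π/ρ = 2π/|γ − γ'|. -/
open Complex ComplexConjugate

/-- The zeros of `G(z) = δ e^{z γ̄} + δ' e^{z γ̄'}` are exactly the points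
`(c + (2n+1)πi) e^{iθ}/ρ`, `n ∈ ℤ`; in particular they lie on a single straight line, with
distance `2π/ρ = 2π/|γ − γ'|` between consecutive zeros. -/
theorem zeros_of_two_term_exponential_sum
    (γ γ' δ δ' : ℂ) (hne : γ ≠ γ') (hδ : δ ≠ 0) (hδ' : δ' ≠ 0)
    (ρ θ : ℝ) (hρ : ρ = ‖γ - γ'‖)
    (hθ : γ - γ' = (ρ : ℂ) * Complex.exp (θ * Complex.I))
    (c : ℂ) (hc : Complex.exp c = δ' / δ)
    (G : ℂ → ℂ)
    (hG : ∀ z, G z = δ * Complex.exp (z * conj γ) + δ' * Complex.exp (z * conj γ')) :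
    ({z : ℂ | G z = 0} =
      Set.range (fun n : ℤ =>
        (c + (2 * (n : ℂ) + 1) * Real.pi * Complex.I) * Complex.exp (θ * Complex.I) / ρ)) ∧
    ∀ n : ℤ,
      ‖
        ((c + (2 * ((n : ℂ) + 1) + 1) * Real.pi * Complex.I) * Complex.exp (θ * Complex.I) / ρ -
          (c + (2 * (n : ℂ) + 1) * Real.pi * Complex.I) * Complex.exp (θ * Complex.I) / ρ)‖
        = 2 * Real.pi / ‖γ - γ'‖ := by
  have hρpos : (0:ℝ) < ρ := by
    rw [hρ]; exact norm_pos_iff.mpr (sub_ne_zero.mpr hne)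
  have hρ0 : (ρ:ℂ) ≠ 0 := by exact_mod_cast hρpos.ne'
  have hexp0 : Complex.exp ((θ:ℂ) * Complex.I) ≠ 0 := Complex.exp_ne_zero _
  have hconj : conj γ - conj γ' = (ρ:ℂ) * Complex.exp (-((θ:ℂ) * Complex.I)) := by
    have h := congrArg (starRingEnd ℂ) hθ
    rw [map_sub] at h
    rw [h, map_mul, Complex.conj_ofReal, ← Complex.exp_conj]
    congr 1
    simp [Complex.conj_ofReal]
  have hiff : ∀ z : ℂ, G z = 0 ↔
      Complex.exp (z * (conj γ - conj γ')) = Complex.exp (c + Real.pi * Complex.I) := by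
    intro z
    rw [hG z, Complex.exp_add, hc, Complex.exp_pi_mul_I, mul_sub, Complex.exp_sub,
      div_eq_iff (Complex.exp_ne_zero _)]
    constructor
    · intro h
      field_simp
      linear_combination h
    · intro h
      field_simp at h
      linear_combination h
  constructor
  · ext z
    simp only [Set.mem_setOf_eq, Set.mem_range, hiff z,
      Complex.exp_eq_exp_iff_exists_int]
    constructor
    · rintro ⟨n, hn⟩
      refine ⟨n, ?_⟩
      rw [hconj] at hn
      symm
      rw [eq_div_iff hρ0]
      have : z * ((ρ:ℂ) * Complex.exp (-((θ:ℂ) * Complex.I))) * Complex.exp ((θ:ℂ) * Complex.I)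
          = z * (ρ:ℂ) := by
        rw [mul_assoc, mul_assoc, ← Complex.exp_add]
        simp
      calc z * (ρ:ℂ) = z * ((ρ:ℂ) * Complex.exp (-((θ:ℂ) * Complex.I)))
            * Complex.exp ((θ:ℂ) * Complex.I) := this.symm
        _ = (c + (2 * (n:ℂ) + 1) * Real.pi * Complex.I) * Complex.exp ((θ:ℂ) * Complex.I) := by
            rw [hn]; ring
    · rintro ⟨n, hn⟩
      refine ⟨n, ?_⟩
      rw [hconj, ← hn]
      field_simp
      have he : Complex.exp ((θ:ℂ)*Complex.I) * Complex.exp (-((θ:ℂ)*Complex.I)) = 1 := by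
        rw [← Complex.exp_add]; simp
      have he' : Complex.exp (Complex.I*(θ:ℂ)) * Complex.exp (-(Complex.I*(θ:ℂ))) = 1 := by
        rw [← Complex.exp_add]; simp
      linear_combination (c + (2*(n:ℂ)+1)*Real.pi*Complex.I) * he'
  · intro n
    rw [div_sub_div_same, ← sub_mul]
    have h2 : (c + (2 * ((n:ℂ) + 1) + 1) * Real.pi * Complex.I)
        - (c + (2 * (n:ℂ) + 1) * Real.pi * Complex.I) = 2 * Real.pi * Complex.I := by ring
    rw [h2, norm_div, norm_mul, Complex.norm_exp_ofReal_mul_I, mul_one]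
    have : ‖2 * (Real.pi:ℂ) * Complex.I‖ = 2 * Real.pi := by
      simp [Real.pi_pos.le]
    rw [this, Complex.norm_real, Real.norm_eq_abs, abs_of_pos hρpos, hρ]
end

section
/- Assume the data is generic, let (r,r') be an edge pair with outward unit normal e, let 0 < ε < 1/9, and define G(z) = δ_r · exp(z · conj(γ_r)) + δ_{r'} · exp(z · conj(γ_{r'})). Then for every η > 0 there exists T > 0 such that: (i) every z ∈ ℂ with F(z) = 0, |z| > T, ⟪z − γ_r, e⟫ ≥ 0 and |⟪z, γ_r − γ_{r'}⟫ − k_{r,r'}| ≤ ε satisfies |z − w| < η for some w ∈ ℂ with G(w) = 0; and (ii) every w ∈ ℂ with G(w) = 0, |w| > T and ⟪w − γ_r, e⟫ ≥ 0 satisfies |z − w| < η for some z ∈ ℂ with F(z) = 0. -/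
open Complex ComplexConjugate

open Finset Filter


private lemma re_mul_conj_comm' (x y : ℂ) : (x * conj y).re = (y * conj x).re := by
  have h : y * conj x = conj (x * conj y) := by
    rw [map_mul, Complex.conj_conj, mul_comm]
  rw [h, Complex.conj_re]

private lemma sum_exp_small {ι : Type*} [DecidableEq ι] (A : Finset ι) (d M : ι → ℂ)
    (hM : ∀ s ∈ A, (M s).re < 0) (C₁ ζs : ℝ) (hζs : 0 < ζs) :
    ∃ X : ℝ, 0 < X ∧ ∀ ζ : ℂ, X ≤ ζ.re → |ζ.im| ≤ C₁ →
      ∑ s ∈ A, ‖d s‖ * Real.exp ((ζ * M s).re) ≤ ζs := by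
  rcases A.eq_empty_or_nonempty with hA | hA
  · exact ⟨1, one_pos, fun ζ _ _ => by simp [hA, hζs.le]⟩
  have hcard : (0 : ℝ) < A.card := by exact_mod_cast Finset.card_pos.mpr hA
  set τ : ℝ := ζs / A.card with hτdef
  have hτ : 0 < τ := div_pos hζs hcard
  have key : ∀ s ∈ A, ∃ Xs : ℝ, ∀ X : ℝ, Xs ≤ X →
      ‖d s‖ * Real.exp (C₁ * |(M s).im|) * Real.exp (X * (M s).re) ≤ τ := by
    intro s hs
    have h1 : Tendsto (fun X : ℝ => ‖d s‖ * Real.exp (C₁ * |(M s).im|) *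
        Real.exp (X * (M s).re)) atTop (nhds 0) := by
      have h2 : Tendsto (fun X : ℝ => X * (M s).re) atTop atBot :=
        tendsto_id.atTop_mul_const_of_neg (hM s hs)
      have h3 := Real.tendsto_exp_atBot.comp h2
      have := h3.const_mul (‖d s‖ * Real.exp (C₁ * |(M s).im|))
      simpa using this
    have h4 := h1.eventually_lt_const hτ
    rw [eventually_atTop] at h4
    obtain ⟨Xs, hXs⟩ := h4
    exact ⟨Xs, fun X hX => (hXs X hX).le⟩
  choose! Xs hXs using key
  refine ⟨1 + ∑ s ∈ A, |Xs s|, by positivity, fun ζ hζre hζim => ?_⟩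
  have hbound : ∀ s ∈ A, ‖d s‖ * Real.exp ((ζ * M s).re) ≤ τ := by
    intro s hs
    have hre : (ζ * M s).re ≤ ζ.re * (M s).re + C₁ * |(M s).im| := by
      rw [Complex.mul_re]
      have h5 : -(ζ.im * (M s).im) ≤ |ζ.im * (M s).im| := neg_le_abs _
      have h6 : |ζ.im * (M s).im| = |ζ.im| * |(M s).im| := abs_mul _ _
      have h7 : |ζ.im| * |(M s).im| ≤ C₁ * |(M s).im| :=
        mul_le_mul_of_nonneg_right hζim (abs_nonneg _)
      linarith
    have h8 : Real.exp ((ζ * M s).re) ≤ Real.exp (ζ.re * (M s).re + C₁ * |(M s).im|) :=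
      Real.exp_le_exp.mpr hre
    have h9 : ‖d s‖ * Real.exp ((ζ * M s).re) ≤
        ‖d s‖ * Real.exp (C₁ * |(M s).im|) * Real.exp (ζ.re * (M s).re) := by
      rw [Real.exp_add] at h8
      have := mul_le_mul_of_nonneg_left h8 (norm_nonneg (d s))
      calc ‖d s‖ * Real.exp ((ζ * M s).re) ≤
          ‖d s‖ * (Real.exp (ζ.re * (M s).re) * Real.exp (C₁ * |(M s).im|)) := this
        _ = ‖d s‖ * Real.exp (C₁ * |(M s).im|) * Real.exp (ζ.re * (M s).re) := by ring
    refine h9.trans (hXs s hs ζ.re ?_)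
    have h10 : |Xs s| ≤ ∑ t ∈ A, |Xs t| :=
      Finset.single_le_sum (f := fun t => |Xs t|) (fun t _ => abs_nonneg _) hs
    have := le_abs_self (Xs s)
    linarith
  calc ∑ s ∈ A, ‖d s‖ * Real.exp ((ζ * M s).re) ≤ ∑ _s ∈ A, τ :=
        Finset.sum_le_sum hbound
    _ = A.card * τ := by rw [Finset.sum_const, nsmul_eq_mul]
    _ = ζs := by rw [hτdef]; field_simp

private lemma openseg_param (p v : ℂ) (α β x : ℝ)
    (h : (x - α) / (β - α) ∈ Set.Ioo (0:ℝ) 1) :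
    p + x • v ∈ openSegment ℝ (p + α • v) (p + β • v) := by
  have hβα : β - α ≠ 0 := by
    intro h0
    rw [h0, div_zero] at h
    exact absurd h.1 (lt_irrefl 0)
  set θ := (x - α) / (β - α) with hθ
  have hx : α + θ * (β - α) = x := by
    rw [hθ]; field_simp; ring
  refine ⟨1 - θ, θ, by linarith [h.2], h.1, by ring, ?_⟩
  have hmod : (1 - θ) • (p + α • v) + θ • (p + β • v) = p + (α + θ * (β - α)) • v := by
    module
  rw [hmod, hx]

private lemma edge_strict {R : ℕ} (γ : Fin R → ℂ) (hγ : Function.Injective γ)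
    (K : Set ℂ) (hK : K = convexHull ℝ (Set.range γ))
    (hgen : ∀ i, γ i ∈ frontier K → γ i ∈ Set.extremePoints ℝ K)
    (r r' : Fin R) (hrr' : r ≠ r')
    (hr : γ r ∈ Set.extremePoints ℝ K) (hr' : γ r' ∈ Set.extremePoints ℝ K)
    (hseg : segment ℝ (γ r') (γ r) ⊆ frontier K)
    (e : ℂ) (he : ‖e‖ = 1)
    (heperp : (e * conj (γ r - γ r')).re = 0)
    (heout : ∀ w ∈ K, ((w - γ r) * conj e).re ≤ 0)
    (s : Fin R) (hsr : s ≠ r) (hsr' : s ≠ r') :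
    ((γ s - γ r) * conj e).re < 0 := by
  have hmem : ∀ i, γ i ∈ K := fun i =>
    hK ▸ subset_convexHull ℝ (Set.range γ) (Set.mem_range_self i)
  have hle := heout (γ s) (hmem s)
  by_contra hlt
  push_neg at hlt
  have heq : ((γ s - γ r) * conj e).re = 0 := le_antisymm hle hlt
  have hperp' : ((γ r' - γ r) * conj e).re = 0 := by
    have h := re_mul_conj_comm' e (γ r - γ r')
    have h2 : (γ r' - γ r) * conj e = -((γ r - γ r') * conj e) := by ring
    rw [h2, Complex.neg_re, ← h, heperp, neg_zero]
  have hnormSq : (Complex.normSq e : ℂ) = 1 := by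
    rw [Complex.normSq_eq_norm_sq, he]; norm_num
  have hrec : ∀ x : ℂ, ((x - γ r) * conj e).re = 0 →
      x = γ r + (((x - γ r) * conj e).im : ℝ) • (Complex.I * e) := by
    intro x hx
    have h1 : x - γ r = ((x - γ r) * conj e) * e := by
      calc x - γ r = (x - γ r) * 1 := by ring
        _ = (x - γ r) * (e * conj e) := by rw [Complex.mul_conj, hnormSq]
        _ = ((x - γ r) * conj e) * e := by ring
    have h2 : (x - γ r) * conj e = ((((x - γ r) * conj e).im : ℝ) : ℂ) * Complex.I := by
      apply Complex.ext <;> simp [hx]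
    rw [Complex.real_smul]
    linear_combination h1 + h2 * e
  set v : ℂ := Complex.I * e with hv
  set ts := ((γ s - γ r) * conj e).im with hts
  set t' := ((γ r' - γ r) * conj e).im with ht'
  have hs_eq : γ s = γ r + ts • v := hrec (γ s) heq
  have hr'_eq : γ r' = γ r + t' • v := hrec (γ r') hperp'
  have hts0 : ts ≠ 0 := by
    intro h0
    rw [h0, zero_smul, add_zero] at hs_eq
    exact hsr (hγ hs_eq)
  have ht'0 : t' ≠ 0 := by
    intro h0
    rw [h0, zero_smul, add_zero] at hr'_eq
    exact hrr' (hγ hr'_eq).symm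
  have htst' : ts ≠ t' := by
    intro h0
    rw [h0, ← hr'_eq] at hs_eq
    exact hsr' (hγ hs_eq)
  have hcases : ts / t' ∈ Set.Ioo (0:ℝ) 1 ∨ (0 - ts) / (t' - ts) ∈ Set.Ioo (0:ℝ) 1 ∨
      t' / ts ∈ Set.Ioo (0:ℝ) 1 := by
    rcases lt_or_gt_of_ne hts0 with h1 | h1 <;> rcases lt_or_gt_of_ne ht'0 with h2 | h2
    · rcases lt_or_gt_of_ne htst' with h3 | h3
      · right; right
        constructor
        · rw [div_pos_iff]; right; exact ⟨h2, h1⟩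
        · rw [div_lt_one_iff]; right; right; exact ⟨h1, h3⟩
      · left
        constructor
        · rw [div_pos_iff]; right; exact ⟨h1, h2⟩
        · rw [div_lt_one_iff]; right; right; exact ⟨h2, h3⟩
    · right; left
      constructor
      · rw [div_pos_iff]; left; constructor <;> linarith
      · rw [div_lt_one_iff]; left; constructor <;> linarith
    · right; left
      constructor
      · rw [div_pos_iff]; right; constructor <;> linarith
      · rw [div_lt_one_iff]; right; right; constructor <;> linarith
    · rcases lt_or_gt_of_ne htst' with h3 | h3
      · left
        constructor
        · rw [div_pos_iff]; left; exact ⟨h1, h2⟩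
        · rw [div_lt_one_iff]; left; exact ⟨h2, h3⟩
      · right; right
        constructor
        · rw [div_pos_iff]; left; exact ⟨h2, h1⟩
        · rw [div_lt_one_iff]; left; exact ⟨h1, h3⟩
  rcases hcases with h | h | h
  · have hmemseg : γ s ∈ openSegment ℝ (γ r) (γ r') := by
      have := openseg_param (γ r) v 0 t' ts (by simpa using h)
      rw [zero_smul, add_zero] at this
      rw [hs_eq, hr'_eq]; exact this
    have hfr : γ s ∈ frontier K := by
      apply hseg
      rw [segment_symm]
      exact openSegment_subset_segment ℝ _ _ hmemseg
    have hext := hgen s hfr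
    rw [mem_extremePoints] at hext
    have := (hext.2 (γ r) (hmem r) (γ r') (hmem r') hmemseg).1
    exact hsr (hγ this.symm)
  · have hmemseg : γ r ∈ openSegment ℝ (γ s) (γ r') := by
      have := openseg_param (γ r) v ts t' 0 h
      rw [zero_smul, add_zero] at this
      rw [hs_eq, hr'_eq]; exact this
    rw [mem_extremePoints] at hr
    have := (hr.2 (γ s) (hmem s) (γ r') (hmem r') hmemseg).1
    exact hsr (hγ this)
  · have hmemseg : γ r' ∈ openSegment ℝ (γ r) (γ s) := by
      have := openseg_param (γ r) v 0 ts t' (by simpa using h)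
      rw [zero_smul, add_zero] at this
      rw [hs_eq, hr'_eq]; exact this
    rw [mem_extremePoints] at hr'
    have := (hr'.2 (γ r) (hmem r) (γ s) (hmem s) hmemseg).1
    exact (hrr' (hγ this)).elim

set_option maxHeartbeats 1000000 in
/-- In the generic case, the zeros of `F` lying in the strip `S_r^ε` associated
with an edge pair `(r,r')` converge to the zeros of
`G(z) = δ_r e^{z γ̄_r} + δ_{r'} e^{z γ̄_{r'}}`, and conversely. -/
theorem zeros_converge_to_two_term_zeros
    {R : ℕ} (hR : 2 ≤ R) (γ δ : Fin R → ℂ)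
    (hγ : Function.Injective γ) (hδ : ∀ r, δ r ≠ 0)
    (F : ℂ → ℂ)
    (hF : ∀ z, F z = ∑ r, δ r * Complex.exp (z * conj (γ r)))
    (K : Set ℂ) (hK : K = convexHull ℝ (Set.range γ))
    (hgen : ∀ r, γ r ∈ frontier K → γ r ∈ Set.extremePoints ℝ K)
    (r r' : Fin R) (hrr' : r ≠ r')
    (hr : γ r ∈ Set.extremePoints ℝ K) (hr' : γ r' ∈ Set.extremePoints ℝ K)
    (hseg : segment ℝ (γ r') (γ r) ⊆ frontier K)
    (e : ℂ) (he : ‖e‖ = 1)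
    (heperp : (e * conj (γ r - γ r')).re = 0)
    (heout : ∀ w ∈ K, ((w - γ r) * conj e).re ≤ 0)
    (ε : ℝ) (hε0 : 0 < ε) (hε1 : ε < 1 / 9)
    (G : ℂ → ℂ)
    (hG : ∀ z, G z = δ r * Complex.exp (z * conj (γ r)) +
      δ r' * Complex.exp (z * conj (γ r'))) :
    ∀ η : ℝ, 0 < η → ∃ T : ℝ, 0 < T ∧
      ((∀ z : ℂ, F z = 0 → T < ‖z‖ →
          0 ≤ ((z - γ r) * conj e).re →
          |(z * conj (γ r - γ r')).re -
            Real.log (‖δ r'‖ / ‖δ r‖)| ≤ ε →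
          ∃ w : ℂ, G w = 0 ∧ ‖z - w‖ < η) ∧
        (∀ w : ℂ, G w = 0 → T < ‖w‖ →
          0 ≤ ((w - γ r) * conj e).re →
          ∃ z : ℂ, F z = 0 ∧ ‖z - w‖ < η)) := by
  intro η hη
  -- Basic notation
  have hδr := hδ r
  have hγrr' : γ r ≠ γ r' := fun h => hrr' (hγ h)
  set c : ℂ := γ r - γ r' with hc
  have hc0 : c ≠ 0 := sub_ne_zero.mpr hγrr'
  set k : ℝ := Real.log (‖δ r'‖ / ‖δ r‖) with hk
  set u : ℂ := δ r' / δ r with hu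
  set a : ℂ := conj (γ r') - conj (γ r) with ha
  have ha0 : a ≠ 0 := by
    rw [ha, sub_ne_zero]
    exact fun h0 => hγrr' (star_injective h0).symm
  have habs_a : 0 < ‖a‖ := norm_pos_iff.mpr ha0
  have hnormSq : (Complex.normSq e : ℂ) = 1 := by
    rw [Complex.normSq_eq_norm_sq, he]; norm_num
  classical
  set A : Finset (Fin R) := (Finset.univ.erase r).erase r' with hA
  set E : ℂ → ℂ := fun z => ∑ s ∈ A,
    (δ s / δ r) * Complex.exp (z * (conj (γ s) - conj (γ r))) with hE
  set E' : ℂ → ℂ := fun z => ∑ s ∈ A,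
    (δ s / δ r * (conj (γ s) - conj (γ r))) * Complex.exp (z * (conj (γ s) - conj (γ r))) with hE'
  -- Splitting the sum
  have hr'memA : r' ∈ Finset.univ.erase r := Finset.mem_erase.mpr ⟨hrr'.symm, Finset.mem_univ r'⟩
  have hsplit : ∀ f : Fin R → ℂ, ∑ s, f s = f r + (f r' + ∑ s ∈ A, f s) := by
    intro f
    rw [hA, Finset.add_sum_erase _ f hr'memA, Finset.add_sum_erase _ f (Finset.mem_univ r)]
  have hterm : ∀ z : ℂ, ∀ s : Fin R, δ r * Complex.exp (z * conj (γ r)) *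
      ((δ s / δ r) * Complex.exp (z * (conj (γ s) - conj (γ r)))) =
      δ s * Complex.exp (z * conj (γ s)) := by
    intro z s
    rw [show z * conj (γ s) = z * conj (γ r) + z * (conj (γ s) - conj (γ r)) by ring,
      Complex.exp_add]
    field_simp
  have keyF : ∀ z : ℂ, F z = δ r * Complex.exp (z * conj (γ r)) *
      (1 + u * Complex.exp (z * a) + E z) := by
    intro z
    rw [hF, hsplit (fun s => δ s * Complex.exp (z * conj (γ s)))]
    have h1 : δ r * Complex.exp (z * conj (γ r)) * (1 + u * Complex.exp (z * a) + E z) =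
        δ r * Complex.exp (z * conj (γ r)) +
        δ r * Complex.exp (z * conj (γ r)) *
          ((δ r' / δ r) * Complex.exp (z * (conj (γ r') - conj (γ r)))) +
        ∑ s ∈ A, δ r * Complex.exp (z * conj (γ r)) *
          ((δ s / δ r) * Complex.exp (z * (conj (γ s) - conj (γ r)))) := by
      rw [hE, hu, ha, ← Finset.mul_sum]
      ring
    rw [h1, hterm z r', Finset.sum_congr rfl (fun s _ => hterm z s)]
    ring
  have keyG : ∀ z : ℂ, G z = δ r * Complex.exp (z * conj (γ r)) *
      (1 + u * Complex.exp (z * a)) := by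
    intro z
    rw [hG]
    have h1 : δ r * Complex.exp (z * conj (γ r)) * (1 + u * Complex.exp (z * a)) =
        δ r * Complex.exp (z * conj (γ r)) +
        δ r * Complex.exp (z * conj (γ r)) *
          ((δ r' / δ r) * Complex.exp (z * (conj (γ r') - conj (γ r)))) := by
      rw [hu, ha]; ring
    rw [h1, hterm z r']
  -- geometry: strict negativity for non-edge indices
  have hMlt : ∀ s ∈ A, (e * (conj (γ s) - conj (γ r))).re < 0 := by
    intro s hs
    rw [hA, Finset.mem_erase, Finset.mem_erase] at hs
    have h1 := edge_strict γ hγ K hK hgen r r' hrr' hr hr' hseg e he heperp heout s hs.2.1 hs.1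
    have h2 : e * (conj (γ s) - conj (γ r)) = e * conj (γ s - γ r) := by rw [map_sub]
    rw [h2, re_mul_conj_comm' e (γ s - γ r)]
    exact h1
  -- constants
  set b : ℂ := e * conj c with hb
  have hbre : b.re = 0 := heperp
  have hb0 : b ≠ 0 := mul_ne_zero (by
      intro h0; rw [h0] at he; simp at he) ((map_ne_zero (starRingEnd ℂ)).mpr hc0)
  have hbim : b.im ≠ 0 := by
    intro h0
    exact hb0 (Complex.ext (by rw [hbre]; rfl) (by rw [h0]; rfl))
  have hbimpos : 0 < |b.im| := abs_pos.mpr hbim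
  set C₀ : ℝ := |k| + ε + ‖c‖ + 1 with hC₀
  have hC₀pos : 0 < C₀ := by positivity
  set C₁ : ℝ := C₀ / |b.im| with hC₁
  have hC₁pos : 0 < C₁ := div_pos hC₀pos hbimpos
  set m₀ : ℝ := (γ r * conj e).re - 1 with hm₀
  set ρ : ℝ := min (η / 2) 1 with hρ
  have hρ0 : 0 < ρ := lt_min (by linarith) one_pos
  have hρ1 : ρ ≤ 1 := min_le_right _ _
  have hρη : ρ ≤ η / 2 := min_le_left _ _
  -- control of log(1+x) near 0
  obtain ⟨ζ₀, hζ₀pos, hζ₀⟩ : ∃ ζ₀ : ℝ, 0 < ζ₀ ∧ ∀ x : ℂ, ‖x‖ ≤ ζ₀ →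
      ‖Complex.log (1 + x)‖ < ρ * ‖a‖ := by
    have hcont : ContinuousAt (fun x : ℂ => Complex.log (1 + x)) 0 := by
      have h1 : ContinuousAt Complex.log ((fun x : ℂ => 1 + x) 0) := by
        simp only [add_zero]
        exact continuousAt_clog Complex.one_mem_slitPlane
      exact h1.comp (continuous_const.add continuous_id).continuousAt
    rw [Metric.continuousAt_iff] at hcont
    obtain ⟨δ₀, hδ₀pos, hδ₀⟩ := hcont (ρ * ‖a‖) (by positivity)
    refine ⟨δ₀ / 2, by positivity, fun x hx => ?_⟩
    have h2 := hδ₀ (show dist x 0 < δ₀ by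
      rw [Complex.dist_eq, sub_zero]; linarith)
    simpa [Complex.dist_eq, Complex.log_one] using h2
  set ζE : ℝ := min ζ₀ (1 / 2) with hζE
  have hζEpos : 0 < ζE := lt_min hζ₀pos one_half_pos
  set ζE' : ℝ := ‖a‖ / 8 with hζE'
  have hζE'pos : 0 < ζE' := by positivity
  -- decay thresholds
  obtain ⟨X₁, hX₁pos, hX₁⟩ := sum_exp_small A (fun s => δ s / δ r)
    (fun s => e * (conj (γ s) - conj (γ r))) hMlt C₁ ζE hζEpos
  obtain ⟨X₂, hX₂pos, hX₂⟩ := sum_exp_small A (fun s => δ s / δ r * (conj (γ s) - conj (γ r)))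
    (fun s => e * (conj (γ s) - conj (γ r))) hMlt C₁ ζE' hζE'pos
  set X : ℝ := max X₁ X₂ with hX
  set X' : ℝ := max X (|m₀| + 1) with hX'
  have hX'pos : 0 < X' := lt_of_lt_of_le (by positivity) (le_max_right _ _)
  set T₀ : ℝ := Real.sqrt (C₁ ^ 2 + X' ^ 2) + 1 with hT₀
  have hT₀pos : 0 < T₀ := by positivity
  set T : ℝ := T₀ + 1 with hT
  -- the main region estimate
  have hzeta : ∀ z : ℂ, T₀ < ‖z‖ → (-1 : ℝ) ≤ ((z - γ r) * conj e).re →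
      |(z * conj c).re| ≤ C₀ → ‖E z‖ ≤ ζE ∧ ‖E' z‖ ≤ ζE' := by
    intro z hTz hhalf hstrip
    set ζ : ℂ := z * conj e with hζdef
    have hze : z = ζ * e := by
      rw [hζdef]
      have h1 : z * conj e * e = z * (e * conj e) := by ring
      rw [h1, Complex.mul_conj, hnormSq, mul_one]
    have h1 : ζ * b = z * conj c * (e * conj e) := by rw [hζdef, hb]; ring
    rw [Complex.mul_conj, hnormSq, mul_one] at h1
    have h2 : (z * conj c).re = -(ζ.im * b.im) := by
      rw [← h1, Complex.mul_re, hbre]; ring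
    have him : |ζ.im| ≤ C₁ := by
      have h3 : |ζ.im| * |b.im| ≤ C₀ := by
        rw [← abs_mul]
        calc |ζ.im * b.im| = |(z * conj c).re| := by rw [h2, abs_neg]
          _ ≤ C₀ := hstrip
      rw [hC₁, le_div_iff₀ hbimpos]
      exact h3
    have hre0 : m₀ ≤ ζ.re := by
      have h4 : (z - γ r) * conj e = ζ - γ r * conj e := by rw [hζdef]; ring
      have h5 : ((z - γ r) * conj e).re = ζ.re - (γ r * conj e).re := by
        rw [h4, Complex.sub_re]
      rw [h5] at hhalf
      rw [hm₀]; linarith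
    have habsζ : ‖ζ‖ = ‖z‖ := by
      rw [hζdef, norm_mul, Complex.norm_conj, he, mul_one]
    have hsq : ζ.re ^ 2 + ζ.im ^ 2 = ‖z‖ ^ 2 := by
      rw [← habsζ, Complex.sq_norm, Complex.normSq_apply]; ring
    have h6 : C₁ ^ 2 + X' ^ 2 < ‖z‖ ^ 2 := by
      have hs := Real.sq_sqrt (show (0:ℝ) ≤ C₁ ^ 2 + X' ^ 2 by positivity)
      have h6' : Real.sqrt (C₁ ^ 2 + X' ^ 2) < ‖z‖ := by
        rw [hT₀] at hTz; linarith
      calc C₁ ^ 2 + X' ^ 2 = Real.sqrt (C₁ ^ 2 + X' ^ 2) ^ 2 := hs.symm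
        _ < ‖z‖ ^ 2 := by
          have hm := mul_self_lt_mul_self (Real.sqrt_nonneg (C₁ ^ 2 + X' ^ 2)) h6'
          calc Real.sqrt (C₁ ^ 2 + X' ^ 2) ^ 2
              = Real.sqrt (C₁ ^ 2 + X' ^ 2) * Real.sqrt (C₁ ^ 2 + X' ^ 2) := by ring
            _ < ‖z‖ * ‖z‖ := hm
            _ = ‖z‖ ^ 2 := by ring
    have h7 : X' ^ 2 < ζ.re ^ 2 := by
      have him2 : ζ.im ^ 2 ≤ C₁ ^ 2 := by
        rw [← _root_.sq_abs ζ.im]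
        exact pow_le_pow_left₀ (abs_nonneg _) him 2
      linarith
    have h8 : X' < ζ.re := by
      have h9 : X' < |ζ.re| :=
        lt_of_pow_lt_pow_left₀ 2 (abs_nonneg ζ.re) (by rw [_root_.sq_abs]; exact h7)
      rcases abs_cases ζ.re with ⟨hc1, _⟩ | ⟨hc1, _⟩
      · linarith
      · exfalso
        have h10 : |m₀| + 1 ≤ X' := le_max_right _ _
        have h11 := neg_abs_le m₀
        linarith
    have hXζ : X ≤ ζ.re := le_trans (le_max_left _ _) h8.le
    constructor
    · calc ‖E z‖ ≤ ∑ s ∈ A,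
          ‖(δ s / δ r) * Complex.exp (z * (conj (γ s) - conj (γ r)))‖ := by
            rw [hE]; exact norm_sum_le _ _
        _ = ∑ s ∈ A, ‖δ s / δ r‖ *
            Real.exp ((ζ * (e * (conj (γ s) - conj (γ r)))).re) := by
          refine Finset.sum_congr rfl (fun s _ => ?_)
          rw [norm_mul, Complex.norm_exp]
          congr 2
          rw [hze]; ring_nf
        _ ≤ ζE := hX₁ ζ (le_trans (le_max_left _ _) hXζ) him
    · calc ‖E' z‖ ≤ ∑ s ∈ A,
          ‖(δ s / δ r * (conj (γ s) - conj (γ r))) *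
            Complex.exp (z * (conj (γ s) - conj (γ r)))‖ := by
            rw [hE']; exact norm_sum_le _ _
        _ = ∑ s ∈ A, ‖δ s / δ r * (conj (γ s) - conj (γ r))‖ *
            Real.exp ((ζ * (e * (conj (γ s) - conj (γ r)))).re) := by
          refine Finset.sum_congr rfl (fun s _ => ?_)
          rw [norm_mul, Complex.norm_exp]
          congr 2
          rw [hze]; ring_nf
        _ ≤ ζE' := hX₂ ζ (le_trans (le_max_right _ _) hXζ) him
  have hEhalf : ∀ x : ℂ, ‖E x‖ ≤ ζE → (1 : ℂ) + E x ≠ 0 := by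
    intro x hx h0
    have h1 : E x = -1 := by linear_combination h0
    rw [h1] at hx
    simp only [norm_neg, norm_one] at hx
    have := min_le_right ζ₀ (1/2 : ℝ)
    rw [hζE] at hx
    linarith [le_trans hx this]
  refine ⟨T, by positivity, ?_, ?_⟩
  · -- direction (i): zeros of F are near zeros of G
    intro z hFz hTz hhalf hstrip
    have h1 : |(z * conj c).re| ≤ C₀ := by
      have h2 := abs_sub_abs_le_abs_sub ((z * conj c).re) k
      rw [hC₀]
      have := norm_nonneg c
      linarith [hstrip, h2]
    obtain ⟨hEz, -⟩ := hzeta z (by rw [hT] at hTz; linarith) (by linarith) h1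
    have hbr : 1 + u * Complex.exp (z * a) + E z = 0 := by
      have h3 := (keyF z).symm.trans hFz
      rcases mul_eq_zero.mp h3 with h4 | h4
      · exact absurd h4 (mul_ne_zero hδr (Complex.exp_ne_zero _))
      · exact h4
    have hEne := hEhalf z hEz
    have huea : u * Complex.exp (z * a) = -(1 + E z) := by linear_combination hbr
    refine ⟨z - Complex.log (1 + E z) / a, ?_, ?_⟩
    · rw [keyG]
      have hexp : Complex.exp ((z - Complex.log (1 + E z) / a - z) * a) = (1 + E z)⁻¹ := by
        have h5 : (z - Complex.log (1 + E z) / a - z) * a = -Complex.log (1 + E z) := by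
          field_simp
          ring
        rw [h5, Complex.exp_neg, Complex.exp_log hEne]
      have h6 : u * Complex.exp ((z - Complex.log (1 + E z) / a) * a) = -1 := by
        have h7 : (z - Complex.log (1 + E z) / a) * a =
            z * a + (z - Complex.log (1 + E z) / a - z) * a := by ring
        rw [h7, Complex.exp_add, ← mul_assoc, huea, hexp]
        field_simp
      rw [h6]
      ring
    · have h8 : z - (z - Complex.log (1 + E z) / a) = Complex.log (1 + E z) / a := by ring
      rw [h8, norm_div]
      have h9 := hζ₀ (E z) (le_trans hEz (min_le_left _ _))
      rw [div_lt_iff₀ habs_a]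
      have : ρ * ‖a‖ ≤ η / 2 * ‖a‖ :=
        mul_le_mul_of_nonneg_right hρη habs_a.le
      calc ‖Complex.log (1 + E z)‖ < ρ * ‖a‖ := h9
        _ ≤ η / 2 * ‖a‖ := this
        _ ≤ η * ‖a‖ :=
          mul_le_mul_of_nonneg_right (by linarith) habs_a.le
  · -- direction (ii): zeros of G attract zeros of F
    intro w hGw hTw hhalf
    have hbrG : 1 + u * Complex.exp (w * a) = 0 := by
      have h3 := (keyG w).symm.trans hGw
      rcases mul_eq_zero.mp h3 with h4 | h4
      · exact absurd h4 (mul_ne_zero hδr (Complex.exp_ne_zero _))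
      · exact h4
    have huw : u * Complex.exp (w * a) = -1 := by linear_combination hbrG
    have habs1 : ‖u‖ * Real.exp ((w * a).re) = 1 := by
      have h5 := congrArg norm huw
      rwa [norm_mul, Complex.norm_exp, norm_neg, norm_one] at h5
    have hu0 : ‖u‖ ≠ 0 := by
      intro h0
      rw [h0, zero_mul] at habs1
      norm_num at habs1
    have hwa : (w * a).re = -k := by
      have h6 := congrArg Real.log habs1
      rw [Real.log_mul hu0 (Real.exp_ne_zero _), Real.log_exp, Real.log_one] at h6
      have h7 : k = Real.log (‖u‖) := by rw [hk, hu, norm_div]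
      linarith [h6, h7 ▸ h6]
    have hwc : (w * conj c).re = k := by
      have h8 : w * conj c = -(w * a) := by
        rw [hc, ha, map_sub]; ring
      rw [h8, Complex.neg_re, hwa, neg_neg]
    -- the closed ball
    set S : Set ℂ := Metric.closedBall w ρ with hS
    have hmemS : ∀ z ∈ S, T₀ < ‖z‖ ∧ (-1 : ℝ) ≤ ((z - γ r) * conj e).re ∧
        |(z * conj c).re| ≤ C₀ := by
      intro z hz
      rw [hS, Metric.mem_closedBall, Complex.dist_eq] at hz
      refine ⟨?_, ?_, ?_⟩
      · have h9 : ‖w‖ - ‖z‖ ≤ ‖z - w‖ := by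
          have h := norm_sub_norm_le w z
          rwa [norm_sub_rev] at h
        rw [hT] at hTw
        linarith
      · have h10 : (z - γ r) * conj e = (w - γ r) * conj e + (z - w) * conj e := by ring
        have h11 : |((z - w) * conj e).re| ≤ ‖z - w‖ := by
          calc |((z - w) * conj e).re| ≤ ‖(z - w) * conj e‖ :=
                Complex.abs_re_le_norm _
            _ = ‖z - w‖ := by rw [norm_mul, Complex.norm_conj, he, mul_one]
        have h12 := neg_abs_le ((z - w) * conj e).re
        rw [h10, Complex.add_re]
        linarith
      · have h13 : (z * conj c).re = (w * conj c).re + ((z - w) * conj c).re := by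
          rw [show z * conj c = w * conj c + (z - w) * conj c by ring, Complex.add_re]
        have h14 : |((z - w) * conj c).re| ≤ ‖c‖ := by
          calc |((z - w) * conj c).re| ≤ ‖(z - w) * conj c‖ :=
                Complex.abs_re_le_norm _
            _ = ‖z - w‖ * ‖c‖ := by rw [norm_mul, Complex.norm_conj]
            _ ≤ 1 * ‖c‖ := by
              apply mul_le_mul_of_nonneg_right (le_trans hz hρ1) (norm_nonneg c)
            _ = ‖c‖ := one_mul _
        rw [hC₀]
        have h15 := abs_add_le ((w * conj c).re) (((z - w) * conj c).re)
        rw [h13]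
        calc |(w * conj c).re + ((z - w) * conj c).re| ≤
            |(w * conj c).re| + |((z - w) * conj c).re| := h15
          _ ≤ |k| + ‖c‖ := by rw [hwc]; linarith
          _ ≤ |k| + ε + ‖c‖ + 1 := by linarith
      -- done hmemS
    have hES : ∀ z ∈ S, ‖E z‖ ≤ ζE ∧ ‖E' z‖ ≤ ζE' := by
      intro z hz
      obtain ⟨q1, q2, q3⟩ := hmemS z hz
      exact hzeta z q1 q2 q3
    set Φ : ℂ → ℂ := fun z => w + Complex.log (1 + E z) / a with hΦ
    have hmaps : Set.MapsTo Φ S S := by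
      intro z hz
      rw [hS, Metric.mem_closedBall, Complex.dist_eq]
      have hEz := (hES z hz).1
      have h16 : Φ z - w = Complex.log (1 + E z) / a := by rw [hΦ]; ring
      rw [h16, norm_div]
      have h17 := hζ₀ (E z) (le_trans hEz (min_le_left _ _))
      rw [div_le_iff₀ habs_a]
      linarith
    have hderivE : ∀ z : ℂ, HasDerivAt E (E' z) z := by
      intro z
      rw [hE, hE']
      apply HasDerivAt.fun_sum
      intro s _
      have h18 : HasDerivAt (fun y : ℂ => y * (conj (γ s) - conj (γ r)))
          (conj (γ s) - conj (γ r)) z := by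
        simpa using (hasDerivAt_id z).mul_const (conj (γ s) - conj (γ r))
      have h19 := (h18.cexp).const_mul (δ s / δ r)
      convert h19 using 1
      · rfl
      ring
    have hΦderiv : ∀ z ∈ S, HasDerivWithinAt Φ (E' z / (1 + E z) / a) S z := by
      intro z hz
      have hEz := (hES z hz).1
      have hE2 : ‖E z‖ ≤ 1 / 2 := le_trans hEz (min_le_right _ _)
      have hsp : (1 : ℂ) + E z ∈ Complex.slitPlane := by
        rw [Complex.mem_slitPlane_iff]
        left
        have h20 : |(E z).re| ≤ ‖E z‖ := Complex.abs_re_le_norm _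
        have h21 := neg_abs_le (E z).re
        have h22 : ((1 : ℂ) + E z).re = 1 + (E z).re := by simp
        rw [h22]
        linarith
      have h23 : HasDerivAt (fun y => (1 : ℂ) + E y) (E' z) z := (hderivE z).const_add 1
      have h24 : HasDerivAt (fun y => Complex.log (1 + E y)) ((1 + E z)⁻¹ * E' z) z :=
        HasDerivAt.comp (h := fun y => (1 : ℂ) + E y) z (Complex.hasDerivAt_log hsp) h23
      have h25 : HasDerivAt Φ (E' z / (1 + E z) / a) z := by
        have h26 := (h24.div_const a).const_add w
        convert h26 using 1
        · rfl
        · rfl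
        ring
      exact h25.hasDerivWithinAt
    have hΦbound : ∀ z ∈ S, ‖E' z / (1 + E z) / a‖ ≤ 1 / 2 := by
      intro z hz
      obtain ⟨hEz, hE'z⟩ := hES z hz
      have hE2 : ‖E z‖ ≤ 1 / 2 := le_trans hEz (min_le_right _ _)
      have h27 : (1 : ℝ) / 2 ≤ ‖1 + E z‖ := by
        have h28 : ‖(1 + E z) + -(E z)‖ ≤ ‖1 + E z‖ +
            ‖E z‖ := by
          simpa using norm_add_le (1 + E z) (-(E z))
        have h29 : (1 + E z) + -(E z) = 1 := by ring
        rw [h29, norm_one] at h28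
        linarith
      have h30 : 0 < ‖1 + E z‖ := lt_of_lt_of_le one_half_pos h27
      rw [norm_div, norm_div, div_div,
        div_le_iff₀ (mul_pos h30 habs_a)]
      rw [hζE'] at hE'z
      have h31 := mul_nonneg (sub_nonneg.mpr h27) habs_a.le
      have h32 : (‖1 + E z‖ - 1 / 2) * ‖a‖ =
          ‖1 + E z‖ * ‖a‖ - ‖a‖ / 2 := by ring
      rw [h32] at h31
      linarith [habs_a.le]
    have hlipΦ : ∀ x ∈ S, ∀ y ∈ S, ‖Φ y - Φ x‖ ≤ 1 / 2 * ‖y - x‖ := fun x hx y hy =>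
      Convex.norm_image_sub_le_of_norm_hasDerivWithin_le hΦderiv hΦbound
        (convex_closedBall w ρ) hx hy
    haveI : Nonempty ↥S := ⟨⟨w, Metric.mem_closedBall_self hρ0.le⟩⟩
    haveI : CompleteSpace ↥S := Metric.isClosed_closedBall.completeSpace_coe
    set Φ' : ↥S → ↥S := fun x => ⟨Φ x, hmaps x.2⟩ with hΦ'
    have hcontr : ContractingWith (1 / 2 : NNReal) Φ' := by
      constructor
      · exact NNReal.half_lt_self one_ne_zero
      · apply LipschitzWith.of_dist_le_mul
        intro x y
        have h31 := hlipΦ (y : ℂ) y.2 (x : ℂ) x.2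
        rw [Subtype.dist_eq]
        have h32 : dist ((Φ' x : ↥S) : ℂ) ((Φ' y : ↥S) : ℂ) = ‖Φ (x : ℂ) - Φ (y : ℂ)‖ := by
          rw [hΦ']
          exact dist_eq_norm _ _
        rw [h32, Subtype.dist_eq, dist_eq_norm]
        push_cast
        linarith
    set x₀ : ↥S := ContractingWith.fixedPoint Φ' hcontr with hx₀
    have hfix : Φ' x₀ = x₀ := hcontr.fixedPoint_isFixedPt
    set z₀ : ℂ := (x₀ : ℂ) with hz₀def
    have hz₀S : z₀ ∈ S := x₀.2
    have hz₀fix : Φ z₀ = z₀ := congrArg Subtype.val hfix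
    obtain ⟨hEz₀, -⟩ := hES z₀ hz₀S
    have hEne₀ := hEhalf z₀ hEz₀
    have hexp₀ : Complex.exp ((z₀ - w) * a) = 1 + E z₀ := by
      have h33 : z₀ - w = Complex.log (1 + E z₀) / a := by
        conv_lhs => rw [← hz₀fix]
        rw [hΦ]; ring
      rw [h33, div_mul_cancel₀ _ ha0, Complex.exp_log hEne₀]
    have h34 : u * Complex.exp (z₀ * a) = -(1 + E z₀) := by
      have h35 : z₀ * a = w * a + (z₀ - w) * a := by ring
      rw [h35, Complex.exp_add, ← mul_assoc, huw, hexp₀]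
      ring
    have hFz₀ : F z₀ = 0 := by
      rw [keyF]
      have h36 : 1 + u * Complex.exp (z₀ * a) + E z₀ = 0 := by
        rw [h34]; ring
      rw [h36, mul_zero]
    refine ⟨z₀, hFz₀, ?_⟩
    have h37 : ‖z₀ - w‖ ≤ ρ := by
      have := hz₀S
      rw [hS, Metric.mem_closedBall, Complex.dist_eq] at this
      exact this
    linarith
end

section
/- Assume the data is generic. Then there exists T > 0 such that every zero of F of modulus greater than T is simple: for all z ∈ ℂ, if F(z) = 0 and |z| > T then F'(z) ≠ 0. -/
open Complex ComplexConjugate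

/-- The real-linear functional `x ↦ (u * conj x).re`. -/
noncomputable def ell (u : ℂ) : ℂ →ₗ[ℝ] ℝ where
  toFun x := (u * conj x).re
  map_add' x y := by simp [map_add, mul_add]
  map_smul' r x := by
    simp [Complex.real_smul, mul_comm, mul_left_comm, Complex.mul_re]
    ring

lemma ell_apply (u x : ℂ) : ell u x = (u * conj x).re := rfl

/-- A point of `K` attaining the supporting maximum lies in the frontier of `K`. -/
lemma mem_frontier_of_max_s5 {R : ℕ} (γ : Fin R → ℂ) (K : Set ℂ)
    (hK : K = convexHull ℝ (Set.range γ)) (u : ℂ) (hu : u ≠ 0)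
    (m : Fin R) (hm : ∀ s, (u * conj (γ s)).re ≤ (u * conj (γ m)).re) :
    γ m ∈ frontier K := by
  have hmemK : γ m ∈ K := by
    rw [hK]; exact subset_convexHull ℝ _ ⟨m, rfl⟩
  have hbound : ∀ x ∈ K, ell u x ≤ ell u (γ m) := by
    intro x hx
    rw [hK] at hx
    have hconv : Convex ℝ {x : ℂ | ell u x ≤ ell u (γ m)} :=
      convex_halfSpace_le (LinearMap.isLinear (ell u)) _
    have hsub : Set.range γ ⊆ {x : ℂ | ell u x ≤ ell u (γ m)} := by
      rintro _ ⟨s, rfl⟩; exact hm s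
    exact convexHull_min hsub hconv hx
  constructor
  · exact subset_closure hmemK
  · -- γ m ∉ interior K
    intro hint
    rw [mem_interior_iff_mem_nhds, Metric.mem_nhds_iff] at hint
    obtain ⟨ε, hε, hball⟩ := hint
    set s : ℝ := ε / (2 * (‖u‖ + 1)) with hs
    have habs : 0 < ‖u‖ := by simpa using hu
    have hspos : 0 < s := by positivity
    have hmem : γ m + (s : ℂ) * u ∈ K := by
      apply hball
      rw [Metric.mem_ball]
      have : dist (γ m + (s : ℂ) * u) (γ m) = s * ‖u‖ := by
        simp [dist_eq, Complex.norm_real, abs_of_pos hspos, norm_mul]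
      rw [this, hs]
      rw [div_mul_eq_mul_div, div_lt_iff₀ (by positivity)]
      nlinarith
    · have := hbound _ hmem
      rw [ell_apply, ell_apply] at this
      have hnormsq : (u * conj ((s:ℂ) * u)).re = s * Complex.normSq u := by
        simp [map_mul, Complex.mul_re, Complex.conj_re, Complex.conj_im, Complex.normSq_apply]
        ring
      rw [map_add, mul_add, Complex.add_re, hnormsq] at this
      have : s * Complex.normSq u ≤ 0 := by linarith
      have h2 : 0 < Complex.normSq u := Complex.normSq_pos.2 hu
      nlinarith

/-- Collinearity representation. -/
lemma collin_rep (u a : ℂ) (h0 : (u * conj a).re = 0) (hu : u ≠ 0) :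
    a = ((a / (I*u)).re : ℝ) * (I*u) := by
  have hw : I * u ≠ 0 := mul_ne_zero I_ne_zero hu
  have him : (a / (I*u)).im = 0 := by
    have h0' : u.re * a.re + u.im * a.im = 0 := by
      simpa [Complex.mul_re, Complex.conj_re, Complex.conj_im] using h0
    have key : a.im * (I*u).re = a.re * (I*u).im := by
      simp only [Complex.mul_re, Complex.mul_im, Complex.I_re, Complex.I_im]
      nlinarith [h0']
    rw [Complex.div_im, key]
    ring
  have : a / (I*u) = ((a / (I*u)).re : ℂ) := by
    apply Complex.ext <;> simp [him]
  calc a = (a / (I*u)) * (I*u) := by field_simp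
  _ = ((a / (I*u)).re : ℝ) * (I*u) := by rw [← this]

/-- If three points with distinct parameters lie on a supporting line with the middle one a
`γ`-point attaining the max, genericity is violated. -/
lemma seg_contra {R : ℕ} (γ : Fin R → ℂ) (K : Set ℂ)
    (hK : K = convexHull ℝ (Set.range γ))
    (hgen : ∀ r, γ r ∈ frontier K → γ r ∈ Set.extremePoints ℝ K)
    (u : ℂ) (hu : u ≠ 0) (m p q : Fin R) (tm tp tq : ℝ)
    (hm : ∀ s, (u * conj (γ s)).re ≤ (u * conj (γ m)).re)
    (em : γ m = γ m + ((tm:ℂ) - (tm:ℂ)) * (I*u))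
    (ep : γ p = γ m + ((tp:ℂ) - (tm:ℂ)) * (I*u))
    (eq' : γ q = γ m + ((tq:ℂ) - (tm:ℂ)) * (I*u))
    (h1 : tp < tm) (h2 : tm < tq) : False := by
  have hw : I * u ≠ 0 := mul_ne_zero I_ne_zero hu
  have hmemK : ∀ s, γ s ∈ K := fun s => by
    rw [hK]; exact subset_convexHull ℝ _ ⟨s, rfl⟩
  have hfr : γ m ∈ frontier K := mem_frontier_of_max_s5 γ K hK u hu m hm
  have hext := hgen m hfr
  rw [mem_extremePoints] at hext
  set σ : ℝ := (tq - tm)/(tq - tp) with hσ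
  have hden : (0:ℝ) < tq - tp := by linarith
  have hσ0 : 0 < σ := div_pos (by linarith) hden
  have hσ1 : σ < 1 := by
    rw [hσ, div_lt_one hden]; linarith
  have hseg : γ m ∈ openSegment ℝ (γ p) (γ q) := by
    refine ⟨σ, 1 - σ, hσ0, by linarith, by ring, ?_⟩
    rw [ep, eq']
    have hcoef : σ * (tp - tm) + (1 - σ) * (tq - tm) = 0 := by
      rw [hσ]
      field_simp
      ring
    have hcoefC : (σ:ℂ) * (tp - tm) + (1 - σ) * (tq - tm) = 0 := by
      have := congrArg (fun x : ℝ => (x : ℂ)) hcoef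
      push_cast at this
      push_cast
      linear_combination this
    simp only [Complex.real_smul]
    push_cast
    linear_combination (I*u) * hcoefC
  obtain ⟨hp, -⟩ := hext.2 (γ p) (hmemK p) (γ q) (hmemK q) hseg
  have : γ p ≠ γ m := by
    rw [ep]
    intro h
    have : ((tp:ℂ) - tm) * (I*u) = 0 := by linear_combination h
    rcases mul_eq_zero.1 this with h' | h'
    · have h'' : (tp:ℂ) = (tm:ℂ) := by linear_combination h'
      have : tp = tm := by exact_mod_cast h''
      linarith
    · exact hw h'
  exact this hp

/-- Genericity: no three distinct indices attain the supporting maximum in direction `u`. -/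
lemma no_three {R : ℕ} (γ : Fin R → ℂ) (hγ : Function.Injective γ) (K : Set ℂ)
    (hK : K = convexHull ℝ (Set.range γ))
    (hgen : ∀ r, γ r ∈ frontier K → γ r ∈ Set.extremePoints ℝ K)
    (u : ℂ) (hu : u ≠ 0) (j k l : Fin R) (hjk : j ≠ k) (hjl : j ≠ l) (hkl : k ≠ l)
    (hj : ∀ s, (u * conj (γ s)).re ≤ (u * conj (γ j)).re)
    (hk : (u * conj (γ k)).re = (u * conj (γ j)).re)
    (hl : (u * conj (γ l)).re = (u * conj (γ j)).re) : False := by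
  have hw : I * u ≠ 0 := mul_ne_zero I_ne_zero hu
  set t : Fin R → ℝ := fun r => ((γ r - γ j) / (I*u)).re with ht
  have rep : ∀ r, (u * conj (γ r)).re = (u * conj (γ j)).re → γ r = γ j + (t r : ℝ) * (I*u) := by
    intro r hr
    have h0 : (u * conj (γ r - γ j)).re = 0 := by
      rw [map_sub, mul_sub, Complex.sub_re, hr]; ring
    have := collin_rep u (γ r - γ j) h0 hu
    rw [ht]
    simp only
    linear_combination this
  have repj : γ j = γ j + (t j : ℝ) * (I*u) := by
    have : t j = 0 := by simp [ht]
    rw [this]; simp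
  have repk := rep k hk
  have repl := rep l hl
  -- the parameters are pairwise distinct
  have tinj : ∀ r s : Fin R, γ r = γ j + (t r : ℝ) * (I*u) → γ s = γ j + (t s : ℝ) * (I*u) →
      r ≠ s → t r ≠ t s := by
    intro r s er es hrs hts
    apply hrs
    apply hγ
    rw [er, es, hts]
  have seg' : ∀ m p q : Fin R, γ m = γ j + (t m : ℝ) * (I*u) → γ p = γ j + (t p : ℝ) * (I*u) →
      γ q = γ j + (t q : ℝ) * (I*u) →
      (∀ s, (u * conj (γ s)).re ≤ (u * conj (γ m)).re) →
      t p < t m → t m < t q → False := by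
    intro m p q em ep eq'' hmm h1 h2
    have em' : γ m = γ m + ((t m : ℂ) - (t m : ℂ)) * (I*u) := by simp
    have ep' : γ p = γ m + ((t p : ℂ) - (t m : ℂ)) * (I*u) := by
      rw [ep, em]; ring_nf
    have eq2 : γ q = γ m + ((t q : ℂ) - (t m : ℂ)) * (I*u) := by
      rw [eq'', em]; ring_nf
    exact seg_contra γ K hK hgen u hu m p q (t m) (t p) (t q) hmm em' ep' eq2 h1 h2
  have hmk : ∀ s, (u * conj (γ s)).re ≤ (u * conj (γ k)).re := fun s => hk ▸ hj s
  have hml : ∀ s, (u * conj (γ s)).re ≤ (u * conj (γ l)).re := fun s => hl ▸ hj s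
  have d1 : t j ≠ t k := tinj j k repj repk hjk
  have d2 : t j ≠ t l := tinj j l repj repl hjl
  have d3 : t k ≠ t l := tinj k l repk repl hkl
  rcases lt_or_gt_of_ne d1 with h1 | h1 <;> rcases lt_or_gt_of_ne d2 with h2 | h2 <;>
    rcases lt_or_gt_of_ne d3 with h3 | h3
  · exact seg' k j l repk repj repl hmk h1 h3
  · exact seg' l j k repl repj repk hml h2 h3
  · linarith
  · exact seg' j l k repj repl repk hj h2 h1
  · exact seg' j k l repj repk repl hj h1 h2
  · linarith
  · exact seg' l k j repl repk repj hml h3 h2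
  · exact seg' k l j repk repl repj hmk h3 h1

/-- Uniform third-term gap on the unit circle. -/
lemma exists_c0 {R : ℕ} (hR : 2 ≤ R) (γ : Fin R → ℂ) (hγ : Function.Injective γ) (K : Set ℂ)
    (hK : K = convexHull ℝ (Set.range γ))
    (hgen : ∀ r, γ r ∈ frontier K → γ r ∈ Set.extremePoints ℝ K) :
    ∃ c : ℝ, 0 < c ∧ ∀ u : ℂ, ‖u‖ = 1 → ∀ j k l : Fin R,
      j ≠ k → j ≠ l → k ≠ l →
      (∀ s, (u * conj (γ s)).re ≤ (u * conj (γ j)).re) →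
      c ≤ max ((u * conj (γ j)).re - (u * conj (γ k)).re)
             ((u * conj (γ j)).re - (u * conj (γ l)).re) := by
  haveI : NeZero R := ⟨by omega⟩
  have hne : (Finset.univ : Finset (Fin R)).Nonempty := Finset.univ_nonempty
  set f : Fin R → ℂ → ℝ := fun r u => (u * conj (γ r)).re with hf
  have contf : ∀ r, Continuous (f r) := fun r =>
    Complex.continuous_re.comp (continuous_id.mul continuous_const)
  set M : ℂ → ℝ := fun u => Finset.univ.sup' hne (fun r => f r u) with hM
  have contM : Continuous M := Continuous.finset_sup'_apply hne (fun r _ => contf r)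
  have hfleM : ∀ r u, f r u ≤ M u := fun r u => Finset.le_sup' (fun s => f s u) (Finset.mem_univ r)
  -- per-triple constants
  have key : ∀ p : Fin R × Fin R × Fin R, ∃ c : ℝ, 0 < c ∧
      (p.1 ≠ p.2.1 → p.1 ≠ p.2.2 → p.2.1 ≠ p.2.2 →
        ∀ u : ℂ, ‖u‖ = 1 →
          c ≤ max (M u - f p.1 u) (max (M u - f p.2.1 u) (M u - f p.2.2 u))) := by
    rintro ⟨j, k, l⟩
    by_cases hd : j ≠ k ∧ j ≠ l ∧ k ≠ l
    · obtain ⟨hjk, hjl, hkl⟩ := hd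
      set g : ℂ → ℝ := fun u => max (M u - f j u) (max (M u - f k u) (M u - f l u)) with hg
      have contg : Continuous g :=
        ((contM.sub (contf j)).max ((contM.sub (contf k)).max (contM.sub (contf l))))
      have hcsph : IsCompact (Metric.sphere (0:ℂ) 1) := isCompact_sphere 0 1
      have hsne : (Metric.sphere (0:ℂ) 1).Nonempty := ⟨1, by simp⟩
      obtain ⟨u₀, hu₀, hmin⟩ := hcsph.exists_isMinOn hsne contg.continuousOn
      have hu₀abs : ‖u₀‖ = 1 := by
        simpa [Complex.dist_eq] using hu₀
      have hu₀ne : u₀ ≠ 0 := by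
        intro h; rw [h] at hu₀abs; simp at hu₀abs
      have hgpos : 0 < g u₀ := by
        by_contra hle
        push_neg at hle
        have h1 : M u₀ - f j u₀ ≤ 0 ∧ (M u₀ - f k u₀ ≤ 0 ∧ M u₀ - f l u₀ ≤ 0) := by
          constructor
          · exact le_trans (le_max_left _ _) hle
          constructor
          · exact le_trans (le_trans (le_max_left _ _) (le_max_right _ _)) hle
          · exact le_trans (le_trans (le_max_right _ _) (le_max_right _ _)) hle
        obtain ⟨e1, e2, e3⟩ := h1
        have hj' : f j u₀ = M u₀ := le_antisymm (hfleM j u₀) (by linarith)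
        have hk' : f k u₀ = M u₀ := le_antisymm (hfleM k u₀) (by linarith)
        have hl' : f l u₀ = M u₀ := le_antisymm (hfleM l u₀) (by linarith)
        apply no_three γ hγ K hK hgen u₀ hu₀ne j k l hjk hjl hkl
        · intro s
          show f s u₀ ≤ f j u₀
          rw [hj']; exact hfleM s u₀
        · show f k u₀ = f j u₀
          rw [hk', hj']
        · show f l u₀ = f j u₀
          rw [hl', hj']
      refine ⟨g u₀, hgpos, fun _ _ _ u hu => ?_⟩
      have : u ∈ Metric.sphere (0:ℂ) 1 := by simp [Complex.dist_eq, hu]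
      exact hmin this
    · exact ⟨1, one_pos, fun h1 h2 h3 => by tauto⟩
  choose c hc using key
  have hune : (Finset.univ : Finset (Fin R × Fin R × Fin R)).Nonempty := Finset.univ_nonempty
  refine ⟨Finset.univ.inf' hune c, ?_, ?_⟩
  · rw [Finset.lt_inf'_iff]
    exact fun p _ => (hc p).1
  · intro u hu j k l hjk hjl hkl hjmax
    have hMj : M u = f j u := le_antisymm (Finset.sup'_le _ _ (fun r _ => hjmax r)) (hfleM j u)
    have := (hc (j, k, l)).2 hjk hjl hkl u hu
    have hle : Finset.univ.inf' hune c ≤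
        max (M u - f j u) (max (M u - f k u) (M u - f l u)) :=
      le_trans (Finset.inf'_le c (Finset.mem_univ (j, k, l))) this
    rw [hMj] at hle
    simp only [sub_self] at hle
    rcases le_max_iff.1 hle with h | h
    · exfalso
      have hpos : 0 < Finset.univ.inf' hune c := by
        rw [Finset.lt_inf'_iff]; exact fun p _ => (hc p).1
      linarith
    · exact h

/-- In the generic case all zeros of `F` of sufficiently large modulus are
simple. -/
theorem large_zeros_are_simple
    {R : ℕ} (hR : 2 ≤ R) (γ δ : Fin R → ℂ)
    (hγ : Function.Injective γ) (hδ : ∀ r, δ r ≠ 0)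
    (F : ℂ → ℂ)
    (hF : ∀ z, F z = ∑ r, δ r * Complex.exp (z * conj (γ r)))
    (K : Set ℂ) (hK : K = convexHull ℝ (Set.range γ))
    (hgen : ∀ r, γ r ∈ frontier K → γ r ∈ Set.extremePoints ℝ K) :
    ∃ T : ℝ, 0 < T ∧ ∀ z : ℂ, F z = 0 → T < ‖z‖ → deriv F z ≠ 0 := by
  haveI : NeZero R := ⟨by omega⟩
  have hne : (Finset.univ : Finset (Fin R)).Nonempty := Finset.univ_nonempty
  obtain ⟨c0, hc0pos, hc0⟩ := exists_c0 hR γ hγ K hK hgen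
  -- constants
  set dm : ℝ := Finset.univ.inf' hne (fun r => ‖δ r‖) with hdm
  have hdmpos : 0 < dm := by
    rw [hdm, Finset.lt_inf'_iff]
    intro r _
    simpa using hδ r
  have hdmle : ∀ r, dm ≤ ‖δ r‖ := by
    intro r
    rw [hdm]
    exact Finset.inf'_le _ (Finset.mem_univ r)
  set Sd : ℝ := ∑ r, ‖δ r‖ with hSd
  have hSdpos : 0 < Sd := by
    rw [hSd]
    apply Finset.sum_pos (fun r _ => by simpa using hδ r) hne
  have hdmSd : dm ≤ Sd := by
    refine le_trans (hdmle ⟨0, by omega⟩) ?_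
    rw [hSd]
    exact Finset.single_le_sum (f := fun r => ‖δ r‖) (fun s _ => norm_nonneg _) (Finset.mem_univ _)
  set L : ℝ := Real.log (Sd / dm) with hL
  have hLnn : 0 ≤ L := Real.log_nonneg ((one_le_div hdmpos).2 hdmSd)
  set Γm : ℝ := Finset.univ.sup' hne (fun r => ‖γ r‖) with hΓ
  have hΓle : ∀ r, ‖γ r‖ ≤ Γm := by
    intro r
    rw [hΓ]
    exact Finset.le_sup' (fun s => ‖γ s‖) (Finset.mem_univ r)
  have hΓnn : 0 ≤ Γm := le_trans (norm_nonneg _) (hΓle ⟨0, by omega⟩)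
  set B : ℝ := 2 * Γm + 1 with hB
  have hBpos : 0 < B := by positivity
  have hdiff_le : ∀ r s : Fin R, ‖conj (γ r) - conj (γ s)‖ ≤ B := by
    intro r s
    rw [← map_sub]
    rw [Complex.norm_conj]
    calc ‖γ r - γ s‖ ≤ ‖γ r‖ + ‖γ s‖ := by
          exact norm_sub_le _ _
    _ ≤ B := by rw [hB]; have := hΓle r; have := hΓle s; linarith
  -- minimal pairwise distance
  have hPne : (Finset.univ : Finset (Fin R × Fin R)).Nonempty := Finset.univ_nonempty
  set dmin : ℝ := (Finset.univ : Finset (Fin R × Fin R)).inf' hPne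
      (fun p => if p.1 = p.2 then B else ‖γ p.1 - γ p.2‖) with hdmin
  have hdminpos : 0 < dmin := by
    rw [hdmin, Finset.lt_inf'_iff]
    rintro ⟨r, s⟩ -
    by_cases h : r = s
    · simpa [h] using hBpos
    · have hne' : γ r - γ s ≠ 0 := sub_ne_zero.2 (fun hh => h (hγ hh))
      simpa [h] using hne'
  have hdminle : ∀ r s : Fin R, r ≠ s → dmin ≤ ‖γ r - γ s‖ := by
    intro r s hrs
    have := Finset.inf'_le (s := (Finset.univ : Finset (Fin R × Fin R)))
      (fun p => if p.1 = p.2 then B else ‖γ p.1 - γ p.2‖) (Finset.mem_univ (r, s))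
    rw [hdmin]
    exact this.trans (by simp [hrs])
  have hdminB : dmin ≤ B := by
    have := Finset.inf'_le (s := (Finset.univ : Finset (Fin R × Fin R)))
      (fun p => if p.1 = p.2 then B else ‖γ p.1 - γ p.2‖)
      (Finset.mem_univ ((⟨0, by omega⟩ : Fin R), (⟨0, by omega⟩ : Fin R)))
    rw [hdmin]
    exact this.trans (by simp)
  set L2 : ℝ := Real.log (Sd * B / (dm * dmin)) with hL2
  have hL2nn : 0 ≤ L2 := by
    apply Real.log_nonneg
    rw [le_div_iff₀ (by positivity)]
    nlinarith
  refine ⟨(L + L2) / c0 + 1, by positivity, ?_⟩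
  intro z hFz hTz
  have hzpos : 0 < ‖z‖ := by
    have : (0:ℝ) < (L + L2)/c0 + 1 := by positivity
    linarith
  have hz0 : z ≠ 0 := by
    intro h; rw [h] at hzpos; simp at hzpos
  have hc0z : L + L2 + c0 ≤ c0 * ‖z‖ := by
    have h1 : (L + L2)/c0 + 1 ≤ ‖z‖ := le_of_lt hTz
    calc L + L2 + c0 = c0 * ((L + L2)/c0 + 1) := by field_simp
    _ ≤ c0 * ‖z‖ := by
        apply mul_le_mul_of_nonneg_left h1 (le_of_lt hc0pos)
  -- exponents
  set g : Fin R → ℝ := fun r => (z * conj (γ r)).re with hg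
  have habsE : ∀ r, ‖Complex.exp (z * conj (γ r))‖ = Real.exp (g r) := by
    intro r
    rw [Complex.norm_exp, hg]
  obtain ⟨j, -, hjmax⟩ := Finset.exists_max_image Finset.univ g hne
  have hjmax' : ∀ s, g s ≤ g j := fun s => hjmax s (Finset.mem_univ s)
  have hej : (Finset.univ.erase j).Nonempty := by
    rw [← Finset.card_pos, Finset.card_erase_of_mem (Finset.mem_univ j), Finset.card_univ,
      Fintype.card_fin]
    omega
  obtain ⟨k, hkmem, hkmax⟩ := Finset.exists_max_image (Finset.univ.erase j) g hej
  have hkj : k ≠ j := Finset.ne_of_mem_erase hkmem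
  -- the zero equation gives a gap bound between the top two exponents
  have hFz' : ∑ r, δ r * Complex.exp (z * conj (γ r)) = 0 := by rw [← hF z]; exact hFz
  have hsplit : δ j * Complex.exp (z * conj (γ j)) =
      -∑ r ∈ Finset.univ.erase j, δ r * Complex.exp (z * conj (γ r)) := by
    have h := Finset.add_sum_erase Finset.univ
      (fun r => δ r * Complex.exp (z * conj (γ r))) (Finset.mem_univ j)
    rw [hFz'] at h
    linear_combination h
  have habs1 : dm * Real.exp (g j) ≤ Sd * Real.exp (g k) := by
    have h1 : ‖δ j * Complex.exp (z * conj (γ j))‖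
        = ‖δ j‖ * Real.exp (g j) := by rw [norm_mul, habsE]
    have h2 : ‖∑ r ∈ Finset.univ.erase j, δ r * Complex.exp (z * conj (γ r))‖
        ≤ Sd * Real.exp (g k) := by
      refine le_trans (norm_sum_le _ _) ?_
      have hterm : ∀ r ∈ Finset.univ.erase j,
          ‖δ r * Complex.exp (z * conj (γ r))‖
            ≤ ‖δ r‖ * Real.exp (g k) := by
        intro r hr
        rw [norm_mul, habsE]
        exact mul_le_mul_of_nonneg_left (Real.exp_le_exp.2 (hkmax r hr))
          (norm_nonneg _)
      refine le_trans (Finset.sum_le_sum hterm) ?_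
      rw [← Finset.sum_mul]
      apply mul_le_mul_of_nonneg_right _ (le_of_lt (Real.exp_pos _))
      rw [hSd]
      exact Finset.sum_le_sum_of_subset_of_nonneg (Finset.subset_univ _)
        (fun r _ _ => norm_nonneg _)
    have h3 : ‖δ j‖ * Real.exp (g j) ≤ Sd * Real.exp (g k) := by
      rw [← h1, hsplit, norm_neg]
      exact h2
    have := mul_le_mul_of_nonneg_right (hdmle j) (le_of_lt (Real.exp_pos (g j)))
    linarith
  have hgapjk : g j - g k ≤ L := by
    have h4 : Real.exp (g j - g k) ≤ Sd / dm := by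
      rw [Real.exp_sub, div_le_div_iff₀ (Real.exp_pos _) hdmpos]
      nlinarith [habs1]
    calc g j - g k = Real.log (Real.exp (g j - g k)) := (Real.log_exp _).symm
    _ ≤ Real.log (Sd / dm) := Real.log_le_log (Real.exp_pos _) h4
    _ = L := hL.symm
  -- third terms are uniformly exponentially smaller
  have hthird : ∀ l, l ≠ j → l ≠ k → g l ≤ g j - c0 * ‖z‖ := by
    intro l hlj hlk
    set u : ℂ := ((‖z‖ : ℝ) : ℂ)⁻¹ * z with hu
    have habsu : ‖u‖ = 1 := by
      rw [hu, norm_mul, norm_inv, Complex.norm_real, Real.norm_eq_abs, abs_of_pos hzpos,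
        inv_mul_cancel₀ (ne_of_gt hzpos)]
    have hre : ∀ r, (u * conj (γ r)).re = (‖z‖)⁻¹ * g r := by
      intro r
      rw [hu, mul_assoc, ← Complex.ofReal_inv, hg]
      simp [Complex.mul_re]
    have hinvnn : (0:ℝ) ≤ (‖z‖)⁻¹ := inv_nonneg.2 (le_of_lt hzpos)
    have happ := hc0 u habsu j k l (Ne.symm hkj) (Ne.symm hlj) (Ne.symm hlk)
      (fun s => by rw [hre, hre]; exact mul_le_mul_of_nonneg_left (hjmax' s) hinvnn)
    rw [hre j, hre k, hre l] at happ
    have hinv : (‖z‖)⁻¹ * ‖z‖ = 1 := inv_mul_cancel₀ (ne_of_gt hzpos)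
    have hza : (‖z‖) ≠ 0 := ne_of_gt hzpos
    rcases le_max_iff.1 happ with h | h
    · exfalso
      have hmul := mul_le_mul_of_nonneg_right h (le_of_lt hzpos)
      have heq : ((‖z‖)⁻¹ * g j - (‖z‖)⁻¹ * g k) * ‖z‖
          = g j - g k := by field_simp
      rw [heq] at hmul
      linarith [hc0z]
    · have hmul := mul_le_mul_of_nonneg_right h (le_of_lt hzpos)
      have heq : ((‖z‖)⁻¹ * g j - (‖z‖)⁻¹ * g l) * ‖z‖
          = g j - g l := by field_simp
      rw [heq] at hmul
      linarith
  -- derivative formula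
  have hFdef : F = fun w => ∑ r, δ r * Complex.exp (w * conj (γ r)) := funext hF
  have hder : HasDerivAt F (∑ r, δ r * (conj (γ r) * Complex.exp (z * conj (γ r)))) z := by
    rw [hFdef]
    apply HasDerivAt.fun_sum
    intro r _
    have h1 : HasDerivAt (fun w : ℂ => w * conj (γ r)) (conj (γ r)) z := by
      simpa using (hasDerivAt_id z).mul_const (conj (γ r))
    have h3 := h1.cexp.const_mul (δ r)
    exact h3.congr_deriv (by ring)
  have hDeq : deriv F z
      = ∑ r, δ r * ((conj (γ r) - conj (γ j)) * Complex.exp (z * conj (γ r))) := by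
    rw [hder.deriv]
    calc ∑ r, δ r * (conj (γ r) * Complex.exp (z * conj (γ r)))
        = ∑ r, (δ r * ((conj (γ r) - conj (γ j)) * Complex.exp (z * conj (γ r)))
          + conj (γ j) * (δ r * Complex.exp (z * conj (γ r)))) :=
          Finset.sum_congr rfl (fun r _ => by ring)
    _ = (∑ r, δ r * ((conj (γ r) - conj (γ j)) * Complex.exp (z * conj (γ r))))
          + conj (γ j) * ∑ r, δ r * Complex.exp (z * conj (γ r)) := by
          rw [Finset.sum_add_distrib, Finset.mul_sum]
    _ = _ := by rw [hFz']; ring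
  set b : Fin R → ℂ :=
    fun r => δ r * ((conj (γ r) - conj (γ j)) * Complex.exp (z * conj (γ r))) with hb
  have hbj : b j = 0 := by rw [hb]; simp
  have hsum2 : deriv F z = b k + ∑ r ∈ (Finset.univ.erase j).erase k, b r := by
    rw [hDeq]
    have e1 : ∑ r, b r = b j + ∑ r ∈ Finset.univ.erase j, b r :=
      (Finset.add_sum_erase Finset.univ b (Finset.mem_univ j)).symm
    have e2 : ∑ r ∈ Finset.univ.erase j, b r
        = b k + ∑ r ∈ (Finset.univ.erase j).erase k, b r :=
      (Finset.add_sum_erase _ b hkmem).symm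
    calc ∑ r, δ r * ((conj (γ r) - conj (γ j)) * Complex.exp (z * conj (γ r))) = ∑ r, b r := rfl
    _ = b j + ∑ r ∈ Finset.univ.erase j, b r := e1
    _ = b k + ∑ r ∈ (Finset.univ.erase j).erase k, b r := by rw [hbj, zero_add, e2]
  have habsdiff : ‖conj (γ k) - conj (γ j)‖ = ‖γ k - γ j‖ := by
    rw [← map_sub, Complex.norm_conj]
  have hbk : dm * dmin * Real.exp (g k) ≤ ‖b k‖ := by
    rw [hb]
    simp only
    rw [norm_mul, norm_mul, habsE, habsdiff]
    have h1 : dmin ≤ ‖γ k - γ j‖ := hdminle k j hkj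
    have h2 : dm ≤ ‖δ k‖ := hdmle k
    have h3 : (0:ℝ) ≤ Real.exp (g k) := le_of_lt (Real.exp_pos _)
    have h5 : dm * dmin ≤ ‖δ k‖ * ‖γ k - γ j‖ :=
      mul_le_mul h2 h1 (le_of_lt hdminpos) (norm_nonneg _)
    calc dm * dmin * Real.exp (g k)
        ≤ (‖δ k‖ * ‖γ k - γ j‖) * Real.exp (g k) :=
          mul_le_mul_of_nonneg_right h5 h3
    _ = ‖δ k‖ * (‖γ k - γ j‖ * Real.exp (g k)) := by ring
  have hrest : ‖∑ r ∈ (Finset.univ.erase j).erase k, b r‖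
      ≤ Sd * (B * Real.exp (g j - c0 * ‖z‖)) := by
    refine le_trans (norm_sum_le _ _) ?_
    have hterm : ∀ r ∈ (Finset.univ.erase j).erase k,
        ‖b r‖ ≤ ‖δ r‖ * (B * Real.exp (g j - c0 * ‖z‖)) := by
      intro r hr
      have hrk : r ≠ k := Finset.ne_of_mem_erase hr
      have hrj : r ≠ j := Finset.ne_of_mem_erase (Finset.mem_of_mem_erase hr)
      rw [hb]
      simp only
      rw [norm_mul, norm_mul, habsE]
      have h1 : ‖conj (γ r) - conj (γ j)‖ ≤ B := hdiff_le r j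
      have h2 : Real.exp (g r) ≤ Real.exp (g j - c0 * ‖z‖) :=
        Real.exp_le_exp.2 (hthird r hrj hrk)
      have h3 : (0:ℝ) ≤ ‖conj (γ r) - conj (γ j)‖ := norm_nonneg _
      have h4 : (0:ℝ) ≤ Real.exp (g r) := le_of_lt (Real.exp_pos _)
      have h5 : (0:ℝ) ≤ ‖δ r‖ := norm_nonneg _
      have h6 : ‖conj (γ r) - conj (γ j)‖ * Real.exp (g r)
          ≤ B * Real.exp (g j - c0 * ‖z‖) :=
        mul_le_mul h1 h2 h4 (le_of_lt hBpos)
      exact mul_le_mul_of_nonneg_left h6 h5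
    refine le_trans (Finset.sum_le_sum hterm) ?_
    rw [← Finset.sum_mul]
    apply mul_le_mul_of_nonneg_right _
      (le_of_lt (mul_pos hBpos (Real.exp_pos _)))
    rw [hSd]
    exact Finset.sum_le_sum_of_subset_of_nonneg (Finset.subset_univ _)
      (fun r _ _ => norm_nonneg _)
  have hlow : dm * dmin * Real.exp (g k) - Sd * (B * Real.exp (g j - c0 * ‖z‖))
      ≤ ‖deriv F z‖ := by
    set S2 : ℂ := ∑ r ∈ (Finset.univ.erase j).erase k, b r with hS2
    have t1 : ‖b k‖ ≤ ‖b k + S2‖ + ‖S2‖ := by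
      have h := norm_add_le (b k + S2) (-S2)
      rw [norm_neg] at h
      have e : (b k + S2) + -S2 = b k := by ring
      rw [e] at h
      exact h
    rw [hsum2]
    linarith
  have hstrict : Sd * (B * Real.exp (g j - c0 * ‖z‖)) < dm * dmin * Real.exp (g k) := by
    have e1 : Sd * (B * Real.exp (g j - c0 * ‖z‖))
        = Real.exp (Real.log (Sd * B) + (g j - c0 * ‖z‖)) := by
      rw [Real.exp_add, Real.exp_log (mul_pos hSdpos hBpos)]
      ring
    have hgk : Real.exp (g j - L) ≤ Real.exp (g k) := Real.exp_le_exp.2 (by linarith)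
    have e2 : dm * dmin * Real.exp (g j - L)
        = Real.exp (Real.log (dm * dmin) + (g j - L)) := by
      rw [Real.exp_add, Real.exp_log (mul_pos hdmpos hdminpos)]
    have hL2' : L2 = Real.log (Sd * B) - Real.log (dm * dmin) := by
      rw [hL2, Real.log_div (ne_of_gt (mul_pos hSdpos hBpos)) (ne_of_gt (mul_pos hdmpos hdminpos))]
    have hexp : Real.log (Sd * B) + (g j - c0 * ‖z‖)
        < Real.log (dm * dmin) + (g j - L) := by
      have : L + L2 + c0 ≤ c0 * ‖z‖ := hc0z
      rw [hL2'] at this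
      linarith [hc0pos]
    calc Sd * (B * Real.exp (g j - c0 * ‖z‖))
        = Real.exp (Real.log (Sd * B) + (g j - c0 * ‖z‖)) := e1
    _ < Real.exp (Real.log (dm * dmin) + (g j - L)) := Real.exp_lt_exp.2 hexp
    _ = dm * dmin * Real.exp (g j - L) := e2.symm
    _ ≤ dm * dmin * Real.exp (g k) := by
        apply mul_le_mul_of_nonneg_left hgk (le_of_lt (mul_pos hdmpos hdminpos))
  intro hcontra
  rw [hcontra] at hlow
  simp only [norm_zero] at hlow
  linarith
end

section
/- Suppose there exist c ∈ U and d ∈ V with ⟨Ad, c⟩ ≠ 0. Then the numerical range of H = −A d²/dx² equals the entire complex plane; concretely, for every w ∈ ℂ there exists a twice continuously differentiable function f : [0,β] → ℂⁿ such that f(0) ∈ U, f'(0) ∈ V, f vanishes identically on a neighbourhood of β in [0,β], ∫₀^β ⟨f(x), f(x)⟩ dx = 1, and −∫₀^β ⟨A f''(x), f(x)⟩ dx = w. -/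
open Set

lemma nrwp_hasDerivAt_if_le {m : ℝ} {p r p' r' : ℝ → ℝ}
    (hp : ∀ x, HasDerivAt p (p' x) x) (hr : ∀ x, HasDerivAt r (r' x) x)
    (hm : p m = r m) (hm' : p' m = r' m) (x : ℝ) :
    HasDerivAt (fun y => if y ≤ m then p y else r y) (if x ≤ m then p' x else r' x) x := by
  rcases lt_trichotomy x m with h | heq | h
  · rw [if_pos h.le]
    apply (hp x).congr_of_eventuallyEq
    filter_upwards [Iio_mem_nhds h] with y hy
    rw [if_pos (le_of_lt hy)]
  · subst heq
    rw [if_pos le_rfl]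
    have h1 : HasDerivWithinAt (fun y => if y ≤ x then p y else r y) (p' x) (Set.Iic x) x := by
      apply (hp x).hasDerivWithinAt.congr
      · intro y hy; rw [if_pos (mem_Iic.mp hy)]
      · rw [if_pos le_rfl]
    have h2 : HasDerivWithinAt (fun y => if y ≤ x then p y else r y) (p' x) (Set.Ici x) x := by
      rw [hm']
      apply (hr x).hasDerivWithinAt.congr
      · intro y hy
        rcases eq_or_lt_of_le (mem_Ici.mp hy) with heq2 | hlt
        · rw [← heq2, if_pos le_rfl]; exact hm
        · rw [if_neg (not_le.mpr hlt)]
      · rw [if_pos le_rfl]; exact hm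
    have h3 := h1.union h2
    rw [Set.Iic_union_Ici] at h3
    exact hasDerivWithinAt_univ.mp h3
  · rw [if_neg (not_le.mpr h)]
    apply (hr x).congr_of_eventuallyEq
    filter_upwards [Ioi_mem_nhds h] with y hy
    rw [if_neg (not_le.mpr hy)]

lemma nrwp_continuous_if_le {m : ℝ} {p r : ℝ → ℝ} (hp : Continuous p) (hr : Continuous r)
    (hm : p m = r m) : Continuous (fun y => if y ≤ m then p y else r y) := by
  apply Continuous.if_le hp hr continuous_id continuous_const
  intro y hy; rw [show y = m from hy, hm]

noncomputable section
namespace NRWP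

/-- bump profile on `[0,1]`: `q0 = y(1-y)³(1-3y)`, with `q0(0)=0, q0'(0)=1`,
`q0,q0',q0''` vanishing at `1`, and `∫₀¹ q0 = 0`. -/
def q0 (y : ℝ) : ℝ := y - 6*y^2 + 12*y^3 - 10*y^4 + 3*y^5
def q1 (y : ℝ) : ℝ := 1 - 12*y + 36*y^2 - 40*y^3 + 15*y^4
def q2 (y : ℝ) : ℝ := -12 + 72*y - 120*y^2 + 60*y^3

/-- smooth step `Q0 = (1-u)³(1+3u+6u²)` from 1 to 0. -/
def Q0 (u : ℝ) : ℝ := 1 - 10*u^3 + 15*u^4 - 6*u^5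
def Q1 (u : ℝ) : ℝ := -30*u^2 + 60*u^3 - 30*u^4
def Q2 (u : ℝ) : ℝ := -60*u + 180*u^2 - 120*u^3

lemma hasDerivAt_q0 (y : ℝ) : HasDerivAt q0 (q1 y) y := by
  have h := (((((hasDerivAt_id y).sub ((hasDerivAt_pow 2 y).const_mul 6)).add
    ((hasDerivAt_pow 3 y).const_mul 12)).sub ((hasDerivAt_pow 4 y).const_mul 10)).add
    ((hasDerivAt_pow 5 y).const_mul 3))
  refine HasDerivAt.congr_deriv h ?_
  norm_num [q1]; ring

lemma hasDerivAt_q1 (y : ℝ) : HasDerivAt q1 (q2 y) y := by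
  have h := ((((hasDerivAt_const y (1:ℝ)).sub ((hasDerivAt_id y).const_mul 12)).add
    ((hasDerivAt_pow 2 y).const_mul 36)).sub ((hasDerivAt_pow 3 y).const_mul 40)).add
    ((hasDerivAt_pow 4 y).const_mul 15)
  refine HasDerivAt.congr_deriv h ?_
  norm_num [q2]; ring

lemma hasDerivAt_Q0 (u : ℝ) : HasDerivAt Q0 (Q1 u) u := by
  have h := (((hasDerivAt_const u (1:ℝ)).sub ((hasDerivAt_pow 3 u).const_mul 10)).add
    ((hasDerivAt_pow 4 u).const_mul 15)).sub ((hasDerivAt_pow 5 u).const_mul 6)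
  refine HasDerivAt.congr_deriv h ?_
  norm_num [Q1]; ring

lemma hasDerivAt_Q1 (u : ℝ) : HasDerivAt Q1 (Q2 u) u := by
  have h := (((hasDerivAt_pow 2 u).const_mul (-30 : ℝ)).add
    ((hasDerivAt_pow 3 u).const_mul 60)).add ((hasDerivAt_pow 4 u).const_mul (-30))
  refine HasDerivAt.congr_deriv (h.congr_of_eventuallyEq (Filter.Eventually.of_forall fun z => ?_)) ?_
  · simp only [Q1, Pi.add_apply]; ring
  · norm_num [Q2]; ring

lemma q0_zero : q0 0 = 0 := by simp [q0]
lemma q1_zero : q1 0 = 1 := by simp [q1]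
lemma q0_one : q0 1 = 0 := by norm_num [q0]
lemma q1_one : q1 1 = 0 := by norm_num [q1]
lemma q2_one : q2 1 = 0 := by norm_num [q2]
lemma Q0_zero : Q0 0 = 1 := by simp [Q0]
lemma Q1_zero : Q1 0 = 0 := by simp [Q1]
lemma Q2_zero : Q2 0 = 0 := by simp [Q2]
lemma Q0_one : Q0 1 = 0 := by norm_num [Q0]
lemma Q1_one : Q1 1 = 0 := by norm_num [Q1]
lemma Q2_one : Q2 1 = 0 := by norm_num [Q2]

lemma continuous_q0 : Continuous q0 := by unfold q0; continuity
lemma continuous_q2 : Continuous q2 := by unfold q2; continuity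
lemma continuous_Q2 : Continuous Q2 := by unfold Q2; continuity

lemma abs_q0_le {y : ℝ} (h0 : 0 ≤ y) (h1 : y ≤ 1) : |q0 y| ≤ 32 := by
  have h2 : y^2 ≤ 1 := pow_le_one₀ h0 h1
  have h3 : y^3 ≤ 1 := pow_le_one₀ h0 h1
  have h4 : y^4 ≤ 1 := pow_le_one₀ h0 h1
  have h5 : y^5 ≤ 1 := pow_le_one₀ h0 h1
  have h2' : 0 ≤ y^2 := by positivity
  have h3' : 0 ≤ y^3 := by positivity
  have h4' : 0 ≤ y^4 := by positivity
  have h5' : 0 ≤ y^5 := by positivity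
  simp only [q0, q2] at *
  rw [abs_le]; constructor <;> nlinarith

lemma abs_q2_le {y : ℝ} (h0 : 0 ≤ y) (h1 : y ≤ 1) : |q2 y| ≤ 264 := by
  have h2 : y^2 ≤ 1 := pow_le_one₀ h0 h1
  have h3 : y^3 ≤ 1 := pow_le_one₀ h0 h1
  have h2' : 0 ≤ y^2 := by positivity
  have h3' : 0 ≤ y^3 := by positivity
  simp only [q0, q2] at *
  rw [abs_le]; constructor <;> nlinarith

end NRWP

namespace NRWP
open Set

/-! ### The two scalar profiles `g` (plateau) and `h` (small bump) -/

def gp (β x : ℝ) : ℝ := Q0 ((4*x - 2*β)/β)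
def gp1 (β x : ℝ) : ℝ := Q1 ((4*x - 2*β)/β) * (4/β)
def gp2 (β x : ℝ) : ℝ := Q2 ((4*x - 2*β)/β) * (4/β) * (4/β)

def g0 (β x : ℝ) : ℝ := if x ≤ β/2 then 1 else if x ≤ 3*β/4 then gp β x else 0
def g1 (β x : ℝ) : ℝ := if x ≤ β/2 then 0 else if x ≤ 3*β/4 then gp1 β x else 0
def g2 (β x : ℝ) : ℝ := if x ≤ β/2 then 0 else if x ≤ 3*β/4 then gp2 β x else 0

def hp (ε x : ℝ) : ℝ := ε * q0 (x/ε)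
def hp1 (ε x : ℝ) : ℝ := q1 (x/ε)
def hp2 (ε x : ℝ) : ℝ := q2 (x/ε) / ε

def h0 (ε x : ℝ) : ℝ := if x ≤ ε then hp ε x else 0
def h1 (ε x : ℝ) : ℝ := if x ≤ ε then hp1 ε x else 0
def h2 (ε x : ℝ) : ℝ := if x ≤ ε then hp2 ε x else 0

variable {β ε : ℝ}

lemma hasDerivAt_affine (x : ℝ) : HasDerivAt (fun x : ℝ => (4*x - 2*β)/β) (4/β) x := by
  simpa using (((hasDerivAt_id x).const_mul 4).sub_const (2*β)).div_const β

lemma hasDerivAt_gp (x : ℝ) : HasDerivAt (gp β) (gp1 β x) x :=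
  (hasDerivAt_Q0 _).comp x (hasDerivAt_affine x)

lemma hasDerivAt_gp1 (x : ℝ) : HasDerivAt (gp1 β) (gp2 β x) x :=
  ((hasDerivAt_Q1 _).comp x (hasDerivAt_affine x)).mul_const (4/β)

lemma u_half (hβ : 0 < β) : (4*(β/2) - 2*β)/β = 0 := by field_simp; ring
lemma u_three (hβ : 0 < β) : (4*(3*β/4) - 2*β)/β = 1 := by field_simp; ring

lemma hasDerivAt_g0 (hβ : 0 < β) (x : ℝ) : HasDerivAt (g0 β) (g1 β x) x := by
  apply nrwp_hasDerivAt_if_le (p := fun _ => (1:ℝ)) (p' := fun _ => (0:ℝ))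
      (r := fun y => if y ≤ 3*β/4 then gp β y else 0)
      (r' := fun y => if y ≤ 3*β/4 then gp1 β y else 0)
  · exact fun y => hasDerivAt_const y 1
  · apply nrwp_hasDerivAt_if_le (fun y => hasDerivAt_gp y) (fun y => hasDerivAt_const y 0)
    · simp [gp, u_three hβ, Q0_one]
    · simp [gp1, u_three hβ, Q1_one]
  · rw [if_pos (by linarith : β/2 ≤ 3*β/4)]
    simp [gp, u_half hβ, Q0_zero]
  · rw [if_pos (by linarith : β/2 ≤ 3*β/4)]
    simp [gp1, u_half hβ, Q1_zero]

lemma hasDerivAt_g1 (hβ : 0 < β) (x : ℝ) : HasDerivAt (g1 β) (g2 β x) x := by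
  apply nrwp_hasDerivAt_if_le (p := fun _ => (0:ℝ)) (p' := fun _ => (0:ℝ))
      (r := fun y => if y ≤ 3*β/4 then gp1 β y else 0)
      (r' := fun y => if y ≤ 3*β/4 then gp2 β y else 0)
  · exact fun y => hasDerivAt_const y 0
  · apply nrwp_hasDerivAt_if_le (fun y => hasDerivAt_gp1 y) (fun y => hasDerivAt_const y 0)
    · simp [gp1, u_three hβ, Q1_one]
    · simp [gp2, u_three hβ, Q2_one]
  · rw [if_pos (by linarith : β/2 ≤ 3*β/4)]
    simp [gp1, u_half hβ, Q1_zero]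
  · rw [if_pos (by linarith : β/2 ≤ 3*β/4)]
    simp [gp2, u_half hβ, Q2_zero]

lemma hasDerivAt_hp (hε : 0 < ε) (x : ℝ) : HasDerivAt (hp ε) (hp1 ε x) x := by
  have hu : HasDerivAt (fun x : ℝ => x/ε) (1/ε) x := by
    simpa using (hasDerivAt_id x).div_const ε
  have h := ((hasDerivAt_q0 (x/ε)).comp x hu).const_mul ε
  refine HasDerivAt.congr_deriv h ?_
  simp only [hp1]; field_simp

lemma hasDerivAt_hp1 (hε : 0 < ε) (x : ℝ) : HasDerivAt (hp1 ε) (hp2 ε x) x := by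
  have hu : HasDerivAt (fun x : ℝ => x/ε) (1/ε) x := by
    simpa using (hasDerivAt_id x).div_const ε
  have h := (hasDerivAt_q1 (x/ε)).comp x hu
  refine HasDerivAt.congr_deriv h ?_
  simp only [hp2]; ring

lemma hasDerivAt_h0 (hε : 0 < ε) (x : ℝ) : HasDerivAt (h0 ε) (h1 ε x) x := by
  apply nrwp_hasDerivAt_if_le (hasDerivAt_hp hε) (fun y => hasDerivAt_const y 0)
  · simp [hp, div_self hε.ne', q0_one]
  · simp [hp1, div_self hε.ne', q1_one]

lemma hasDerivAt_h1 (hε : 0 < ε) (x : ℝ) : HasDerivAt (h1 ε) (h2 ε x) x := by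
  apply nrwp_hasDerivAt_if_le (hasDerivAt_hp1 hε) (fun y => hasDerivAt_const y 0)
  · simp [hp1, div_self hε.ne', q1_one]
  · simp [hp2, div_self hε.ne', q2_one]

lemma continuous_g0 (hβ : 0 < β) : Continuous (g0 β) :=
  continuous_iff_continuousAt.mpr fun x => (hasDerivAt_g0 hβ x).continuousAt

lemma continuous_g1 (hβ : 0 < β) : Continuous (g1 β) :=
  continuous_iff_continuousAt.mpr fun x => (hasDerivAt_g1 hβ x).continuousAt

lemma continuous_h0 (hε : 0 < ε) : Continuous (h0 ε) :=
  continuous_iff_continuousAt.mpr fun x => (hasDerivAt_h0 hε x).continuousAt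

lemma continuous_h1 (hε : 0 < ε) : Continuous (h1 ε) :=
  continuous_iff_continuousAt.mpr fun x => (hasDerivAt_h1 hε x).continuousAt

lemma continuous_gp2 : Continuous (gp2 β) := by
  apply Continuous.mul (Continuous.mul _ continuous_const) continuous_const
  exact continuous_Q2.comp (by continuity)

lemma continuous_g2 (hβ : 0 < β) : Continuous (g2 β) := by
  apply nrwp_continuous_if_le continuous_const
  · apply nrwp_continuous_if_le continuous_gp2 continuous_const
    simp [gp2, u_three hβ, Q2_one]
  · rw [if_pos (by linarith : β/2 ≤ 3*β/4)]
    simp [gp2, u_half hβ, Q2_zero]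

lemma continuous_hp2 (hε : 0 < ε) : Continuous (hp2 ε) := by
  apply Continuous.div_const
  exact continuous_q2.comp (by continuity)

lemma continuous_h2 (hε : 0 < ε) : Continuous (h2 ε) := by
  apply nrwp_continuous_if_le (continuous_hp2 hε) continuous_const
  simp [hp2, div_self hε.ne', q2_one]

/-! ### values -/

lemma g0_one (hx : x ≤ β/2) : g0 β x = 1 := if_pos hx
lemma g1_zero' (hx : x ≤ β/2) : g1 β x = 0 := if_pos hx
lemma g2_zero' (hx : x ≤ β/2) : g2 β x = 0 := if_pos hx

lemma g0_zero (hβ : 0 < β) (hx : 3*β/4 ≤ x) : g0 β x = 0 := by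
  rw [g0, if_neg (by linarith : ¬ x ≤ β/2)]
  rcases eq_or_lt_of_le hx with h | h
  · rw [if_pos h.symm.le, ← h, gp, u_three hβ, Q0_one]
  · rw [if_neg (not_le.mpr h)]

lemma h0_zero (hε : 0 < ε) (hx : ε ≤ x) : h0 ε x = 0 := by
  rw [h0]
  rcases eq_or_lt_of_le hx with h | h
  · rw [if_pos h.symm.le, ← h, hp, div_self hε.ne', q0_one, mul_zero]
  · rw [if_neg (not_le.mpr h)]

lemma h1_zero (hε : 0 < ε) (hx : ε ≤ x) : h1 ε x = 0 := by
  rw [h1]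
  rcases eq_or_lt_of_le hx with h | h
  · rw [if_pos h.symm.le, ← h, hp1, div_self hε.ne', q1_one]
  · rw [if_neg (not_le.mpr h)]

lemma h2_zero (hε : 0 < ε) (hx : ε ≤ x) : h2 ε x = 0 := by
  rw [h2]
  rcases eq_or_lt_of_le hx with h | h
  · rw [if_pos h.symm.le, ← h, hp2, div_self hε.ne', q2_one, zero_div]
  · rw [if_neg (not_le.mpr h)]

lemma h0_at_zero (hε : 0 < ε) : h0 ε 0 = 0 := by
  rw [h0, if_pos hε.le, hp, zero_div, q0_zero, mul_zero]

lemma h1_at_zero (hε : 0 < ε) : h1 ε 0 = 1 := by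
  rw [h1, if_pos hε.le, hp1, zero_div, q1_zero]

lemma g0_at_zero (hβ : 0 < β) : g0 β 0 = 1 := g0_one (by linarith)
lemma g1_at_zero (hβ : 0 < β) : g1 β 0 = 0 := g1_zero' (by linarith)

end NRWP

namespace NRWP
open Set intervalIntegral

variable {β ε : ℝ}

def Hp (ε x : ℝ) : ℝ := x^2/2 - (2/ε)*x^3 + (3/ε^2)*x^4 - (2/ε^3)*x^5 + (1/(2*ε^4))*x^6

lemma hasDerivAt_Hp (hε : 0 < ε) (x : ℝ) : HasDerivAt (Hp ε) (hp ε x) x := by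
  have h := (((((hasDerivAt_pow 2 x).div_const 2).sub
      ((hasDerivAt_pow 3 x).const_mul (2/ε))).add
      ((hasDerivAt_pow 4 x).const_mul (3/ε^2))).sub
      ((hasDerivAt_pow 5 x).const_mul (2/ε^3))).add
      ((hasDerivAt_pow 6 x).const_mul (1/(2*ε^4)))
  refine HasDerivAt.congr_deriv h ?_
  simp only [hp, q0]
  field_simp
  ring

/-- the two key exact integrals -/
lemma integral_h2_g0 (hβ : 0 < β) (hε : 0 < ε) (hεβ : ε ≤ β/2) :
    ∫ x in (0:ℝ)..β, h2 ε x * g0 β x = -1 := by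
  have hεβ' : ε ≤ β := by linarith
  have hcont : Continuous fun x => h2 ε x * g0 β x :=
    (continuous_h2 hε).mul (continuous_g0 hβ)
  rw [← integral_add_adjacent_intervals (b := ε)
      (hcont.intervalIntegrable _ _) (hcont.intervalIntegrable _ _)]
  have e1 : ∫ x in (0:ℝ)..ε, h2 ε x * g0 β x = ∫ x in (0:ℝ)..ε, h2 ε x := by
    apply integral_congr
    intro x hx
    rw [uIcc_of_le hε.le] at hx
    show h2 ε x * g0 β x = h2 ε x
    rw [g0_one (by linarith [hx.2] : x ≤ β/2), mul_one]
  have e2 : ∫ x in (0:ℝ)..ε, h2 ε x = h1 ε ε - h1 ε 0 := by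
    apply integral_eq_sub_of_hasDerivAt (fun x _ => hasDerivAt_h1 hε x)
    exact (continuous_h2 hε).intervalIntegrable _ _
  have e3 : ∫ x in ε..β, h2 ε x * g0 β x = 0 := by
    rw [← intervalIntegral.integral_zero (a := ε) (b := β)]
    apply integral_congr
    intro x hx
    rw [uIcc_of_le hεβ'] at hx
    show h2 ε x * g0 β x = 0
    rw [h2_zero hε hx.1, zero_mul]
  rw [e1, e2, e3, h1_zero hε le_rfl, h1_at_zero hε]
  ring

lemma integral_g2_h0 (hε : 0 < ε) (hεβ : ε ≤ β/2) :
    ∫ x in (0:ℝ)..β, g2 β x * h0 ε x = 0 := by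
  have : ∀ x, g2 β x * h0 ε x = 0 := by
    intro x
    rcases le_or_gt x (β/2) with h | h
    · rw [g2_zero' h, zero_mul]
    · rw [h0_zero hε (by linarith), mul_zero]
  simp only [this, intervalIntegral.integral_zero]

lemma integral_g0_h0 (hβ : 0 < β) (hε : 0 < ε) (hεβ : ε ≤ β/2) :
    ∫ x in (0:ℝ)..β, g0 β x * h0 ε x = 0 := by
  have hεβ' : ε ≤ β := by linarith
  have hcont : Continuous fun x => g0 β x * h0 ε x :=
    (continuous_g0 hβ).mul (continuous_h0 hε)
  rw [← integral_add_adjacent_intervals (b := ε)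
      (hcont.intervalIntegrable _ _) (hcont.intervalIntegrable _ _)]
  have e1 : ∫ x in (0:ℝ)..ε, g0 β x * h0 ε x = ∫ x in (0:ℝ)..ε, hp ε x := by
    apply integral_congr
    intro x hx
    rw [uIcc_of_le hε.le] at hx
    show g0 β x * h0 ε x = hp ε x
    rw [g0_one (by linarith [hx.2] : x ≤ β/2), one_mul, h0, if_pos hx.2]
  have e2 : ∫ x in (0:ℝ)..ε, hp ε x = Hp ε ε - Hp ε 0 := by
    apply integral_eq_sub_of_hasDerivAt (fun x _ => hasDerivAt_Hp hε x)
    have : Continuous (hp ε) :=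
      continuous_const.mul (continuous_q0.comp (continuous_id.div_const ε))
    exact this.intervalIntegrable _ _
  have e4 : Hp ε ε - Hp ε 0 = 0 := by
    simp only [Hp]
    field_simp
    ring
  have e3 : ∫ x in ε..β, g0 β x * h0 ε x = 0 := by
    rw [← intervalIntegral.integral_zero (a := ε) (b := β)]
    apply integral_congr
    intro x hx
    rw [uIcc_of_le hεβ'] at hx
    show g0 β x * h0 ε x = 0
    rw [h0_zero hε hx.1, mul_zero]
  rw [e1, e2, e3, e4]
  ring

end NRWP

namespace NRWP
open Set intervalIntegral

variable {β ε x : ℝ}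

lemma abs_h0_le (hε : 0 < ε) (h0x : 0 ≤ x) (hxε : x ≤ ε) : |h0 ε x| ≤ 32*ε := by
  rw [h0, if_pos hxε, hp, abs_mul, abs_of_pos hε]
  have h1 : 0 ≤ x/ε := div_nonneg h0x hε.le
  have h2 : x/ε ≤ 1 := (div_le_one hε).mpr hxε
  calc ε * |q0 (x/ε)| ≤ ε * 32 := by
        exact mul_le_mul_of_nonneg_left (abs_q0_le h1 h2) hε.le
    _ = 32*ε := by ring

lemma abs_h2_le (hε : 0 < ε) (h0x : 0 ≤ x) (hxε : x ≤ ε) : |h2 ε x| ≤ 264/ε := by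
  rw [h2, if_pos hxε, hp2, abs_div, abs_of_pos hε]
  have h1 : 0 ≤ x/ε := div_nonneg h0x hε.le
  have h2 : x/ε ≤ 1 := (div_le_one hε).mpr hxε
  gcongr
  exact abs_q2_le h1 h2

lemma integral_h_sq_nonneg (hβ : 0 < β) : 0 ≤ ∫ x in (0:ℝ)..β, h0 ε x * h0 ε x :=
  integral_nonneg hβ.le (fun u _ => mul_self_nonneg _)

lemma integral_h_sq_le (hβ : 0 < β) (hε : 0 < ε) (hεβ : ε ≤ β/2) :
    ∫ x in (0:ℝ)..β, h0 ε x * h0 ε x ≤ 1024*ε^3 := by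
  have hεβ' : ε ≤ β := by linarith
  have hcont : Continuous fun x => h0 ε x * h0 ε x :=
    (continuous_h0 hε).mul (continuous_h0 hε)
  rw [← integral_add_adjacent_intervals (b := ε)
      (hcont.intervalIntegrable _ _) (hcont.intervalIntegrable _ _)]
  have e3 : ∫ x in ε..β, h0 ε x * h0 ε x = 0 := by
    rw [← intervalIntegral.integral_zero (a := ε) (b := β)]
    apply integral_congr
    intro x hx
    rw [uIcc_of_le hεβ'] at hx
    show h0 ε x * h0 ε x = 0
    rw [h0_zero hε hx.1, zero_mul]
  have e1 : ∫ x in (0:ℝ)..ε, h0 ε x * h0 ε x ≤ 1024*ε^3 := by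
    have hb := norm_integral_le_of_norm_le_const (C := 1024*ε^2)
      (f := fun x => h0 ε x * h0 ε x) (a := 0) (b := ε) ?_
    · calc ∫ x in (0:ℝ)..ε, h0 ε x * h0 ε x ≤ |∫ x in (0:ℝ)..ε, h0 ε x * h0 ε x| := le_abs_self _
        _ ≤ 1024*ε^2 * |ε - 0| := hb
        _ = 1024*ε^3 := by rw [sub_zero, abs_of_pos hε]; ring
    · intro x hx
      rw [uIoc_of_le hε.le] at hx
      rw [Real.norm_eq_abs, abs_mul]
      calc |h0 ε x| * |h0 ε x| ≤ (32*ε) * (32*ε) :=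
            mul_le_mul (abs_h0_le hε hx.1.le hx.2) (abs_h0_le hε hx.1.le hx.2)
              (abs_nonneg _) (by positivity)
        _ = 1024*ε^2 := by ring
  linarith [e3, e1]

lemma abs_integral_h2_h0_le (hβ : 0 < β) (hε : 0 < ε) (hεβ : ε ≤ β/2) :
    |∫ x in (0:ℝ)..β, h2 ε x * h0 ε x| ≤ 8448*ε := by
  have hεβ' : ε ≤ β := by linarith
  have hcont : Continuous fun x => h2 ε x * h0 ε x :=
    (continuous_h2 hε).mul (continuous_h0 hε)
  rw [← integral_add_adjacent_intervals (b := ε)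
      (hcont.intervalIntegrable _ _) (hcont.intervalIntegrable _ _)]
  have e3 : ∫ x in ε..β, h2 ε x * h0 ε x = 0 := by
    rw [← intervalIntegral.integral_zero (a := ε) (b := β)]
    apply integral_congr
    intro x hx
    rw [uIcc_of_le hεβ'] at hx
    show h2 ε x * h0 ε x = 0
    rw [h0_zero hε hx.1, mul_zero]
  rw [e3, add_zero]
  have hb := norm_integral_le_of_norm_le_const (C := 8448)
    (f := fun x => h2 ε x * h0 ε x) (a := 0) (b := ε) ?_
  · calc |∫ x in (0:ℝ)..ε, h2 ε x * h0 ε x| ≤ 8448 * |ε - 0| := hb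
      _ = 8448*ε := by rw [sub_zero, abs_of_pos hε]
  · intro x hx
    rw [uIoc_of_le hε.le] at hx
    rw [Real.norm_eq_abs, abs_mul]
    calc |h2 ε x| * |h0 ε x| ≤ (264/ε) * (32*ε) :=
          mul_le_mul (abs_h2_le hε hx.1.le hx.2) (abs_h0_le hε hx.1.le hx.2)
            (abs_nonneg _) (by positivity)
      _ = 8448 := by field_simp; ring

lemma integral_g_sq_ge (hβ : 0 < β) : β/2 ≤ ∫ x in (0:ℝ)..β, g0 β x * g0 β x := by
  have hcont : Continuous fun x => g0 β x * g0 β x :=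
    (continuous_g0 hβ).mul (continuous_g0 hβ)
  rw [← integral_add_adjacent_intervals (b := β/2)
      (hcont.intervalIntegrable _ _) (hcont.intervalIntegrable _ _)]
  have e1 : ∫ x in (0:ℝ)..(β/2), g0 β x * g0 β x = β/2 := by
    have : ∫ x in (0:ℝ)..(β/2), g0 β x * g0 β x = ∫ _x in (0:ℝ)..(β/2), (1:ℝ) := by
      apply integral_congr
      intro x hx
      rw [uIcc_of_le (by linarith : (0:ℝ) ≤ β/2)] at hx
      show g0 β x * g0 β x = 1
      rw [g0_one hx.2, mul_one]
    rw [this, integral_const]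
    simp
  have e2 : 0 ≤ ∫ x in (β/2)..β, g0 β x * g0 β x :=
    integral_nonneg (by linarith) (fun u _ => mul_self_nonneg _)
  linarith

end NRWP

lemma nrwp_quad {k na b : ℝ} (hk : 0 < k) (hb : 0 < b) (hna : 0 ≤ na)
    (hD : 0 ≤ b^2 - 4*k*na) :
    ∃ r : ℝ, 0 ≤ r ∧ k*r^2 - b*r + na = 0 := by
  set s := Real.sqrt (b^2 - 4*k*na) with hsdef
  have hs : s^2 = b^2 - 4*k*na := Real.sq_sqrt hD
  have hs0 : 0 ≤ s := Real.sqrt_nonneg _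
  have hsb : s ≤ b := by
    have : s ≤ Real.sqrt (b^2) := Real.sqrt_le_sqrt (by nlinarith)
    rwa [Real.sqrt_sq hb.le] at this
  refine ⟨(b - s)/(2*k), div_nonneg (by linarith) (by linarith), ?_⟩
  have h2k : (2*k) ≠ 0 := by positivity
  field_simp
  nlinarith [hs]

namespace NRWP
open Complex ComplexConjugate

/-- solving `τ = α + |τ|² γ` when `γ` is small -/
lemma exists_fixed_point (α γ : ℂ) (h : ‖γ‖ * (1 + ‖α‖) ≤ 1/8) :
    ∃ τ : ℂ, τ = α + (Complex.normSq τ : ℝ) * γ := by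
  by_cases hγ : γ = 0
  · exact ⟨α, by simp [hγ]⟩
  have hγ' : 0 < Complex.normSq γ := Complex.normSq_pos.mpr hγ
  have habsγ : 0 ≤ ‖γ‖ := norm_nonneg γ
  have habsα : 0 ≤ ‖α‖ := norm_nonneg α
  have hprod : ‖γ‖ * ‖α‖ ≤ 1/8 := by nlinarith
  set e : ℝ := (α * conj γ).re with he
  have habse : |e| ≤ ‖α‖ * ‖γ‖ := by
    calc |e| ≤ ‖α * conj γ‖ := Complex.abs_re_le_norm _
      _ = ‖α‖ * ‖γ‖ := by rw [norm_mul, Complex.norm_conj]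
  set b : ℝ := 1 - 2*e with hb
  have hbpos : (3:ℝ)/4 ≤ b := by
    have := abs_le.mp habse
    simp only [hb]
    nlinarith
  have hsqabs : Complex.normSq γ * Complex.normSq α = (‖γ‖ * ‖α‖)^2 := by
    rw [Complex.normSq_eq_norm_sq, Complex.normSq_eq_norm_sq]; ring
  have hDpos : 0 ≤ b^2 - 4 * Complex.normSq γ * Complex.normSq α := by
    have h2 : 0 ≤ ‖γ‖ * ‖α‖ := mul_nonneg habsγ habsα
    have h3 : (‖γ‖ * ‖α‖)^2 ≤ (1/8:ℝ)^2 := by nlinarith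
    have h4 : ((3:ℝ)/4)^2 ≤ b^2 := by nlinarith
    have h5 : 4 * Complex.normSq γ * Complex.normSq α
        = 4 * (‖γ‖ * ‖α‖)^2 := by rw [mul_assoc, hsqabs]
    rw [h5]; nlinarith
  obtain ⟨r, hrnonneg, hkey⟩ := nrwp_quad hγ' (by linarith : (0:ℝ) < b)
    (Complex.normSq_nonneg α) (by linarith [hDpos] : 0 ≤ b^2 - 4 * Complex.normSq γ * Complex.normSq α)
  refine ⟨α + (r:ℝ) * γ, ?_⟩
  have hnormsq : Complex.normSq (α + (r:ℝ) * γ) = r := by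
    rw [Complex.normSq_add]
    have h1 : Complex.normSq ((r:ℂ) * γ) = r^2 * Complex.normSq γ := by
      rw [Complex.normSq_mul, Complex.normSq_ofReal]; ring
    have h2 : (α * conj ((r:ℂ) * γ)).re = r * e := by
      rw [map_mul, Complex.conj_ofReal]
      have h3 : α * ((r:ℂ) * conj γ) = (r:ℂ) * (α * conj γ) := by ring
      rw [h3, Complex.re_ofReal_mul]
    rw [h1, h2]
    simp only [hb] at hkey
    nlinarith [hkey]
  rw [hnormsq]
end NRWP

open Complex ComplexConjugate NRWP

lemma nrwp_sum_expand {n : ℕ} (u v c d : Fin n → ℂ) (a b a' b' : ℂ) :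
    ∑ i, (a • u + b • v) i * conj ((a' • c + b' • d) i)
      = a * conj a' * (∑ i, u i * conj (c i)) + a * conj b' * (∑ i, u i * conj (d i))
        + b * conj a' * (∑ i, v i * conj (c i)) + b * conj b' * (∑ i, v i * conj (d i)) := by
  simp only [Pi.add_apply, Pi.smul_apply, smul_eq_mul, map_add, map_mul, Finset.mul_sum,
    ← Finset.sum_add_distrib]
  apply Finset.sum_congr rfl
  intro i _
  ring

lemma nrwp_integral_ofReal {f : ℝ → ℝ} {a b : ℝ} :
    (∫ x in a..b, ((f x : ℝ) : ℂ)) = ((∫ x in a..b, f x : ℝ) : ℂ) :=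
  intervalIntegral.integral_ofReal

set_option maxHeartbeats 1000000 in
/-- If there are `c ∈ U`, `d ∈ V` with `⟨Ad, c⟩ ≠ 0`, then the numerical range
of `H = −A d²/dx²` (with `f(0) ∈ U`, `f′(0) ∈ V` and any behaviour at `β` irrelevant since
the test functions vanish near `β`) is all of `ℂ`: every `w ∈ ℂ` is attained by
`−∫₀^β ⟨A f″, f⟩` for some normalized admissible `f`. -/
theorem numerical_range_is_whole_plane
    {n : ℕ} (hn : 1 ≤ n) (A : Matrix (Fin n) (Fin n) ℂ) (hA : IsUnit A)
    (β : ℝ) (hβ : 0 < β) (U V : Submodule ℂ (Fin n → ℂ))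
    (hcd : ∃ c ∈ U, ∃ d ∈ V, (∑ i, A.mulVec d i * conj (c i)) ≠ 0) :
    ∀ w : ℂ, ∃ f : ℝ → (Fin n → ℂ),
      ContDiffOn ℝ 2 f (Set.Icc 0 β) ∧
      f 0 ∈ U ∧
      derivWithin f (Set.Icc 0 β) 0 ∈ V ∧
      (∃ a : ℝ, a < β ∧ ∀ x ∈ Set.Icc a β, f x = 0) ∧
      (∫ x in (0:ℝ)..β, ∑ i, f x i * conj (f x i)) = 1 ∧
      (-∫ x in (0:ℝ)..β,
          ∑ i, A.mulVec (iteratedDerivWithin 2 f (Set.Icc 0 β) x) i * conj (f x i)) = w := by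
  obtain ⟨c, hcU, d, hdV, hKdc⟩ := hcd
  intro w
  set Kcc : ℂ := ∑ i, A.mulVec c i * conj (c i) with hKccdef
  set Kcd : ℂ := ∑ i, A.mulVec c i * conj (d i) with hKcddef
  set Kdc : ℂ := ∑ i, A.mulVec d i * conj (c i) with hKdcdef
  set Kdd : ℂ := ∑ i, A.mulVec d i * conj (d i) with hKdddef
  set Sc : ℝ := ∑ i, Complex.normSq (c i) with hScdef
  set Sd : ℝ := ∑ i, Complex.normSq (d i) with hSddef
  have hNcc : (∑ i, c i * conj (c i)) = ((Sc:ℝ):ℂ) := by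
    rw [hScdef]
    push_cast
    exact Finset.sum_congr rfl fun i _ => (Complex.mul_conj _)
  have hNdd : (∑ i, d i * conj (d i)) = ((Sd:ℝ):ℂ) := by
    rw [hSddef]
    push_cast
    exact Finset.sum_congr rfl fun i _ => (Complex.mul_conj _)
  have hSd0 : 0 ≤ Sd := Finset.sum_nonneg fun i _ => Complex.normSq_nonneg _
  have hScpos : 0 < Sc := by
    rcases (Finset.sum_nonneg fun i (_ : i ∈ Finset.univ) =>
        Complex.normSq_nonneg (c i) : (0:ℝ) ≤ Sc).lt_or_eq with h | h
    · exact h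
    · exfalso
      apply hKdc
      have hz : ∀ i ∈ Finset.univ, Complex.normSq (c i) = 0 := by
        apply (Finset.sum_eq_zero_iff_of_nonneg fun i _ => Complex.normSq_nonneg (c i)).mp h.symm
      have hc0 : ∀ i, c i = 0 := fun i => Complex.normSq_eq_zero.mp (hz i (Finset.mem_univ i))
      rw [hKdcdef]
      apply Finset.sum_eq_zero
      intro i _
      rw [hc0 i, map_zero, mul_zero]
  clear_value Kcc Kcd Kdc Kdd Sc Sd
  -- the fixed ingredients built from g
  set M : ℝ := ∫ x in (0:ℝ)..β, g0 β x * g0 β x with hMdef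
  set a1 : ℝ := ∫ x in (0:ℝ)..β, g2 β x * g0 β x with ha1def
  have hMpos : 0 < M := lt_of_lt_of_le (by linarith) (integral_g_sq_ge hβ)
  clear_value M a1
  set α : ℂ := (w * (M:ℂ) * (Sc:ℂ) + (a1:ℂ) * Kcc) / Kdc with hαdef
  set D0 : ℝ := (1024 * ‖w‖ * Sd + 8448 * ‖Kdd‖) / ‖Kdc‖
    with hD0def
  have hKdcabs : 0 < ‖Kdc‖ := norm_pos_iff.mpr hKdc
  have hD0nonneg : 0 ≤ D0 := by
    rw [hD0def]
    apply div_nonneg _ hKdcabs.le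
    have := norm_nonneg w
    have := norm_nonneg Kdd
    positivity
  -- choice of ε
  set ε : ℝ := min (β/2) (min 1 (1 / (8 * (1 + ‖α‖) * (1 + D0)))) with hεdef
  have habsα : 0 ≤ ‖α‖ := norm_nonneg α
  have hε0 : 0 < ε := by
    rw [hεdef]
    apply lt_min (by linarith)
    apply lt_min one_pos
    positivity
  have hεβ : ε ≤ β/2 := min_le_left _ _
  have hε1 : ε ≤ 1 := le_trans (min_le_right _ _) (min_le_left _ _)
  have hεD : ε ≤ 1 / (8 * (1 + ‖α‖) * (1 + D0)) :=
    le_trans (min_le_right _ _) (min_le_right _ _)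
  clear_value ε
  -- the ε-dependent ingredients built from h
  set S : ℝ := ∫ x in (0:ℝ)..β, h0 ε x * h0 ε x with hSdef
  set a2 : ℝ := ∫ x in (0:ℝ)..β, h2 ε x * h0 ε x with ha2def
  have hS0 : 0 ≤ S := integral_h_sq_nonneg hβ
  have hSle : S ≤ 1024 * ε := by
    have h1 := integral_h_sq_le hβ hε0 hεβ
    have h2 : ε^2 ≤ 1 := pow_le_one₀ hε0.le hε1
    have h3 : ε^3 ≤ ε := by nlinarith [hε0.le]
    have h4 : S ≤ 1024 * ε^3 := h1
    nlinarith
  have ha2le : |a2| ≤ 8448 * ε := abs_integral_h2_h0_le hβ hε0 hεβ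
  clear_value S a2
  set γ : ℂ := (w * (S:ℂ) * (Sd:ℂ) + (a2:ℂ) * Kdd) / Kdc with hγdef
  -- γ is small
  have habsγ : ‖γ‖ * (1 + ‖α‖) ≤ 1/8 := by
    have hnum : ‖w * (S:ℂ) * (Sd:ℂ) + (a2:ℂ) * Kdd‖
        ≤ ε * (1024 * ‖w‖ * Sd + 8448 * ‖Kdd‖) := by
      calc ‖w * (S:ℂ) * (Sd:ℂ) + (a2:ℂ) * Kdd‖
          ≤ ‖w * (S:ℂ) * (Sd:ℂ)‖ + ‖(a2:ℂ) * Kdd‖ :=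
            norm_add_le _ _
        _ = ‖w‖ * S * Sd + |a2| * ‖Kdd‖ := by
            simp only [norm_mul, Complex.norm_real, Real.norm_eq_abs]
            rw [_root_.abs_of_nonneg hS0, _root_.abs_of_nonneg hSd0]
        _ ≤ ‖w‖ * (1024 * ε) * Sd + (8448 * ε) * ‖Kdd‖ := by
            have := norm_nonneg w
            have := norm_nonneg Kdd
            have := abs_nonneg a2
            have h1 : ‖w‖ * S * Sd ≤ ‖w‖ * (1024 * ε) * Sd := by
              apply mul_le_mul_of_nonneg_right _ hSd0
              apply mul_le_mul_of_nonneg_left hSle (by positivity)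
            have h2 : |a2| * ‖Kdd‖ ≤ (8448 * ε) * ‖Kdd‖ :=
              mul_le_mul_of_nonneg_right ha2le (by positivity)
            linarith
        _ = ε * (1024 * ‖w‖ * Sd + 8448 * ‖Kdd‖) := by ring
    have hγle : ‖γ‖ ≤ ε * D0 := by
      rw [hγdef, norm_div, hD0def, div_le_iff₀ hKdcabs]
      have heq : ε * ((1024 * ‖w‖ * Sd + 8448 * ‖Kdd‖) / ‖Kdc‖)
          * ‖Kdc‖ = ε * (1024 * ‖w‖ * Sd + 8448 * ‖Kdd‖) := by
        field_simp
      rw [heq]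
      exact hnum
    have hB : (0:ℝ) < 1 + ‖α‖ := by linarith
    have hC : (0:ℝ) < 1 + D0 := by linarith
    calc ‖γ‖ * (1 + ‖α‖) ≤ (ε * D0) * (1 + ‖α‖) :=
          mul_le_mul_of_nonneg_right hγle hB.le
      _ ≤ (1 / (8 * (1 + ‖α‖) * (1 + D0)) * D0) * (1 + ‖α‖) := by
          apply mul_le_mul_of_nonneg_right _ hB.le
          exact mul_le_mul_of_nonneg_right hεD hD0nonneg
      _ = D0 / (8 * (1 + D0)) := by field_simp
      _ ≤ 1/8 := by
          rw [div_le_iff₀ (by positivity)]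
          linarith
  obtain ⟨τ, hτ⟩ := exists_fixed_point α γ habsγ
  set nτ : ℝ := Complex.normSq τ with hnτdef
  have hnτ0 : 0 ≤ nτ := Complex.normSq_nonneg τ
  have hττ : τ * conj τ = ((nτ:ℝ):ℂ) := by rw [hnτdef]; exact Complex.mul_conj τ
  have hkey : τ * Kdc = w * (M:ℂ) * (Sc:ℂ) + (a1:ℂ) * Kcc
      + ((nτ:ℝ):ℂ) * (w * (S:ℂ) * (Sd:ℂ) + (a2:ℂ) * Kdd) := by
    calc τ * Kdc = (α + ((nτ:ℝ):ℂ) * γ) * Kdc := by rw [← hτ]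
      _ = α * Kdc + ((nτ:ℝ):ℂ) * (γ * Kdc) := by ring
      _ = _ := by rw [hαdef, hγdef, div_mul_cancel₀ _ hKdc, div_mul_cancel₀ _ hKdc]
  clear_value nτ
  clear hτ hαdef hγdef
  clear_value α γ
  -- normalization
  set NR : ℝ := M * Sc + nτ * (S * Sd) with hNRdef
  have hNRpos : 0 < NR := by
    have h1 : 0 ≤ nτ * (S * Sd) := by positivity
    have h2 : 0 < M * Sc := mul_pos hMpos hScpos
    rw [hNRdef]
    linarith
  set ρ : ℝ := (Real.sqrt NR)⁻¹ with hρdef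
  have hρpos : 0 < ρ := by
    rw [hρdef]
    exact inv_pos.mpr (Real.sqrt_pos.mpr hNRpos)
  have hρ2 : ρ^2 * NR = 1 := by
    have hsq : Real.sqrt NR ^ 2 = NR := Real.sq_sqrt hNRpos.le
    rw [hρdef, inv_pow, hsq]
    exact inv_mul_cancel₀ hNRpos.ne'
  clear_value ρ
  have hcast : ((ρ^2 * NR : ℝ):ℂ) = 1 := by rw [hρ2]; norm_num
  rw [hNRdef] at hcast
  -- the test function
  set F : ℝ → Fin n → ℂ := fun x =>
    (((ρ * g0 β x : ℝ) : ℂ)) • c + (((ρ : ℝ) : ℂ) * τ * ((h0 ε x : ℝ) : ℂ)) • d with hFdef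
  set F1 : ℝ → Fin n → ℂ := fun x =>
    (((ρ * g1 β x : ℝ) : ℂ)) • c + (((ρ : ℝ) : ℂ) * τ * ((h1 ε x : ℝ) : ℂ)) • d with hF1def
  set F2 : ℝ → Fin n → ℂ := fun x =>
    (((ρ * g2 β x : ℝ) : ℂ)) • c + (((ρ : ℝ) : ℂ) * τ * ((h2 ε x : ℝ) : ℂ)) • d with hF2def
  have hdF : ∀ x, HasDerivAt F (F1 x) x := by
    intro x
    apply HasDerivAt.add
    · exact (((hasDerivAt_g0 hβ x).const_mul ρ).ofReal_comp).smul_const c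
    · exact (((hasDerivAt_h0 hε0 x).ofReal_comp).const_mul ((ρ:ℂ) * τ)).smul_const d
  have hdF1 : ∀ x, HasDerivAt F1 (F2 x) x := by
    intro x
    apply HasDerivAt.add
    · exact (((hasDerivAt_g1 hβ x).const_mul ρ).ofReal_comp).smul_const c
    · exact (((hasDerivAt_h1 hε0 x).ofReal_comp).const_mul ((ρ:ℂ) * τ)).smul_const d
  have hF2cont : Continuous F2 := by
    apply Continuous.add
    · exact (Complex.continuous_ofReal.comp (continuous_const.mul (continuous_g2 hβ))).smul
        continuous_const
    · exact (continuous_const.mul (Complex.continuous_ofReal.comp (continuous_h2 hε0))).smul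
        continuous_const
  have hUD : UniqueDiffOn ℝ (Set.Icc (0:ℝ) β) := uniqueDiffOn_Icc hβ
  have hcd2 : ContDiff ℝ 2 F := by
    have hdiff : Differentiable ℝ F := fun x => (hdF x).differentiableAt
    have hder : deriv F = F1 := funext fun x => (hdF x).deriv
    have hdiff1 : Differentiable ℝ F1 := fun x => (hdF1 x).differentiableAt
    have hder1 : deriv F1 = F2 := funext fun x => (hdF1 x).deriv
    have h2 : (2 : WithTop ℕ∞) = 1 + 1 := by norm_num
    rw [h2, contDiff_succ_iff_deriv]
    refine ⟨hdiff, by simp, ?_⟩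
    rw [hder, contDiff_one_iff_deriv]
    exact ⟨hdiff1, by rw [hder1]; exact hF2cont⟩
  refine ⟨F, hcd2.contDiffOn, ?_, ?_, ?_, ?_, ?_⟩
  · -- F 0 ∈ U
    have h : F 0 = ((ρ : ℝ) : ℂ) • c := by
      rw [hFdef]
      simp [g0_at_zero hβ, h0_at_zero hε0]
    rw [h]
    exact U.smul_mem _ hcU
  · -- derivWithin ∈ V
    have h0m : (0:ℝ) ∈ Set.Icc (0:ℝ) β := ⟨le_rfl, hβ.le⟩
    rw [(hdF 0).hasDerivWithinAt.derivWithin (hUD 0 h0m)]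
    have h : F1 0 = (((ρ:ℝ):ℂ) * τ) • d := by
      rw [hF1def]
      simp [g1_at_zero hβ, h1_at_zero hε0]
    rw [h]
    exact V.smul_mem _ hdV
  · -- vanishing near β
    refine ⟨3*β/4, by linarith, ?_⟩
    intro x hx
    have hg : g0 β x = 0 := g0_zero hβ hx.1
    have hh : h0 ε x = 0 := h0_zero hε0 (by linarith [hx.1])
    rw [hFdef]
    simp [hg, hh]
  · -- normalization
    have hint : ∀ x ∈ Set.uIcc (0:ℝ) β, (fun y => ∑ i, F y i * conj (F y i)) x
        = (fun y : ℝ => (((ρ^2 * (g0 β y * g0 β y) : ℝ):ℂ)) * ((Sc:ℝ):ℂ)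
        + ((((ρ^2 * (g0 β y * h0 ε y) : ℝ):ℂ)) * (conj τ * (∑ i, c i * conj (d i)))
        + ((((ρ^2 * (g0 β y * h0 ε y) : ℝ):ℂ)) * (τ * (∑ i, d i * conj (c i)))
        + (((ρ^2 * (h0 ε y * h0 ε y) : ℝ):ℂ)) * (τ * conj τ * ((Sd:ℝ):ℂ))))) x := by
      intro x _
      show (∑ i, F x i * conj (F x i)) = _
      rw [hFdef]
      rw [nrwp_sum_expand, hNcc, hNdd]
      simp only [map_mul, Complex.conj_ofReal]
      push_cast
      ring
    rw [intervalIntegral.integral_congr hint]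
    have hi1 : IntervalIntegrable (fun y => (((ρ^2 * (g0 β y * g0 β y) : ℝ):ℂ)) * ((Sc:ℝ):ℂ))
        MeasureTheory.volume 0 β :=
      ((Complex.continuous_ofReal.comp (continuous_const.mul
        ((continuous_g0 hβ).mul (continuous_g0 hβ)))).mul continuous_const).intervalIntegrable _ _
    have hi2 : IntervalIntegrable (fun y => (((ρ^2 * (g0 β y * h0 ε y) : ℝ):ℂ))
          * (conj τ * (∑ i, c i * conj (d i)))) MeasureTheory.volume 0 β :=
      ((Complex.continuous_ofReal.comp (continuous_const.mul
        ((continuous_g0 hβ).mul (continuous_h0 hε0)))).mul continuous_const).intervalIntegrable _ _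
    have hi3 : IntervalIntegrable (fun y => (((ρ^2 * (g0 β y * h0 ε y) : ℝ):ℂ))
          * (τ * (∑ i, d i * conj (c i)))) MeasureTheory.volume 0 β :=
      ((Complex.continuous_ofReal.comp (continuous_const.mul
        ((continuous_g0 hβ).mul (continuous_h0 hε0)))).mul continuous_const).intervalIntegrable _ _
    have hi4 : IntervalIntegrable (fun y => (((ρ^2 * (h0 ε y * h0 ε y) : ℝ):ℂ))
          * (τ * conj τ * ((Sd:ℝ):ℂ))) MeasureTheory.volume 0 β :=
      ((Complex.continuous_ofReal.comp (continuous_const.mul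
        ((continuous_h0 hε0).mul (continuous_h0 hε0)))).mul continuous_const).intervalIntegrable _ _
    rw [intervalIntegral.integral_add hi1 (hi2.add (hi3.add hi4)),
      intervalIntegral.integral_add hi2 (hi3.add hi4),
      intervalIntegral.integral_add hi3 hi4]
    simp only [intervalIntegral.integral_mul_const, nrwp_integral_ofReal,
      intervalIntegral.integral_const_mul]
    rw [← hMdef, ← hSdef, integral_g0_h0 hβ hε0 hεβ]
    push_cast at hcast ⊢
    linear_combination hcast + ((ρ:ℂ))^2 * (S:ℂ) * (Sd:ℂ) * hττ
  · -- energy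
    have hiter : ∀ x ∈ Set.Icc (0:ℝ) β, iteratedDerivWithin 2 F (Set.Icc 0 β) x = F2 x := by
      intro x hx
      rw [show (2:ℕ) = 1 + 1 from rfl, iteratedDerivWithin_succ]
      have hEq : Set.EqOn (iteratedDerivWithin 1 F (Set.Icc 0 β)) F1 (Set.Icc 0 β) := by
        intro y hy
        rw [iteratedDerivWithin_one]
        exact (hdF y).hasDerivWithinAt.derivWithin (hUD y hy)
      rw [derivWithin_congr hEq (hEq hx)]
      exact (hdF1 x).hasDerivWithinAt.derivWithin (hUD x hx)
    have hint : ∀ x ∈ Set.uIcc (0:ℝ) β,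
        (fun y => ∑ i, A.mulVec (iteratedDerivWithin 2 F (Set.Icc 0 β) y) i * conj (F y i)) x
        = (fun y : ℝ => (((ρ^2 * (g2 β y * g0 β y) : ℝ):ℂ)) * Kcc
        + ((((ρ^2 * (g2 β y * h0 ε y) : ℝ):ℂ)) * (conj τ * Kcd)
        + ((((ρ^2 * (h2 ε y * g0 β y) : ℝ):ℂ)) * (τ * Kdc)
        + (((ρ^2 * (h2 ε y * h0 ε y) : ℝ):ℂ)) * (τ * conj τ * Kdd)))) x := by
      intro x hx
      rw [Set.uIcc_of_le hβ.le] at hx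
      show (∑ i, A.mulVec (iteratedDerivWithin 2 F (Set.Icc 0 β) x) i * conj (F x i)) = _
      rw [hiter x hx]
      have hmv : A.mulVec (F2 x) = (((ρ * g2 β x : ℝ):ℂ)) • A.mulVec c
          + ((((ρ:ℝ):ℂ) * τ * ((h2 ε x : ℝ):ℂ))) • A.mulVec d := by
        rw [hF2def]
        rw [Matrix.mulVec_add, Matrix.mulVec_smul, Matrix.mulVec_smul]
      rw [hFdef]
      show (∑ i, A.mulVec (F2 x) i * conj
        (((((ρ * g0 β x : ℝ) : ℂ)) • c + (((ρ : ℝ) : ℂ) * τ * ((h0 ε x : ℝ) : ℂ)) • d) i)) = _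
      rw [show (∑ i, A.mulVec (F2 x) i * conj
            (((((ρ * g0 β x : ℝ) : ℂ)) • c + (((ρ : ℝ) : ℂ) * τ * ((h0 ε x : ℝ) : ℂ)) • d) i))
          = ∑ i, ((((ρ * g2 β x : ℝ):ℂ)) • A.mulVec c
            + ((((ρ:ℝ):ℂ) * τ * ((h2 ε x : ℝ):ℂ))) • A.mulVec d) i * conj
            (((((ρ * g0 β x : ℝ) : ℂ)) • c + (((ρ : ℝ) : ℂ) * τ * ((h0 ε x : ℝ) : ℂ)) • d) i)
        from Finset.sum_congr rfl fun i _ => by rw [hmv]]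
      rw [nrwp_sum_expand, hKccdef, hKcddef, hKdcdef, hKdddef]
      simp only [map_mul, Complex.conj_ofReal]
      push_cast
      ring
    rw [intervalIntegral.integral_congr hint]
    have hi1 : IntervalIntegrable (fun y => (((ρ^2 * (g2 β y * g0 β y) : ℝ):ℂ)) * Kcc)
        MeasureTheory.volume 0 β :=
      ((Complex.continuous_ofReal.comp (continuous_const.mul
        ((continuous_g2 hβ).mul (continuous_g0 hβ)))).mul continuous_const).intervalIntegrable _ _
    have hi2 : IntervalIntegrable (fun y => (((ρ^2 * (g2 β y * h0 ε y) : ℝ):ℂ))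
          * (conj τ * Kcd)) MeasureTheory.volume 0 β :=
      ((Complex.continuous_ofReal.comp (continuous_const.mul
        ((continuous_g2 hβ).mul (continuous_h0 hε0)))).mul continuous_const).intervalIntegrable _ _
    have hi3 : IntervalIntegrable (fun y => (((ρ^2 * (h2 ε y * g0 β y) : ℝ):ℂ))
          * (τ * Kdc)) MeasureTheory.volume 0 β :=
      ((Complex.continuous_ofReal.comp (continuous_const.mul
        ((continuous_h2 hε0).mul (continuous_g0 hβ)))).mul continuous_const).intervalIntegrable _ _
    have hi4 : IntervalIntegrable (fun y => (((ρ^2 * (h2 ε y * h0 ε y) : ℝ):ℂ))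
          * (τ * conj τ * Kdd)) MeasureTheory.volume 0 β :=
      ((Complex.continuous_ofReal.comp (continuous_const.mul
        ((continuous_h2 hε0).mul (continuous_h0 hε0)))).mul continuous_const).intervalIntegrable _ _
    rw [intervalIntegral.integral_add hi1 (hi2.add (hi3.add hi4)),
      intervalIntegral.integral_add hi2 (hi3.add hi4),
      intervalIntegral.integral_add hi3 hi4]
    simp only [intervalIntegral.integral_mul_const, nrwp_integral_ofReal,
      intervalIntegral.integral_const_mul]
    rw [← ha1def, ← ha2def, integral_g2_h0 hε0 hεβ, integral_h2_g0 hβ hε0 hεβ]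
    push_cast at hcast hkey ⊢
    linear_combination ((ρ:ℂ))^2 * hkey + w * hcast - ((ρ:ℂ))^2 * (a2:ℂ) * Kdd * hττ
end
end

section
/- Suppose there exist real constants c₁ ≤ c₂ such that every continuously differentiable f : [α,β] → ℂⁿ satisfying the boundary condition f(β) = S f(α) and the normalization ∫_α^β ⟨f(x), f(x)⟩ dx = 1 also satisfies c₁ ≤ Re ∫_α^β ⟨f'(x), f(x)⟩ dx ≤ c₂. Then S is unitary, i.e. S* S = I. (In other words, the numerical range of the operator Lf = f' with quasi-periodic boundary conditions is contained in a vertical strip only if L is already skew-adjoint.) -/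
open Complex ComplexConjugate

section AuxNRS
open intervalIntegral


lemma aux_normSq_add_le (a b : ℂ) :
    Complex.normSq (a + b) ≤ 2 * Complex.normSq a + 2 * Complex.normSq b := by
  nlinarith [norm_nonneg (a+b), norm_nonneg a, norm_nonneg b,
    Complex.sq_norm a, Complex.sq_norm b, Complex.sq_norm (a+b), norm_add_le a b,
    sq_nonneg (‖a‖ - ‖b‖)]

lemma aux_integral_pos {α β : ℝ} (hαβ : α < β) (g : ℝ → ℝ)
    (hc : ContinuousOn g (Set.Icc α β)) (hnn : ∀ x ∈ Set.Icc α β, 0 ≤ g x)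
    (hpos : 0 < g α) : 0 < ∫ x in α..β, g x := by
  have hca : ContinuousWithinAt g (Set.Icc α β) α := hc α ⟨le_rfl, hαβ.le⟩
  have hev : ∀ᶠ y in nhdsWithin α (Set.Icc α β), g α / 2 < g y :=
    hca.eventually (eventually_gt_nhds (half_lt_self hpos))
  rw [Filter.Eventually, Metric.mem_nhdsWithin_iff] at hev
  obtain ⟨δ, hδ, hball⟩ := hev
  set c := min β (α + δ/2) with hc_def
  have hαc : α < c := lt_min hαβ (by linarith)
  have hcβ : c ≤ β := min_le_left _ _
  have hsub1 : Set.Icc α c ⊆ Set.Icc α β := Set.Icc_subset_Icc le_rfl hcβ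
  have hsub2 : Set.Icc c β ⊆ Set.Icc α β := Set.Icc_subset_Icc hαc.le le_rfl
  have hlow : ∀ y ∈ Set.Icc α c, g α / 2 ≤ g y := by
    intro y hy
    have hcle : c ≤ α + δ/2 := min_le_right _ _
    refine le_of_lt (hball ⟨?_, hsub1 hy⟩)
    rw [Metric.mem_ball, Real.dist_eq, abs_lt]
    constructor <;> [linarith [hy.1, hy.2]; linarith [hy.1, hy.2]]
  have hi1 : IntervalIntegrable g MeasureTheory.volume α c :=
    ContinuousOn.intervalIntegrable (by rw [Set.uIcc_of_le hαc.le]; exact hc.mono hsub1)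
  have hi2 : IntervalIntegrable g MeasureTheory.volume c β :=
    ContinuousOn.intervalIntegrable (by rw [Set.uIcc_of_le hcβ]; exact hc.mono hsub2)
  have hsplit : (∫ x in α..c, g x) + ∫ x in c..β, g x = ∫ x in α..β, g x :=
    integral_add_adjacent_intervals hi1 hi2
  have l1 : (c - α) * (g α / 2) ≤ ∫ x in α..c, g x := by
    have := integral_mono_on (f := fun _ => g α / 2) (g := g) hαc.le
      intervalIntegrable_const hi1 hlow
    simpa [smul_eq_mul, mul_div_assoc] using this
  have l2 : (0:ℝ) ≤ ∫ x in c..β, g x :=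
    integral_nonneg hcβ (fun u hu => hnn u (hsub2 hu))
  nlinarith [l1, l2, hsplit, sub_pos.2 hαc]

lemma aux_integral_base_pow {α β : ℝ} (hαβ : α < β) (m : ℕ) :
    (∫ x in α..β, ((β - x)/(β - α))^m) = (β - α)/(m+1) := by
  have hne : β - α ≠ 0 := sub_ne_zero.2 hαβ.ne'
  have h1 : (∫ x in α..β, ((β - x)/(β - α))^m)
      = ∫ x in β - β..β - α, (x/(β - α))^m :=
    integral_comp_sub_left (fun u => (u/(β - α))^m) β
  rw [h1, sub_self]
  rw [integral_comp_div (f := fun u => u^m) hne]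
  rw [zero_div, div_self hne, integral_pow]
  simp [smul_eq_mul]
  ring

lemma aux_integral_base_pow' {α β : ℝ} (hαβ : α < β) (m : ℕ) :
    (∫ x in α..β, ((x - α)/(β - α))^m) = (β - α)/(m+1) := by
  have hne : β - α ≠ 0 := sub_ne_zero.2 hαβ.ne'
  have h1 : (∫ x in α..β, ((x - α)/(β - α))^m)
      = ∫ x in α - α..β - α, (x/(β - α))^m :=
    integral_comp_sub_right (fun u => (u/(β - α))^m) α
  rw [h1, sub_self]
  rw [integral_comp_div (f := fun u => u^m) hne]
  rw [zero_div, div_self hne, integral_pow]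
  simp [smul_eq_mul]
  ring


lemma aux_ftc_re {n : ℕ} {α β : ℝ} (hαβ : α < β) (f : ℝ → Fin n → ℂ)
    (hf : ContDiffOn ℝ 1 f (Set.Icc α β)) :
    (∫ x in α..β, ∑ i, derivWithin f (Set.Icc α β) x i * conj (f x i)).re
      = ((∑ i, Complex.normSq (f β i)) - ∑ i, Complex.normSq (f α i)) / 2 := by
  set s := Set.Icc α β with hs_def
  have hs : UniqueDiffOn ℝ s := uniqueDiffOn_Icc hαβ
  have hfc : ContinuousOn f s := hf.continuousOn
  have hdc : ContinuousOn (derivWithin f s) s := hf.continuousOn_derivWithin hs le_rfl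
  set T : ℝ → ℂ := fun x => ∑ i, derivWithin f s x i * conj (f x i) with hT_def
  set C : ℝ → ℂ := fun x => ∑ i, f x i * conj (f x i) with hC_def
  have hfci : ∀ i : Fin n, ContinuousOn (fun x => f x i) s :=
    fun i => (continuous_apply i).comp_continuousOn hfc
  have hdci : ∀ i : Fin n, ContinuousOn (fun x => derivWithin f s x i) s :=
    fun i => (continuous_apply i).comp_continuousOn hdc
  have hTc : ContinuousOn T s := by
    apply continuousOn_finset_sum
    intro i _
    exact (hdci i).mul ((Complex.continuous_conj).comp_continuousOn (hfci i))
  have hCc : ContinuousOn C s := by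
    apply continuousOn_finset_sum
    intro i _
    exact (hfci i).mul ((Complex.continuous_conj).comp_continuousOn (hfci i))
  have huIcc : Set.uIcc α β = s := Set.uIcc_of_le hαβ.le
  have hTint : IntervalIntegrable T MeasureTheory.volume α β :=
    ContinuousOn.intervalIntegrable (by rw [huIcc]; exact hTc)
  have hCderiv : ∀ x ∈ Set.Ioo α β, HasDerivAt C (T x + conj (T x)) x := by
    intro x hx
    have hxs : s ∈ nhds x := Icc_mem_nhds hx.1 hx.2
    have hfd : HasDerivAt f (derivWithin f s x) x :=
      ((hf.differentiableOn one_ne_zero x (Set.Ioo_subset_Icc_self hx)).hasDerivWithinAt).hasDerivAt hxs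
    have hi : ∀ i, HasDerivAt (fun y => f y i) (derivWithin f s x i) x := hasDerivAt_pi.1 hfd
    have hmain : HasDerivAt C
        (∑ i, (derivWithin f s x i * conj (f x i) + f x i * conj (derivWithin f s x i))) x := by
      apply HasDerivAt.fun_sum
      intro i _
      exact (hi i).mul ((hi i).star)
    convert hmain using 1
    rw [Finset.sum_add_distrib]
    congr 1
    show (starRingEnd ℂ) (∑ i, derivWithin f s x i * (starRingEnd ℂ) (f x i)) = _
    rw [map_sum]
    refine Finset.sum_congr rfl fun i _ => ?_
    rw [map_mul, Complex.conj_conj, mul_comm]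
  have hint2 : IntervalIntegrable (fun x => T x + conj (T x)) MeasureTheory.volume α β := by
    apply hTint.add
    exact ContinuousOn.intervalIntegrable
      (by rw [huIcc]; exact (Complex.continuous_conj).comp_continuousOn hTc)
  have hftc : (∫ x in α..β, (T x + conj (T x))) = C β - C α :=
    integral_eq_sub_of_hasDeriv_right_of_le hαβ.le hCc
      (fun x hx => (hCderiv x hx).hasDerivWithinAt) hint2
  have hCval : ∀ x, C x = ((∑ i, Complex.normSq (f x i) : ℝ) : ℂ) := by
    intro x
    simp [hC_def, Complex.mul_conj]
  have e1 := Complex.reCLM.intervalIntegral_comp_comm hTint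
  have e2 := Complex.reCLM.intervalIntegral_comp_comm hint2
  simp only [Complex.reCLM_apply] at e1 e2
  -- e1 : ∫ (T x).re = (∫ T).re ;  e2 : ∫ (T x + conj (T x)).re = (∫ (T+conj T)).re
  have h3 : (fun x => (T x + conj (T x)).re) = (fun x => (2:ℝ) * (T x).re) := by
    funext x
    simp [Complex.add_re, Complex.conj_re]
    ring
  rw [h3] at e2
  rw [integral_const_mul, e1, hftc] at e2
  have h4 : (C β - C α).re
      = (∑ i, Complex.normSq (f β i)) - ∑ i, Complex.normSq (f α i) := by
    rw [hCval β, hCval α, ← Complex.ofReal_sub, Complex.ofReal_re]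
  rw [h4] at e2
  linarith


section
variable {n : ℕ} {α β : ℝ}

lemma aux_construct (hαβ : α < β) (S : Matrix (Fin n) (Fin n) ℂ) (c₁ c₂ : ℝ)
    (h : ∀ f : ℝ → (Fin n → ℂ), ContDiffOn ℝ 1 f (Set.Icc α β) →
      f β = S.mulVec (f α) →
      (∫ x in α..β, ∑ i, f x i * conj (f x i)) = 1 →
      c₁ ≤ (∫ x in α..β, ∑ i, derivWithin f (Set.Icc α β) x i * conj (f x i)).re ∧
        (∫ x in α..β, ∑ i, derivWithin f (Set.Icc α β) x i * conj (f x i)).re ≤ c₂)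
    (v : Fin n → ℂ) (hv : v ≠ 0) (k : ℕ) (hk : 1 ≤ k)
    (hftc : ∀ f : ℝ → Fin n → ℂ, ContDiffOn ℝ 1 f (Set.Icc α β) →
      (∫ x in α..β, ∑ i, derivWithin f (Set.Icc α β) x i * conj (f x i)).re
        = ((∑ i, Complex.normSq (f β i)) - ∑ i, Complex.normSq (f α i)) / 2)
    (hpos : ∀ g : ℝ → ℝ, ContinuousOn g (Set.Icc α β) → (∀ x ∈ Set.Icc α β, 0 ≤ g x) →
      0 < g α → 0 < ∫ x in α..β, g x)
    (hbase1 : ∀ m : ℕ, (∫ x in α..β, ((β - x)/(β - α))^m) = (β - α)/(m+1))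
    (hbase2 : ∀ m : ℕ, (∫ x in α..β, ((x - α)/(β - α))^m) = (β - α)/(m+1))
    (hsqadd : ∀ a b : ℂ, Complex.normSq (a + b) ≤ 2 * Complex.normSq a + 2 * Complex.normSq b) :
    ∃ A : ℝ, 0 < A ∧
      A ≤ (2 * (∑ i, Complex.normSq (v i)) + 2 * (∑ i, Complex.normSq (S.mulVec v i)))
            * ((β - α)/(2*k+1)) ∧
      c₁ ≤ ((∑ i, Complex.normSq (S.mulVec v i)) - ∑ i, Complex.normSq (v i)) / 2 / A ∧
      ((∑ i, Complex.normSq (S.mulVec v i)) - ∑ i, Complex.normSq (v i)) / 2 / A ≤ c₂ := by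
  have hne : β - α ≠ 0 := sub_ne_zero.2 hαβ.ne'
  set w : Fin n → ℂ := S.mulVec v with hw
  set Nv : ℝ := ∑ i, Complex.normSq (v i) with hNv
  set Nw : ℝ := ∑ i, Complex.normSq (w i) with hNw
  set φ : ℝ → ℝ := fun x => ((β - x)/(β - α))^k with hφ
  set ψ : ℝ → ℝ := fun x => ((x - α)/(β - α))^k with hψ
  set f : ℝ → Fin n → ℂ := fun x i => (φ x : ℂ) * v i + (ψ x : ℂ) * w i with hf
  have hk0 : k ≠ 0 := by omega
  have hφα : φ α = 1 := by simp [hφ, div_self hne]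
  have hψα : ψ α = 0 := by simp [hψ, zero_pow hk0]
  have hφβ : φ β = 0 := by simp [hφ, zero_pow hk0]
  have hψβ : ψ β = 1 := by simp [hψ, div_self hne]
  have hfα : f α = v := by funext i; simp [hf, hφα, hψα]
  have hfβ : f β = w := by funext i; simp [hf, hφβ, hψβ]
  have hφc : ContDiff ℝ 1 φ := ((contDiff_const.sub contDiff_id).div_const _).pow k
  have hψc : ContDiff ℝ 1 ψ := ((contDiff_id.sub contDiff_const).div_const _).pow k
  have hfc : ContDiff ℝ 1 f := by
    apply contDiff_pi.2
    intro i
    exact ((Complex.ofRealCLM.contDiff.comp hφc).mul contDiff_const).add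
      ((Complex.ofRealCLM.contDiff.comp hψc).mul contDiff_const)
  set N : ℝ → ℝ := fun x => ∑ i, Complex.normSq (f x i) with hN
  have hNc : Continuous N := by
    apply continuous_finset_sum
    intro i _
    exact Complex.continuous_normSq.comp ((continuous_apply i).comp hfc.continuous)
  set A : ℝ := ∫ x in α..β, N x with hA
  have hNvpos : 0 < Nv := by
    obtain ⟨i, hi⟩ := Function.ne_iff.1 hv
    exact Finset.sum_pos' (fun j _ => Complex.normSq_nonneg _)
      ⟨i, Finset.mem_univ i, Complex.normSq_pos.2 hi⟩
  have hApos : 0 < A := by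
    apply hpos N hNc.continuousOn (fun x _ => Finset.sum_nonneg fun i _ => Complex.normSq_nonneg _)
    rw [hN]
    simp only [hfα]
    exact hNvpos
  -- upper bound
  have hNb : ∀ x ∈ Set.Icc α β,
      N x ≤ 2*Nv*((β - x)/(β - α))^(2*k) + 2*Nw*((x - α)/(β - α))^(2*k) := by
    intro x _
    have h1 : ∀ i, Complex.normSq (f x i)
        ≤ 2 * (φ x^2 * Complex.normSq (v i)) + 2 * (ψ x^2 * Complex.normSq (w i)) := by
      intro i
      have := hsqadd ((φ x : ℂ) * v i) ((ψ x : ℂ) * w i)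
      simpa [Complex.normSq_mul, Complex.normSq_ofReal, sq] using this
    calc N x ≤ ∑ i, (2 * (φ x^2 * Complex.normSq (v i)) + 2 * (ψ x^2 * Complex.normSq (w i))) :=
          Finset.sum_le_sum (fun i _ => h1 i)
      _ = 2*Nv*(φ x^2) + 2*Nw*(ψ x^2) := by
          rw [Finset.sum_add_distrib, hNv, hNw]
          simp only [← Finset.mul_sum]
          ring
      _ = 2*Nv*((β - x)/(β - α))^(2*k) + 2*Nw*((x - α)/(β - α))^(2*k) := by
          rw [hφ, hψ, ← pow_mul, ← pow_mul, mul_comm k 2]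
  have hcont1 : Continuous fun x : ℝ => 2*Nv*((β - x)/(β - α))^(2*k) := by fun_prop
  have hcont2 : Continuous fun x : ℝ => 2*Nw*((x - α)/(β - α))^(2*k) := by fun_prop
  have hint_b : (∫ x in α..β,
      (2*Nv*((β - x)/(β - α))^(2*k) + 2*Nw*((x - α)/(β - α))^(2*k)))
      = (2*Nv + 2*Nw) * ((β - α)/(2*k+1)) := by
    rw [integral_add (hcont1.intervalIntegrable _ _) (hcont2.intervalIntegrable _ _),
      integral_const_mul, integral_const_mul, hbase1 (2*k), hbase2 (2*k)]
    push_cast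
    ring
  have hAle : A ≤ (2*Nv + 2*Nw) * ((β - α)/(2*k+1)) := by
    rw [hA, ← hint_b]
    exact integral_mono_on hαβ.le (hNc.intervalIntegrable _ _)
      ((hcont1.add hcont2).intervalIntegrable _ _) hNb
  -- normalized function
  set u : ℝ := (Real.sqrt A)⁻¹ with hu
  have hsqrtA : Real.sqrt A ≠ 0 := ne_of_gt (Real.sqrt_pos.2 hApos)
  have hu2 : u^2 = A⁻¹ := by
    rw [hu, inv_pow, Real.sq_sqrt hApos.le]
  set g : ℝ → Fin n → ℂ := fun x i => (u : ℂ) * f x i with hg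
  have hgc : ContDiff ℝ 1 g := by
    apply contDiff_pi.2
    intro i
    exact contDiff_const.mul (contDiff_pi.1 hfc i)
  have hgbc : g β = S.mulVec (g α) := by
    have h1 : g α = (u : ℂ) • v := by funext i; simp [hg, hfα, Pi.smul_apply, smul_eq_mul]
    have h2 : g β = (u : ℂ) • w := by funext i; simp [hg, hfβ, Pi.smul_apply, smul_eq_mul]
    rw [h1, h2, Matrix.mulVec_smul]
  have hterm : ∀ x i, g x i * conj (g x i) = ((u:ℂ))^2 * ((Complex.normSq (f x i) : ℝ):ℂ) := by
    intro x i
    have hgi : g x i = (u:ℂ) * f x i := rfl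
    rw [hgi, map_mul, Complex.conj_ofReal, ← Complex.mul_conj]
    push_cast
    ring
  have hgsum : ∀ x, (∑ i, g x i * conj (g x i)) = ((u^2 * N x : ℝ) : ℂ) := by
    intro x
    have hNx : N x = ∑ i, Complex.normSq (f x i) := rfl
    rw [hNx]
    push_cast
    rw [Finset.mul_sum]
    exact Finset.sum_congr rfl fun i _ => hterm x i
  have hgnorm : (∫ x in α..β, ∑ i, g x i * conj (g x i)) = 1 := by
    rw [show (fun x => ∑ i, g x i * conj (g x i)) = fun x => ((u^2 * N x : ℝ) : ℂ) from
      funext hgsum]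
    rw [intervalIntegral.integral_ofReal, integral_const_mul, ← hA, hu2,
      inv_mul_cancel₀ hApos.ne']
    norm_num
  obtain ⟨hle1, hle2⟩ := h g hgc.contDiffOn hgbc hgnorm
  have hRval : (∫ x in α..β, ∑ i, derivWithin g (Set.Icc α β) x i * conj (g x i)).re
      = (Nw - Nv) / 2 / A := by
    rw [hftc g hgc.contDiffOn]
    have e1 : (∑ i, Complex.normSq (g β i)) = u^2 * Nw := by
      rw [hNw, Finset.mul_sum]
      refine Finset.sum_congr rfl fun i _ => ?_
      have : g β i = (u:ℂ) * w i := by rw [hg]; simp [hfβ]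
      rw [this, Complex.normSq_mul, Complex.normSq_ofReal, sq]
    have e2 : (∑ i, Complex.normSq (g α i)) = u^2 * Nv := by
      rw [hNv, Finset.mul_sum]
      refine Finset.sum_congr rfl fun i _ => ?_
      have : g α i = (u:ℂ) * v i := by rw [hg]; simp [hfα]
      rw [this, Complex.normSq_mul, Complex.normSq_ofReal, sq]
    rw [e1, e2, hu2]
    ring
  rw [hRval] at hle1 hle2
  exact ⟨A, hApos, hAle, hle1, hle2⟩

end

theorem numerical_range_in_strip_implies_unitary'
    {n : ℕ} (hn : 1 ≤ n) (S : Matrix (Fin n) (Fin n) ℂ)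
    (α β : ℝ) (hαβ : α < β) (c₁ c₂ : ℝ) (hc : c₁ ≤ c₂)
    (h : ∀ f : ℝ → (Fin n → ℂ), ContDiffOn ℝ 1 f (Set.Icc α β) →
      f β = S.mulVec (f α) →
      (∫ x in α..β, ∑ i, f x i * conj (f x i)) = 1 →
      c₁ ≤ (∫ x in α..β, ∑ i, derivWithin f (Set.Icc α β) x i * conj (f x i)).re ∧
        (∫ x in α..β, ∑ i, derivWithin f (Set.Icc α β) x i * conj (f x i)).re ≤ c₂) :
    S.conjTranspose * S = 1 := by
  suffices hiso : ∀ v : Fin n → ℂ,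
      (∑ i, Complex.normSq (S.mulVec v i)) = ∑ i, Complex.normSq (v i) by
    have key : ∀ x : EuclideanSpace ℂ (Fin n),
        inner ℂ ((Matrix.toEuclideanLin (S.conjTranspose * S - 1)) x) x = (0:ℂ) := by
      intro x
      have hx1 : (Matrix.toEuclideanLin (S.conjTranspose * S - 1)) x
          = Matrix.toEuclideanLin S.conjTranspose (Matrix.toEuclideanLin S x) - x := by
        rw [map_sub, LinearMap.sub_apply]
        congr 1
        · rw [Matrix.toEuclideanLin_apply, Matrix.toEuclideanLin_apply,
            Matrix.toEuclideanLin_apply]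
          simp [Matrix.mulVec_mulVec]
        · rw [Matrix.toEuclideanLin_apply]
          simp [Matrix.one_mulVec]
      rw [hx1, inner_sub_left, Matrix.toEuclideanLin_conjTranspose_eq_adjoint,
        LinearMap.adjoint_inner_left]
      have h2 : (inner ℂ (Matrix.toEuclideanLin S x) (Matrix.toEuclideanLin S x) : ℂ)
          = ((∑ i, Complex.normSq (S.mulVec ((WithLp.equiv 2 _) x) i) : ℝ) : ℂ) := by
        simp only [PiLp.inner_apply, RCLike.inner_apply]
        push_cast
        refine Finset.sum_congr rfl fun i _ => ?_
        rw [Complex.mul_conj]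
        rfl
      have h3 : (inner ℂ x x : ℂ) = ((∑ i, Complex.normSq ((WithLp.equiv 2 _) x i) : ℝ) : ℂ) := by
        simp only [PiLp.inner_apply, RCLike.inner_apply]
        push_cast
        refine Finset.sum_congr rfl fun i _ => ?_
        rw [Complex.mul_conj]
        rfl
      rw [h2, h3, hiso ((WithLp.equiv 2 _) x), sub_self]
    have hT0 : Matrix.toEuclideanLin (S.conjTranspose * S - 1) = 0 :=
      (inner_map_self_eq_zero _).1 key
    have : S.conjTranspose * S - 1 = 0 := by
      have := Matrix.toEuclideanLin.map_eq_zero_iff.1 hT0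
      exact this
    exact sub_eq_zero.1 this
  -- prove the isometry property
  intro v
  by_contra hne
  have hv : v ≠ 0 := by
    intro hv0
    apply hne
    rw [hv0, Matrix.mulVec_zero]
  set Nv : ℝ := ∑ i, Complex.normSq (v i) with hNv
  set Nw : ℝ := ∑ i, Complex.normSq (S.mulVec v i) with hNw
  set d : ℝ := (Nw - Nv) / 2 with hd
  set M : ℝ := (2 * Nv + 2 * Nw) * (β - α) with hM
  have hNvpos : 0 < Nv := by
    obtain ⟨i, hi⟩ := Function.ne_iff.1 hv
    exact Finset.sum_pos' (fun j _ => Complex.normSq_nonneg _)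
      ⟨i, Finset.mem_univ i, Complex.normSq_pos.2 hi⟩
  have hNwnn : 0 ≤ Nw := Finset.sum_nonneg fun i _ => Complex.normSq_nonneg _
  have hMpos : 0 < M := by
    apply mul_pos
    · linarith
    · linarith
  have hd0 : d ≠ 0 := by
    rw [hd]
    intro hd'
    apply hne
    rw [hNw, hNv] at *
    linarith [div_eq_zero_iff.1 hd']
  have key : ∀ k : ℕ, 1 ≤ k → ∃ A : ℝ, 0 < A ∧ A ≤ M / (2*k+1) ∧ c₁ ≤ d / A ∧ d / A ≤ c₂ := by
    intro k hk
    obtain ⟨A, hA1, hA2, hA3, hA4⟩ := aux_construct hαβ S c₁ c₂ h v hv k hk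
      (fun f hf => aux_ftc_re hαβ f hf)
      (fun g hg1 hg2 hg3 => aux_integral_pos hαβ g hg1 hg2 hg3)
      (fun m => aux_integral_base_pow hαβ m)
      (fun m => aux_integral_base_pow' hαβ m)
      aux_normSq_add_le
    refine ⟨A, hA1, ?_, hA3, hA4⟩
    rw [hM, mul_div_assoc]
    exact hA2
  rcases lt_or_gt_of_ne hd0 with hdneg | hdpos
  · -- d < 0 : contradiction with c₁
    obtain ⟨k0, hk0⟩ := exists_nat_gt (c₁ * M / d)
    obtain ⟨A, hA1, hA2, hA3, _⟩ := key (k0 + 1) (by omega)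
    have hkk : (c₁ * M / d) < 2*(k0+1)+1 := by
      push_cast
      push_cast at hk0
      linarith
    have h5 : (2*((k0:ℝ)+1)+1) * d < c₁ * M := by
      have := (div_lt_iff_of_neg hdneg).1 hkk
      linarith
    have h6 : c₁ * A ≤ d := by
      have := (le_div_iff₀ hA1).1 hA3
      linarith
    have h7 : A * (2*((k0:ℝ)+1)+1) ≤ M := by
      rw [le_div_iff₀ (by positivity)] at hA2
      push_cast at hA2 ⊢
      linarith
    have hc₁neg : c₁ < 0 := by nlinarith
    nlinarith
  · -- d > 0 : contradiction with c₂
    obtain ⟨k0, hk0⟩ := exists_nat_gt (c₂ * M / d)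
    obtain ⟨A, hA1, hA2, _, hA4⟩ := key (k0 + 1) (by omega)
    have hkk : (c₂ * M / d) < 2*((k0:ℝ)+1)+1 := by
      push_cast at hk0 ⊢
      linarith
    have h5 : c₂ * M < (2*((k0:ℝ)+1)+1) * d := by
      have := (div_lt_iff₀ hdpos).1 hkk
      linarith
    have h6 : d ≤ c₂ * A := by
      have := (div_le_iff₀ hA1).1 hA4
      linarith
    have h7 : A * (2*((k0:ℝ)+1)+1) ≤ M := by
      rw [le_div_iff₀ (by positivity)] at hA2
      push_cast at hA2 ⊢
      linarith
    have hc₂pos : 0 < c₂ := by nlinarith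
    nlinarith

end AuxNRS

/-- If the numerical range of `Lf = f′` with quasi-periodic boundary condition
`f(β) = S f(α)` is contained in a vertical strip `c₁ ≤ Re ≤ c₂`, then `S` is unitary. -/
theorem numerical_range_in_strip_implies_unitary
    {n : ℕ} (hn : 1 ≤ n) (S : Matrix (Fin n) (Fin n) ℂ)
    (α β : ℝ) (hαβ : α < β) (c₁ c₂ : ℝ) (hc : c₁ ≤ c₂)
    (h : ∀ f : ℝ → (Fin n → ℂ), ContDiffOn ℝ 1 f (Set.Icc α β) →
      f β = S.mulVec (f α) →
      (∫ x in α..β, ∑ i, f x i * conj (f x i)) = 1 →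
      c₁ ≤ (∫ x in α..β, ∑ i, derivWithin f (Set.Icc α β) x i * conj (f x i)).re ∧
        (∫ x in α..β, ∑ i, derivWithin f (Set.Icc α β) x i * conj (f x i)).re ≤ c₂) :
    S.conjTranspose * S = 1 :=
  numerical_range_in_strip_implies_unitary' hn S α β hαβ c₁ c₂ hc h
end

section
/- For every integer n ≥ 1 one has the exact formulas ∫₀^π ( |f_{n,1}(x)|² + |f_{n,2}(x)|² ) dx = (t/(sn))·(e^{2πsn/t} − 1) and ∫₀^π ( |g_{n,1}(x)|² + |g_{n,2}(x)|² ) dx = (s² + t²)·(t/(sn))·(1 − e^{−2πsn/t}); in particular ‖f_n‖² ∼ (t/(sn))·e^{2πsn/t} and ‖g_n‖² ∼ (t/(sn))·(s² + t²) as n → +∞. -/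
open Complex ComplexConjugate Filter

lemma int_exp_aux (c : ℝ) (hc : c ≠ 0) :
    ∫ x in (0:ℝ)..Real.pi, Real.exp (c*x) = (Real.exp (c*Real.pi) - 1)/c := by
  rw [intervalIntegral.integral_comp_mul_left (fun x => Real.exp x) hc]
  simp [integral_exp]
  field_simp

lemma re_div_aux (s t r x : ℝ) (u : ℂ) (hu : u = s + t * Complex.I) :
    ((x:ℂ) * (r:ℂ) / u).re = x*r*s/(s^2+t^2) := by
  rw [Complex.div_re, hu]
  simp [Complex.normSq_apply]
  ring

/-- Exact formulas for `‖f_n‖²` and `‖g_n‖²`, and the resulting asymptotics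
`‖f_n‖² ∼ (t/(sn)) e^{2πsn/t}` and `‖g_n‖² ∼ (t/(sn))(s²+t²)` as `n → +∞`. -/
theorem norms_of_eigenfunctions
    (s t : ℝ) (hs : 0 < s) (ht : 0 < t) (u : ℂ) (hu : u = s + t * Complex.I)
    (lam : ℤ → ℂ) (hlam : ∀ n : ℤ, lam n = (((s ^ 2 + t ^ 2) * n / t : ℝ) : ℂ))
    (f g : ℤ → ℝ → Fin 2 → ℂ)
    (hf : ∀ n x, f n x = ![Complex.exp (x * lam n / u),
      Complex.exp (x * lam n / conj u)])
    (hg : ∀ n x, g n x = ![u * Complex.exp (-(x * lam n) / conj u),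
      -(conj u) * Complex.exp (-(x * lam n) / u)])
    (Nf Ng : ℤ → ℝ)
    (hNf : ∀ n, Nf n = ∫ x in (0:ℝ)..Real.pi,
      (‖f n x 0‖ ^ 2 + ‖f n x 1‖ ^ 2))
    (hNg : ∀ n, Ng n = ∫ x in (0:ℝ)..Real.pi,
      (‖g n x 0‖ ^ 2 + ‖g n x 1‖ ^ 2)) :
    (∀ n : ℕ, 1 ≤ n →
      Nf n = (t / (s * n)) * (Real.exp (2 * Real.pi * s * n / t) - 1) ∧
      Ng n = (s ^ 2 + t ^ 2) * (t / (s * n)) * (1 - Real.exp (-(2 * Real.pi * s * n) / t))) ∧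
    Tendsto (fun n : ℕ => Nf n / ((t / (s * n)) * Real.exp (2 * Real.pi * s * n / t)))
      atTop (nhds 1) ∧
    Tendsto (fun n : ℕ => Ng n / ((t / (s * n)) * (s ^ 2 + t ^ 2)))
      atTop (nhds 1) := by
  have hst : s^2 + t^2 ≠ 0 := by positivity
  have ht' : t ≠ 0 := ht.ne'
  have hconj : (starRingEnd ℂ) u = (s:ℝ) + ((-t : ℝ):ℂ) * Complex.I := by
    rw [hu]; push_cast
    simp [map_add, map_mul, Complex.conj_ofReal, Complex.conj_I]
  have key : ∀ n : ℕ, 1 ≤ n →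
      Nf n = (t / (s * n)) * (Real.exp (2 * Real.pi * s * n / t) - 1) ∧
      Ng n = (s ^ 2 + t ^ 2) * (t / (s * n)) * (1 - Real.exp (-(2 * Real.pi * s * n) / t)) := by
    intro n hn
    have hn0 : (0:ℝ) < n := by exact_mod_cast hn
    set r : ℝ := (s ^ 2 + t ^ 2) * ((n:ℤ):ℝ) / t with hr
    have hlamn : lam n = (r : ℂ) := by rw [hlam]
    have hc : (2*s*(n:ℝ)/t) ≠ 0 := by positivity
    have hc' : (-(2*s*(n:ℝ)/t)) ≠ 0 := by simpa using hc
    have hre1 : ∀ x : ℝ, ((x:ℂ) * lam n / u).re = (s*(n:ℝ)/t)*x := by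
      intro x
      rw [hlamn, re_div_aux s t r x u hu, hr]
      push_cast
      field_simp
    have hre2 : ∀ x : ℝ, ((x:ℂ) * lam n / (starRingEnd ℂ) u).re = (s*(n:ℝ)/t)*x := by
      intro x
      rw [hlamn, re_div_aux s (-t) r x _ hconj, hr]
      push_cast
      field_simp
    have habs2 : ‖u‖^2 = s^2 + t^2 := by
      rw [Complex.sq_norm, hu, Complex.normSq_apply]
      simp
      ring
    constructor
    · rw [hNf]
      have hint : ∀ x : ℝ, ‖f n x 0‖ ^ 2 + ‖f n x 1‖ ^ 2
          = 2 * Real.exp ((2*s*(n:ℝ)/t)*x) := by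
        intro x
        rw [hf]
        simp only [Matrix.cons_val_zero, Matrix.cons_val_one, Matrix.head_cons,
          Complex.norm_exp]
        rw [hre1 x, hre2 x]
        have h2 : Real.exp (s * (n:ℝ) / t * x) ^ 2 = Real.exp (2 * s * (n:ℝ) / t * x) := by
          rw [sq, ← Real.exp_add]; ring_nf
        rw [h2]; ring
      rw [intervalIntegral.integral_congr (fun x _ => hint x)]
      rw [intervalIntegral.integral_const_mul, int_exp_aux _ hc]
      have hE : Real.exp (2*s*(n:ℝ)/t*Real.pi) = Real.exp (2*Real.pi*s*n/t) := by
        ring_nf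
      rw [hE]
      field_simp
    · rw [hNg]
      have hint : ∀ x : ℝ, ‖g n x 0‖ ^ 2 + ‖g n x 1‖ ^ 2
          = (2*(s^2+t^2)) * Real.exp (-(2*s*(n:ℝ)/t)*x) := by
        intro x
        rw [hg]
        simp only [Matrix.cons_val_zero, Matrix.cons_val_one, Matrix.head_cons,
          norm_mul, norm_neg, Complex.norm_conj, Complex.norm_exp,
          mul_pow]
        have e1 : ((-((x:ℂ) * lam n)) / (starRingEnd ℂ) u).re = (s*(n:ℝ)/t)*(-x) := by
          have h : (-((x:ℂ) * lam n)) = ((-x : ℝ):ℂ) * lam n := by push_cast; ring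
          rw [h, hre2 (-x)]
        have e2 : ((-((x:ℂ) * lam n)) / u).re = (s*(n:ℝ)/t)*(-x) := by
          have h : (-((x:ℂ) * lam n)) = ((-x : ℝ):ℂ) * lam n := by push_cast; ring
          rw [h, hre1 (-x)]
        rw [e1, e2, habs2]
        have h2 : Real.exp (s*(n:ℝ)/t*(-x)) ^ 2 = Real.exp (-(2*s*(n:ℝ)/t)*x) := by
          rw [sq, ← Real.exp_add]; ring_nf
        rw [h2]; ring
      rw [intervalIntegral.integral_congr (fun x _ => hint x)]
      rw [intervalIntegral.integral_const_mul, int_exp_aux _ hc']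
      have hE : Real.exp (-(2*s*(n:ℝ)/t)*Real.pi) = Real.exp (-(2*Real.pi*s*n)/t) := by
        ring_nf
      rw [hE]
      field_simp
      ring
  have hs' : s ≠ 0 := hs.ne'
  have hlim0 : Tendsto (fun n : ℕ => Real.exp (-(2*Real.pi*s*n)/t)) atTop (nhds 0) := by
    have hneg : (-(2*Real.pi*s/t)) < 0 := by
      have hp := Real.pi_pos
      have : 0 < 2*Real.pi*s/t := by positivity
      linarith
    have h1 : Tendsto (fun n : ℕ => (-(2*Real.pi*s/t)) * (n:ℝ)) atTop atBot :=
      (tendsto_const_mul_atBot_of_neg hneg).mpr tendsto_natCast_atTop_atTop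
    have h2 := Real.tendsto_exp_atBot.comp h1
    refine h2.congr fun n => ?_
    simp only [Function.comp_apply]
    congr 1
    ring
  have hlim1 : Tendsto (fun n : ℕ => 1 - Real.exp (-(2*Real.pi*s*n)/t)) atTop (nhds 1) := by
    have := (tendsto_const_nhds (x := (1:ℝ)) (f := atTop)).sub hlim0
    simpa using this
  refine ⟨key, ?_, ?_⟩
  · refine hlim1.congr' ?_
    filter_upwards [eventually_ge_atTop 1] with n hn
    have hn0 : (0:ℝ) < n := by exact_mod_cast hn
    obtain ⟨h1, _⟩ := key n hn
    rw [h1]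
    have hE : Real.exp (2*Real.pi*s*(n:ℝ)/t) ≠ 0 := (Real.exp_pos _).ne'
    have e : Real.exp (-(2*Real.pi*s*(n:ℝ))/t) = (Real.exp (2*Real.pi*s*(n:ℝ)/t))⁻¹ := by
      rw [neg_div, Real.exp_neg]
    rw [e]
    field_simp
  · refine hlim1.congr' ?_
    filter_upwards [eventually_ge_atTop 1] with n hn
    have hn0 : (0:ℝ) < n := by exact_mod_cast hn
    obtain ⟨_, h2⟩ := key n hn
    rw [h2]
    field_simp
end
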